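/- arXiv:2604.07460 — 7 statements merged into one kernel-verified Lean document; each statement's English description precedes it below -/
import Mathlib

section
/- Let d, n ≥ 1 and let ψ_sym be a positive semidefinite matrix indexed by (Fin n → Fin d) with Π_sym^n · ψ_sym · Π_sym^n = ψ_sym. On the extended index type (Fin n → Fin d) × Fin d × Fin d (registers 1,…,n plus registers n+1 and n+2), let X_{n+1} = Σ_{j=1}^{n} SWAP_{j,n+1} and X_{n+2} = Σ_{j=1}^{n+1} SWAP_{j,n+2}, where SWAP_{a,b} is the transposition permutation matrix exchanging registers a and b. Then the partial trace over registers 1,…,n satisfies tr_{1,…,n}( X_{n+2} · X_{n+1} · (ψ_sym ⊗ 1 ⊗ 1) ) = n(n−1)·(ψ_sym)_{1,2} + n·((ψ_sym)₁ ⊗ 1 + 1 ⊗ (ψ_sym)₁)·SWAP, an identity of matrices indexed by Fin d × Fin d, where SWAP is the swap matrix on Fin d × Fin d. -/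
open Matrix
open scoped ComplexOrder Kronecker

/-- The permutation matrix `V(π)` on `(ℂ^d)^{⊗n}`. -/
noncomputable def permMatrix (d n : ℕ) (π : Equiv.Perm (Fin n)) :
    Matrix (Fin n → Fin d) (Fin n → Fin d) ℂ :=
  Matrix.of fun v w => if ∀ a, v a = w (π⁻¹ a) then (1 : ℂ) else 0

/-- The projector `Π_sym^n = (1/n!) Σ_π V(π)` onto the symmetric subspace. -/
noncomputable def symProj (d n : ℕ) :
    Matrix (Fin n → Fin d) (Fin n → Fin d) ℂ :=
  (n.factorial : ℂ)⁻¹ • ∑ π : Equiv.Perm (Fin n), permMatrix d n π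

/-- The SWAP matrix on `ℂ^d ⊗ ℂ^d`. -/
noncomputable def swapMatrix (d : ℕ) :
    Matrix (Fin d × Fin d) (Fin d × Fin d) ℂ :=
  Matrix.of fun p q => if p.1 = q.2 ∧ p.2 = q.1 then (1 : ℂ) else 0

/-- The partial trace of `M` keeping register `1` (junk `0` when `n = 0`). -/
noncomputable def ptrace1 (d n : ℕ)
    (M : Matrix (Fin n → Fin d) (Fin n → Fin d) ℂ) : Matrix (Fin d) (Fin d) ℂ :=
  if h : 1 ≤ n then
    Matrix.of fun a a' => ∑ v : Fin n → Fin d, ∑ w : Fin n → Fin d,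
      if v ⟨0, h⟩ = a ∧ w ⟨0, h⟩ = a' ∧ ∀ b, b ≠ ⟨0, h⟩ → v b = w b then M v w else 0
  else 0

/-- The partial trace of `M` keeping registers `1` and `2` (junk `0` when `n < 2`). -/
noncomputable def ptrace12 (d n : ℕ)
    (M : Matrix (Fin n → Fin d) (Fin n → Fin d) ℂ) :
    Matrix (Fin d × Fin d) (Fin d × Fin d) ℂ :=
  if h : 2 ≤ n then
    Matrix.of fun p q => ∑ v : Fin n → Fin d, ∑ w : Fin n → Fin d,
      if v ⟨0, by omega⟩ = p.1 ∧ v ⟨1, h⟩ = p.2 ∧ w ⟨0, by omega⟩ = q.1 ∧ w ⟨1, h⟩ = q.2 ∧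
          ∀ b : Fin n, (b : ℕ) ≠ 0 → (b : ℕ) ≠ 1 → v b = w b then M v w else 0
  else 0

/-- On the registers `1,…,n,n+1,n+2` (index type `(Fin n → Fin d) × Fin d × Fin d`):
the transposition matrix `SWAP_{j,n+1}` exchanging register `j ∈ [n]` with register `n+1`. -/
noncomputable def swapWithFirstExtra (d n : ℕ) (j : Fin n) :
    Matrix ((Fin n → Fin d) × Fin d × Fin d) ((Fin n → Fin d) × Fin d × Fin d) ℂ :=
  Matrix.of fun p q =>
    if p.1 j = q.2.1 ∧ p.2.1 = q.1 j ∧ p.2.2 = q.2.2 ∧ (∀ b, b ≠ j → p.1 b = q.1 b)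
    then (1 : ℂ) else 0

/-- The transposition matrix `SWAP_{j,n+2}` exchanging register `j ∈ [n]` with register `n+2`. -/
noncomputable def swapWithSecondExtra (d n : ℕ) (j : Fin n) :
    Matrix ((Fin n → Fin d) × Fin d × Fin d) ((Fin n → Fin d) × Fin d × Fin d) ℂ :=
  Matrix.of fun p q =>
    if p.1 j = q.2.2 ∧ p.2.2 = q.1 j ∧ p.2.1 = q.2.1 ∧ (∀ b, b ≠ j → p.1 b = q.1 b)
    then (1 : ℂ) else 0

/-- The transposition matrix `SWAP_{n+1,n+2}` exchanging the two extra registers. -/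
noncomputable def swapExtras (d n : ℕ) :
    Matrix ((Fin n → Fin d) × Fin d × Fin d) ((Fin n → Fin d) × Fin d × Fin d) ℂ :=
  Matrix.of fun p q =>
    if p.1 = q.1 ∧ p.2.1 = q.2.2 ∧ p.2.2 = q.2.1 then (1 : ℂ) else 0

/-- The Jucys–Murphy element `X_{n+1} = Σ_{j=1}^{n} SWAP_{j,n+1}`. -/
noncomputable def Xnp1 (d n : ℕ) :
    Matrix ((Fin n → Fin d) × Fin d × Fin d) ((Fin n → Fin d) × Fin d × Fin d) ℂ :=
  ∑ j : Fin n, swapWithFirstExtra d n j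

/-- The Jucys–Murphy element `X_{n+2} = Σ_{j=1}^{n+1} SWAP_{j,n+2}`. -/
noncomputable def Xnp2 (d n : ℕ) :
    Matrix ((Fin n → Fin d) × Fin d × Fin d) ((Fin n → Fin d) × Fin d × Fin d) ℂ :=
  (∑ j : Fin n, swapWithSecondExtra d n j) + swapExtras d n

/-- `M ⊗ 1 ⊗ 1` on registers `1,…,n+2`. -/
noncomputable def extendByTwo (d n : ℕ)
    (M : Matrix (Fin n → Fin d) (Fin n → Fin d) ℂ) :
    Matrix ((Fin n → Fin d) × Fin d × Fin d) ((Fin n → Fin d) × Fin d × Fin d) ℂ :=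
  Matrix.of fun p q =>
    if p.2.1 = q.2.1 ∧ p.2.2 = q.2.2 then M p.1 q.1 else 0

/-- The trace over registers `1,…,n`, landing in matrices indexed by `Fin d × Fin d`. -/
noncomputable def traceFirstN (d n : ℕ)
    (N : Matrix ((Fin n → Fin d) × Fin d × Fin d) ((Fin n → Fin d) × Fin d × Fin d) ℂ) :
    Matrix (Fin d × Fin d) (Fin d × Fin d) ℂ :=
  Matrix.of fun x y => ∑ v : Fin n → Fin d, N (v, x) (v, y)

section Aux

variable {d n : ℕ}

lemma permMatrix_apply (π : Equiv.Perm (Fin n)) (v w : Fin n → Fin d) :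
    permMatrix d n π v w = if w = v ∘ π then 1 else 0 := by
  simp only [permMatrix, Matrix.of_apply]
  refine if_congr ⟨fun h => ?_, fun h a => ?_⟩ rfl rfl
  · funext b
    have hb := h (π b)
    rw [Equiv.Perm.coe_inv, Equiv.symm_apply_apply] at hb
    exact hb.symm
  · subst h; simp [Equiv.Perm.coe_inv, Equiv.apply_symm_apply]

lemma perm_mul_perm (π σ : Equiv.Perm (Fin n)) :
    permMatrix d n π * permMatrix d n σ = permMatrix d n (π * σ) := by
  ext v w
  rw [Matrix.mul_apply]
  simp only [permMatrix_apply]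
  rw [Fintype.sum_eq_single (v ∘ π)]
  · rw [if_pos rfl, one_mul]
    refine if_congr ?_ rfl rfl
    constructor <;> intro h <;> (subst h; rfl)
  · intro u hu
    rw [if_neg hu, zero_mul]

lemma perm_mul_symProj (π : Equiv.Perm (Fin n)) :
    permMatrix d n π * symProj d n = symProj d n := by
  rw [symProj, Matrix.mul_smul, Matrix.mul_sum]
  simp only [perm_mul_perm]
  congr 1
  exact Fintype.sum_equiv (Equiv.mulLeft π) _ _ (fun σ => rfl)

lemma symProj_mul_perm (π : Equiv.Perm (Fin n)) :
    symProj d n * permMatrix d n π = symProj d n := by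
  rw [symProj, Matrix.smul_mul, Matrix.sum_mul]
  simp only [perm_mul_perm]
  congr 1
  exact Fintype.sum_equiv (Equiv.mulRight π) _ _ (fun σ => rfl)

lemma psi_perm_left (ψ : Matrix (Fin n → Fin d) (Fin n → Fin d) ℂ)
    (hsupp : symProj d n * ψ * symProj d n = ψ) (π : Equiv.Perm (Fin n)) :
    permMatrix d n π * ψ = ψ := by
  conv_lhs => rw [← hsupp]
  rw [← Matrix.mul_assoc, ← Matrix.mul_assoc, perm_mul_symProj, hsupp]

lemma psi_comp (ψ : Matrix (Fin n → Fin d) (Fin n → Fin d) ℂ)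
    (hherm : ψ.IsHermitian)
    (hsupp : symProj d n * ψ * symProj d n = ψ)
    (π : Equiv.Perm (Fin n)) (v w : Fin n → Fin d) :
    ψ (v ∘ π) (w ∘ π) = ψ v w := by
  have e1 : ∀ a b : Fin n → Fin d, ψ (a ∘ π) b = ψ a b := fun a b => by
    have h := psi_perm_left ψ hsupp π
    have h2 : (permMatrix d n π * ψ) a b = ψ a b := by rw [h]
    rw [Matrix.mul_apply] at h2
    simp only [permMatrix_apply, ite_mul, one_mul, zero_mul] at h2
    rwa [Finset.sum_ite_eq' Finset.univ (a ∘ π) (fun u => ψ u b),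
      if_pos (Finset.mem_univ _)] at h2
  calc ψ (v ∘ π) (w ∘ π) = star (ψ (w ∘ π) (v ∘ π)) := (hherm.apply _ _).symm
    _ = star (ψ w (v ∘ π)) := by rw [e1]
    _ = ψ (v ∘ π) w := hherm.apply _ _
    _ = ψ v w := e1 v w

lemma swapFirst_mul (j : Fin n)
    (M : Matrix ((Fin n → Fin d) × Fin d × Fin d) ((Fin n → Fin d) × Fin d × Fin d) ℂ)
    (p q : (Fin n → Fin d) × Fin d × Fin d) :
    (swapWithFirstExtra d n j * M) p q
      = M (Function.update p.1 j p.2.1, p.1 j, p.2.2) q := by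
  rw [Matrix.mul_apply,
    Fintype.sum_eq_single ((Function.update p.1 j p.2.1, p.1 j, p.2.2) :
      (Fin n → Fin d) × Fin d × Fin d)]
  · rw [swapWithFirstExtra, Matrix.of_apply, if_pos, one_mul]
    refine ⟨rfl, ?_, rfl, fun b hb => ?_⟩
    · show p.2.1 = Function.update p.1 j p.2.1 j
      rw [Function.update_self]
    · show p.1 b = Function.update p.1 j p.2.1 b
      rw [Function.update_of_ne hb]
  · intro r hr
    rw [swapWithFirstExtra, Matrix.of_apply, if_neg, zero_mul]
    rintro ⟨h1, h2, h3, h4⟩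
    apply hr
    refine Prod.ext ?_ (Prod.ext h1.symm h3.symm)
    show r.1 = Function.update p.1 j p.2.1
    funext b
    by_cases hb : b = j
    · subst hb; rw [Function.update_self, ← h2]
    · rw [Function.update_of_ne hb, ← h4 b hb]

lemma swapSecond_mul (j : Fin n)
    (M : Matrix ((Fin n → Fin d) × Fin d × Fin d) ((Fin n → Fin d) × Fin d × Fin d) ℂ)
    (p q : (Fin n → Fin d) × Fin d × Fin d) :
    (swapWithSecondExtra d n j * M) p q
      = M (Function.update p.1 j p.2.2, p.2.1, p.1 j) q := by
  rw [Matrix.mul_apply,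
    Fintype.sum_eq_single ((Function.update p.1 j p.2.2, p.2.1, p.1 j) :
      (Fin n → Fin d) × Fin d × Fin d)]
  · rw [swapWithSecondExtra, Matrix.of_apply, if_pos, one_mul]
    refine ⟨rfl, ?_, rfl, fun b hb => ?_⟩
    · show p.2.2 = Function.update p.1 j p.2.2 j
      rw [Function.update_self]
    · show p.1 b = Function.update p.1 j p.2.2 b
      rw [Function.update_of_ne hb]
  · intro r hr
    rw [swapWithSecondExtra, Matrix.of_apply, if_neg, zero_mul]
    rintro ⟨h1, h2, h3, h4⟩
    apply hr
    refine Prod.ext ?_ (Prod.ext h3.symm h1.symm)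
    show r.1 = Function.update p.1 j p.2.2
    funext b
    by_cases hb : b = j
    · subst hb; rw [Function.update_self, ← h2]
    · rw [Function.update_of_ne hb, ← h4 b hb]

lemma swapExtras_mul
    (M : Matrix ((Fin n → Fin d) × Fin d × Fin d) ((Fin n → Fin d) × Fin d × Fin d) ℂ)
    (p q : (Fin n → Fin d) × Fin d × Fin d) :
    (swapExtras d n * M) p q = M (p.1, p.2.2, p.2.1) q := by
  rw [Matrix.mul_apply,
    Fintype.sum_eq_single ((p.1, p.2.2, p.2.1) : (Fin n → Fin d) × Fin d × Fin d)]
  · rw [swapExtras, Matrix.of_apply, if_pos ⟨rfl, rfl, rfl⟩, one_mul]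
  · intro r hr
    rw [swapExtras, Matrix.of_apply, if_neg, zero_mul]
    rintro ⟨h1, h2, h3⟩
    exact hr (Prod.ext h1.symm (Prod.ext h3.symm h2.symm))

lemma extendByTwo_apply (M : Matrix (Fin n → Fin d) (Fin n → Fin d) ℂ)
    (p q : (Fin n → Fin d) × Fin d × Fin d) :
    extendByTwo d n M p q = if p.2.1 = q.2.1 ∧ p.2.2 = q.2.2 then M p.1 q.1 else 0 := rfl

lemma mul_swapMatrix (M : Matrix (Fin d × Fin d) (Fin d × Fin d) ℂ) (p q : Fin d × Fin d) :
    (M * swapMatrix d) p q = M p (q.2, q.1) := by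
  rw [Matrix.mul_apply, Fintype.sum_eq_single ((q.2, q.1) : Fin d × Fin d)]
  · rw [swapMatrix, Matrix.of_apply, if_pos ⟨rfl, rfl⟩, mul_one]
  · intro r hr
    rw [swapMatrix, Matrix.of_apply, if_neg, mul_zero]
    rintro ⟨h1, h2⟩
    exact hr (Prod.ext h1 h2)

lemma ptrace1_eq (h : 1 ≤ n) (ψ : Matrix (Fin n → Fin d) (Fin n → Fin d) ℂ) (a a' : Fin d) :
    ptrace1 d n ψ a a' = ∑ w : Fin n → Fin d,
      if w ⟨0, h⟩ = a' then ψ (Function.update w ⟨0, h⟩ a) w else 0 := by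
  rw [ptrace1, dif_pos h, Matrix.of_apply, Finset.sum_comm]
  refine Finset.sum_congr rfl fun w _ => ?_
  rw [Fintype.sum_eq_single (Function.update w ⟨0, h⟩ a)]
  · by_cases hw : w ⟨0, h⟩ = a'
    · rw [if_pos ⟨Function.update_self _ _ _, hw, fun b hb => Function.update_of_ne hb _ _⟩,
        if_pos hw]
    · rw [if_neg (fun hc => hw hc.2.1), if_neg hw]
  · intro v hv
    rw [if_neg]
    rintro ⟨h1, h2, h3⟩
    apply hv
    funext b
    by_cases hb : b = ⟨0, h⟩
    · subst hb; rw [Function.update_self, h1]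
    · rw [Function.update_of_ne hb, h3 b hb]

lemma ptrace12_eq (h : 2 ≤ n) (ψ : Matrix (Fin n → Fin d) (Fin n → Fin d) ℂ)
    (a b c e : Fin d) :
    ptrace12 d n ψ (a, b) (c, e) = ∑ w : Fin n → Fin d,
      if w ⟨0, by omega⟩ = c ∧ w ⟨1, h⟩ = e then
        ψ (Function.update (Function.update w ⟨1, h⟩ b) ⟨0, by omega⟩ a) w else 0 := by
  have h01 : (⟨0, by omega⟩ : Fin n) ≠ ⟨1, h⟩ := by
    intro hc; exact absurd (congrArg Fin.val hc) (by norm_num)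
  rw [ptrace12, dif_pos h, Matrix.of_apply, Finset.sum_comm]
  refine Finset.sum_congr rfl fun w _ => ?_
  rw [Fintype.sum_eq_single (Function.update (Function.update w ⟨1, h⟩ b) ⟨0, by omega⟩ a)]
  · by_cases hw : w ⟨0, by omega⟩ = c ∧ w ⟨1, h⟩ = e
    · rw [if_pos, if_pos hw]
      refine ⟨Function.update_self _ _ _, ?_, hw.1, hw.2, fun b' hb0 hb1 => ?_⟩
      · rw [Function.update_of_ne (Ne.symm h01), Function.update_self]
      · have hb0' : b' ≠ (⟨0, by omega⟩ : Fin n) := fun hc => hb0 (congrArg Fin.val hc)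
        have hb1' : b' ≠ (⟨1, h⟩ : Fin n) := fun hc => hb1 (congrArg Fin.val hc)
        rw [Function.update_of_ne hb0', Function.update_of_ne hb1']
    · rw [if_neg (fun hc => hw ⟨hc.2.2.1, hc.2.2.2.1⟩), if_neg hw]
  · intro v hv
    rw [if_neg]
    rintro ⟨h1, h2, h3, h4, h5⟩
    apply hv
    funext b'
    by_cases hb0 : b' = (⟨0, by omega⟩ : Fin n)
    · subst hb0; rw [Function.update_self, h1]
    · rw [Function.update_of_ne hb0]
      by_cases hb1 : b' = (⟨1, h⟩ : Fin n)
      · subst hb1; rw [Function.update_self, h2]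
      · rw [Function.update_of_ne hb1]
        exact h5 b' (fun hc => hb0 (Fin.ext hc)) (fun hc => hb1 (Fin.ext hc))

lemma update_comp (f : Fin n → Fin d) (π : Equiv.Perm (Fin n)) (i : Fin n) (x : Fin d) :
    Function.update f (π i) x ∘ π = Function.update (f ∘ π) i x := by
  funext b
  by_cases hb : b = i
  · subst hb; simp
  · rw [Function.comp_apply, Function.update_of_ne (fun hc => hb (π.injective hc)),
      Function.update_of_ne hb]; rfl

lemma sym1 (ψ : Matrix (Fin n → Fin d) (Fin n → Fin d) ℂ)
    (hψ : ∀ (π : Equiv.Perm (Fin n)) v w, ψ (v ∘ π) (w ∘ π) = ψ v w)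
    (h : 1 ≤ n) (i : Fin n) (a e : Fin d) :
    (∑ v : Fin n → Fin d, if v i = e then ψ (Function.update v i a) v else 0)
      = ∑ w : Fin n → Fin d, if w ⟨0, h⟩ = e then ψ (Function.update w ⟨0, h⟩ a) w else 0 := by
  set z : Fin n := ⟨0, h⟩ with hz
  set π : Equiv.Perm (Fin n) := Equiv.swap z i with hπ
  have hπz : π z = i := Equiv.swap_apply_left _ _
  refine Fintype.sum_equiv (Equiv.arrowCongr π.symm (Equiv.refl (Fin d))) _ _ fun v => ?_
  have hcoe : (Equiv.arrowCongr π.symm (Equiv.refl (Fin d))) v = v ∘ π := by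
    funext b; simp [Equiv.arrowCongr]
  rw [hcoe]
  have hcond : (v ∘ π) z = v i := by rw [Function.comp_apply, hπz]
  rw [hcond]
  refine if_congr Iff.rfl ?_ rfl
  have : Function.update (v ∘ π) z a = (Function.update v i a) ∘ π := by
    rw [← hπz, update_comp]
  rw [this, hψ]

lemma sym2 (ψ : Matrix (Fin n → Fin d) (Fin n → Fin d) ℂ)
    (hψ : ∀ (π : Equiv.Perm (Fin n)) v w, ψ (v ∘ π) (w ∘ π) = ψ v w)
    (h : 2 ≤ n) (i j : Fin n) (hij : i ≠ j) (a b c e : Fin d) :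
    (∑ v : Fin n → Fin d, if v i = c ∧ v j = e then
        ψ (Function.update (Function.update v j b) i a) v else 0)
      = ∑ w : Fin n → Fin d, if w ⟨0, by omega⟩ = c ∧ w ⟨1, h⟩ = e then
          ψ (Function.update (Function.update w ⟨1, h⟩ b) ⟨0, by omega⟩ a) w else 0 := by
  set z0 : Fin n := ⟨0, by omega⟩ with hz0
  set z1 : Fin n := ⟨1, h⟩ with hz1
  have h01 : z0 ≠ z1 := by
    intro hc; exact absurd (congrArg Fin.val hc) (by norm_num)
  set σ1 : Equiv.Perm (Fin n) := Equiv.swap z0 i with hσ1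
  set j' : Fin n := σ1 j with hj'
  have hj'0 : j' ≠ z0 := by
    intro hc
    have : j = σ1 z0 := by
      have := congrArg σ1 hc
      rwa [hσ1, Equiv.swap_apply_self] at this
    rw [hσ1, Equiv.swap_apply_left] at this
    exact hij this.symm
  set σ2 : Equiv.Perm (Fin n) := Equiv.swap z1 j' with hσ2
  set π : Equiv.Perm (Fin n) := σ1 * σ2 with hπ
  have hπ0 : π z0 = i := by
    rw [hπ, Equiv.Perm.mul_apply, hσ2, Equiv.swap_apply_of_ne_of_ne h01 (Ne.symm hj'0),
      hσ1, Equiv.swap_apply_left]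
  have hπ1 : π z1 = j := by
    rw [hπ, Equiv.Perm.mul_apply, hσ2, Equiv.swap_apply_left, hj', hσ1,
      Equiv.swap_apply_self]
  refine Fintype.sum_equiv (Equiv.arrowCongr π.symm (Equiv.refl (Fin d))) _ _ fun v => ?_
  have hcoe : (Equiv.arrowCongr π.symm (Equiv.refl (Fin d))) v = v ∘ π := by
    funext b; simp [Equiv.arrowCongr]
  rw [hcoe]
  have hc0 : (v ∘ π) z0 = v i := by rw [Function.comp_apply, hπ0]
  have hc1 : (v ∘ π) z1 = v j := by rw [Function.comp_apply, hπ1]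
  rw [hc0, hc1]
  refine if_congr Iff.rfl ?_ rfl
  have key : Function.update (Function.update (v ∘ π) z1 b) z0 a
      = (Function.update (Function.update v j b) i a) ∘ π := by
    conv_rhs => rw [← hπ0, update_comp, ← hπ1, update_comp]
  rw [key, hψ]

lemma traceFirstN_add
    (A B : Matrix ((Fin n → Fin d) × Fin d × Fin d) ((Fin n → Fin d) × Fin d × Fin d) ℂ) :
    traceFirstN d n (A + B) = traceFirstN d n A + traceFirstN d n B := by
  ext x y
  simp [traceFirstN, Finset.sum_add_distrib]

lemma traceFirstN_sum {ι : Type*} (s : Finset ι)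
    (f : ι → Matrix ((Fin n → Fin d) × Fin d × Fin d) ((Fin n → Fin d) × Fin d × Fin d) ℂ) :
    traceFirstN d n (∑ i ∈ s, f i) = ∑ i ∈ s, traceFirstN d n (f i) := by
  ext x y
  simp only [traceFirstN, Matrix.of_apply, Matrix.sum_apply]
  exact Finset.sum_comm

lemma traceT2 (ψ : Matrix (Fin n → Fin d) (Fin n → Fin d) ℂ)
    (hψ : ∀ (π : Equiv.Perm (Fin n)) v w, ψ (v ∘ π) (w ∘ π) = ψ v w)
    (hn : 1 ≤ n) (i : Fin n) :
    traceFirstN d n (swapWithSecondExtra d n i * (swapWithFirstExtra d n i * extendByTwo d n ψ))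
      = (ptrace1 d n ψ ⊗ₖ (1 : Matrix (Fin d) (Fin d) ℂ)) * swapMatrix d := by
  ext ⟨a, b⟩ ⟨c, e⟩
  rw [mul_swapMatrix]
  simp only [Matrix.kroneckerMap_apply]
  have step : ∀ v : Fin n → Fin d,
      (swapWithSecondExtra d n i * (swapWithFirstExtra d n i * extendByTwo d n ψ))
          (v, (a, b)) (v, (c, e))
        = if b = c then (if v i = e then ψ (Function.update v i a) v else 0) else 0 := by
    intro v
    rw [swapSecond_mul, swapFirst_mul, extendByTwo_apply]
    simp only [Function.update_self, Function.update_idem]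
    by_cases h1 : b = c <;> by_cases h2 : v i = e <;> simp [h1, h2]
  simp only [traceFirstN, Matrix.of_apply]
  rw [Finset.sum_congr rfl (fun v _ => step v)]
  by_cases hbc : b = c
  · simp only [if_pos hbc]
    rw [sym1 ψ hψ hn i a e, ← ptrace1_eq hn, Matrix.one_apply, if_pos hbc, mul_one]
  · simp [hbc, Matrix.one_apply]

lemma traceT3 (ψ : Matrix (Fin n → Fin d) (Fin n → Fin d) ℂ)
    (hψ : ∀ (π : Equiv.Perm (Fin n)) v w, ψ (v ∘ π) (w ∘ π) = ψ v w)
    (hn : 1 ≤ n) (i : Fin n) :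
    traceFirstN d n (swapExtras d n * (swapWithFirstExtra d n i * extendByTwo d n ψ))
      = ((1 : Matrix (Fin d) (Fin d) ℂ) ⊗ₖ ptrace1 d n ψ) * swapMatrix d := by
  ext ⟨a, b⟩ ⟨c, e⟩
  rw [mul_swapMatrix]
  simp only [Matrix.kroneckerMap_apply]
  have step : ∀ v : Fin n → Fin d,
      (swapExtras d n * (swapWithFirstExtra d n i * extendByTwo d n ψ))
          (v, (a, b)) (v, (c, e))
        = if a = e then (if v i = c then ψ (Function.update v i b) v else 0) else 0 := by
    intro v
    rw [swapExtras_mul, swapFirst_mul, extendByTwo_apply]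
    simp only []
    by_cases h1 : a = e <;> by_cases h2 : v i = c <;> simp [h1, h2]
  simp only [traceFirstN, Matrix.of_apply]
  rw [Finset.sum_congr rfl (fun v _ => step v)]
  by_cases hae : a = e
  · simp only [if_pos hae]
    rw [sym1 ψ hψ hn i b c, ← ptrace1_eq hn, Matrix.one_apply, if_pos hae, one_mul]
  · simp [hae, Matrix.one_apply]

lemma traceT1 (ψ : Matrix (Fin n → Fin d) (Fin n → Fin d) ℂ)
    (hψ : ∀ (π : Equiv.Perm (Fin n)) v w, ψ (v ∘ π) (w ∘ π) = ψ v w)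
    (i j : Fin n) (hij : i ≠ j) :
    traceFirstN d n (swapWithSecondExtra d n j * (swapWithFirstExtra d n i * extendByTwo d n ψ))
      = ptrace12 d n ψ := by
  have h2n : 2 ≤ n := by
    have h1 : (i : ℕ) ≠ (j : ℕ) := fun hc => hij (Fin.ext hc)
    have := i.isLt
    have := j.isLt
    omega
  ext ⟨a, b⟩ ⟨c, e⟩
  have step : ∀ v : Fin n → Fin d,
      (swapWithSecondExtra d n j * (swapWithFirstExtra d n i * extendByTwo d n ψ))
          (v, (a, b)) (v, (c, e))
        = if v i = c ∧ v j = e then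
            ψ (Function.update (Function.update v j b) i a) v else 0 := by
    intro v
    rw [swapSecond_mul, swapFirst_mul, extendByTwo_apply]
    simp only [Function.update_of_ne hij]
  simp only [traceFirstN, Matrix.of_apply]
  rw [Finset.sum_congr rfl (fun v _ => step v),
    sym2 ψ hψ h2n i j hij a b c e, ← ptrace12_eq h2n]

end Aux

/-- For `ψ_sym` PSD and supported on the symmetric subspace,
`tr_{1,…,n}(X_{n+2}·X_{n+1}·(ψ_sym ⊗ 1 ⊗ 1)) = n(n−1)·(ψ_sym)_{1,2} + n·((ψ_sym)₁⊗1 + 1⊗(ψ_sym)₁)·SWAP`. -/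
theorem jucysMurphy_partial_trace_identity
    (d n : ℕ) (hd : 1 ≤ d) (hn : 1 ≤ n)
    (ψsym : Matrix (Fin n → Fin d) (Fin n → Fin d) ℂ)
    (hpsd : ψsym.PosSemidef)
    (hsupp : symProj d n * ψsym * symProj d n = ψsym) :
    traceFirstN d n (Xnp2 d n * Xnp1 d n * extendByTwo d n ψsym)
      = ((n : ℂ) * ((n : ℂ) - 1)) • ptrace12 d n ψsym +
        (n : ℂ) • ((ptrace1 d n ψsym ⊗ₖ (1 : Matrix (Fin d) (Fin d) ℂ) +
            (1 : Matrix (Fin d) (Fin d) ℂ) ⊗ₖ ptrace1 d n ψsym) * swapMatrix d) := by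
  classical
  have hψ : ∀ (π : Equiv.Perm (Fin n)) v w, ψsym (v ∘ π) (w ∘ π) = ψsym v w :=
    psi_comp ψsym hpsd.1 hsupp
  set E := extendByTwo d n ψsym with hE
  set P12 := ptrace12 d n ψsym with hP12
  set A := (ptrace1 d n ψsym ⊗ₖ (1 : Matrix (Fin d) (Fin d) ℂ)) * swapMatrix d with hA
  set B := ((1 : Matrix (Fin d) (Fin d) ℂ) ⊗ₖ ptrace1 d n ψsym) * swapMatrix d with hB
  have hexp : Xnp2 d n * Xnp1 d n * E
      = (∑ j : Fin n, ∑ i : Fin n,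
          swapWithSecondExtra d n j * (swapWithFirstExtra d n i * E))
        + ∑ i : Fin n, swapExtras d n * (swapWithFirstExtra d n i * E) := by
    simp only [Xnp2, Xnp1, Matrix.add_mul, Matrix.sum_mul, Matrix.mul_sum, Matrix.mul_assoc]
    rw [Finset.sum_add_distrib]
    congr 1
    exact Finset.sum_comm
  rw [hexp]
  simp only [traceFirstN_add, traceFirstN_sum]
  have hInner : ∀ j : Fin n,
      ∑ i : Fin n, traceFirstN d n
          (swapWithSecondExtra d n j * (swapWithFirstExtra d n i * E))
        = n • P12 + (A - P12) := by
    intro j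
    have hsummand : ∀ i : Fin n,
        traceFirstN d n (swapWithSecondExtra d n j * (swapWithFirstExtra d n i * E))
          = P12 + (if i = j then A - P12 else 0) := by
      intro i
      by_cases hij : i = j
      · subst hij
        rw [if_pos rfl, hE, traceT2 ψsym hψ hn i, ← hA]
        abel
      · rw [if_neg hij, add_zero, hE, traceT1 ψsym hψ i j hij, hP12]
    rw [Finset.sum_congr rfl (fun i _ => hsummand i), Finset.sum_add_distrib,
      Finset.sum_const, Finset.card_univ, Fintype.card_fin,
      Finset.sum_ite_eq' Finset.univ j (fun _ => A - P12), if_pos (Finset.mem_univ j)]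
  have hT3 : ∀ i : Fin n,
      traceFirstN d n (swapExtras d n * (swapWithFirstExtra d n i * E)) = B := fun i => by
    rw [hE, traceT3 ψsym hψ hn i, ← hB]
  rw [Finset.sum_congr rfl (fun j _ => hInner j),
    Finset.sum_congr rfl (fun i _ => hT3 i),
    Finset.sum_const, Finset.sum_const, Finset.card_univ, Fintype.card_fin]
  have hAB : (ptrace1 d n ψsym ⊗ₖ (1 : Matrix (Fin d) (Fin d) ℂ)
      + (1 : Matrix (Fin d) (Fin d) ℂ) ⊗ₖ ptrace1 d n ψsym) * swapMatrix d = A + B :=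
    Matrix.add_mul _ _ _
  rw [hAB]
  simp only [← Nat.cast_smul_eq_nsmul ℂ]
  module
end

section
/- Let d ≥ 1 and let ρ ∈ Matrix (Fin d) (Fin d) ℂ be a quantum state (PSD, trace 1). Then the first moment of the uniform-POVM outcome on ρ satisfies d · ∫ ⟪U·e, ρ (U·e)⟫ · |U·e⟩⟨U·e| dU = (ρ + 1)/(d+1), where the integral is over the Haar probability measure on the unitary group Matrix.unitaryGroup (Fin d) ℂ and is taken entrywise. -/
open MeasureTheory Matrix
open scoped ComplexOrder

/-- Measurable-space structure on matrices (entrywise, i.e. the product σ-algebra). -/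
noncomputable instance matrixMeasurableSpace (m n : Type*) :
    MeasurableSpace (Matrix m n ℂ) :=
  inferInstanceAs (MeasurableSpace (m → n → ℂ))

section
variable {d : ℕ}

lemma psi_unit (e : Fin d → ℂ) (he : star e ⬝ᵥ e = 1) (U : Matrix.unitaryGroup (Fin d) ℂ) :
    star ((U : Matrix (Fin d) (Fin d) ℂ).mulVec e) ⬝ᵥ ((U : Matrix (Fin d) (Fin d) ℂ).mulVec e) = 1 := by
  rw [Matrix.star_mulVec, Matrix.dotProduct_mulVec, Matrix.vecMul_vecMul]
  have h : ((U : Matrix (Fin d) (Fin d) ℂ)ᴴ * (U : Matrix (Fin d) (Fin d) ℂ)) = 1 := U.2.1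
  rw [h]; simpa using he

lemma meas_psi (e : Fin d → ℂ) (i : Fin d) :
    Measurable fun U : Matrix.unitaryGroup (Fin d) ℂ => (U : Matrix (Fin d) (Fin d) ℂ).mulVec e i := by
  have : (fun U : Matrix.unitaryGroup (Fin d) ℂ => (U : Matrix (Fin d) (Fin d) ℂ).mulVec e i)
      = fun U : Matrix.unitaryGroup (Fin d) ℂ => ∑ k, (U : Matrix (Fin d) (Fin d) ℂ) i k * e k := rfl
  rw [this]
  exact Finset.measurable_sum _ fun k _ =>
    ((show Measurable fun U : Matrix.unitaryGroup (Fin d) ℂ => (U : Matrix (Fin d) (Fin d) ℂ) i k from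
      (measurable_pi_apply k).comp ((measurable_pi_apply i).comp measurable_subtype_coe)).mul measurable_const)

-- bound on coordinates
lemma psi_bound (e : Fin d → ℂ) (he : star e ⬝ᵥ e = 1) (U : Matrix.unitaryGroup (Fin d) ℂ) (i : Fin d) :
    ‖(U : Matrix (Fin d) (Fin d) ℂ).mulVec e i‖ ≤ 1 := by
  set ψ := (U : Matrix (Fin d) (Fin d) ℂ).mulVec e
  have h1 : (∑ t, (Complex.normSq (ψ t) : ℂ)) = 1 := by
    have := psi_unit e he U
    rw [dotProduct] at this
    simpa [Complex.normSq_eq_conj_mul_self] using this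
  have h2 : (∑ t, Complex.normSq (ψ t)) = 1 := by
    exact_mod_cast h1
  have h3 : Complex.normSq (ψ i) ≤ 1 := by
    rw [← h2]
    exact Finset.single_le_sum (fun t _ => Complex.normSq_nonneg _) (Finset.mem_univ i)
  rw [← Complex.sq_norm] at h3
  nlinarith [norm_nonneg (ψ i)]
end


section
variable {d : ℕ}

lemma meas_mulLeft (V : Matrix.unitaryGroup (Fin d) ℂ) :
    Measurable fun U : Matrix.unitaryGroup (Fin d) ℂ => V * U := by
  apply Measurable.subtype_mk
  apply measurable_pi_lambda
  intro i
  apply measurable_pi_lambda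
  intro j
  have : (fun U : Matrix.unitaryGroup (Fin d) ℂ => ((V : Matrix (Fin d) (Fin d) ℂ) * (U : Matrix (Fin d) (Fin d) ℂ)) i j)
      = fun U : Matrix.unitaryGroup (Fin d) ℂ => ∑ k, (V : Matrix (Fin d) (Fin d) ℂ) i k * (U : Matrix (Fin d) (Fin d) ℂ) k j := by
    ext U; rw [Matrix.mul_apply]
  rw [this]
  exact Finset.measurable_sum _ fun k _ =>
    measurable_const.mul ((measurable_pi_apply j).comp ((measurable_pi_apply k).comp measurable_subtype_coe))

noncomputable def mulLeftEquiv (V : Matrix.unitaryGroup (Fin d) ℂ) :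
    Matrix.unitaryGroup (Fin d) ℂ ≃ᵐ Matrix.unitaryGroup (Fin d) ℂ where
  toEquiv := Equiv.mulLeft V
  measurable_toFun := meas_mulLeft V
  measurable_invFun := meas_mulLeft V⁻¹

lemma key_inv (μ : Measure (Matrix.unitaryGroup (Fin d) ℂ)) [μ.IsMulLeftInvariant]
    (e : Fin d → ℂ) (V : Matrix.unitaryGroup (Fin d) ℂ) (f : (Fin d → ℂ) → ℂ) :
    ∫ U, f ((V : Matrix (Fin d) (Fin d) ℂ).mulVec ((U : Matrix (Fin d) (Fin d) ℂ).mulVec e)) ∂μ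
      = ∫ U, f ((U : Matrix (Fin d) (Fin d) ℂ).mulVec e) ∂μ := by
  have hmp : MeasurePreserving (mulLeftEquiv V) μ μ :=
    ⟨(mulLeftEquiv V).measurable, Measure.IsMulLeftInvariant.map_mul_left_eq_self V⟩
  have := hmp.integral_comp (mulLeftEquiv V).measurableEmbedding
    (fun U : Matrix.unitaryGroup (Fin d) ℂ => f ((U : Matrix (Fin d) (Fin d) ℂ).mulVec e))
  rw [← this]
  congr 1
  ext U
  simp only [mulLeftEquiv, MeasurableEquiv.coe_mk, Equiv.coe_mulLeft]
  rw [Matrix.mulVec_mulVec]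
  rfl

end


section
variable {d : ℕ}

noncomputable def Tm (μ : Measure (Matrix.unitaryGroup (Fin d) ℂ)) (e : Fin d → ℂ)
    (i l j k : Fin d) : ℂ :=
  ∫ U, ((U : Matrix (Fin d) (Fin d) ℂ).mulVec e i) * ((U : Matrix (Fin d) (Fin d) ℂ).mulVec e l)
      * star ((U : Matrix (Fin d) (Fin d) ℂ).mulVec e j) * star ((U : Matrix (Fin d) (Fin d) ℂ).mulVec e k) ∂μ

lemma meas_mono4 (e : Fin d → ℂ) (i l j k : Fin d) :
    Measurable fun U : Matrix.unitaryGroup (Fin d) ℂ =>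
      ((U : Matrix (Fin d) (Fin d) ℂ).mulVec e i) * ((U : Matrix (Fin d) (Fin d) ℂ).mulVec e l)
      * star ((U : Matrix (Fin d) (Fin d) ℂ).mulVec e j) * star ((U : Matrix (Fin d) (Fin d) ℂ).mulVec e k) :=
  (((meas_psi e i).mul (meas_psi e l)).mul (Complex.continuous_conj.measurable.comp (meas_psi e j))).mul (Complex.continuous_conj.measurable.comp (meas_psi e k))

lemma integrable_mono4 (μ : Measure (Matrix.unitaryGroup (Fin d) ℂ)) [IsProbabilityMeasure μ]
    (e : Fin d → ℂ) (he : star e ⬝ᵥ e = 1) (i l j k : Fin d) :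
    Integrable (fun U : Matrix.unitaryGroup (Fin d) ℂ =>
      ((U : Matrix (Fin d) (Fin d) ℂ).mulVec e i) * ((U : Matrix (Fin d) (Fin d) ℂ).mulVec e l)
      * star ((U : Matrix (Fin d) (Fin d) ℂ).mulVec e j) * star ((U : Matrix (Fin d) (Fin d) ℂ).mulVec e k)) μ := by
  apply (integrable_const (1 : ℝ)).mono' (meas_mono4 e i l j k).aestronglyMeasurable
  apply ae_of_all
  intro U
  have h1 := psi_bound e he U i
  have h2 := psi_bound e he U l
  have h3 := psi_bound e he U j
  have h4 := psi_bound e he U k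
  simp only [norm_mul, norm_star]
  exact mul_le_one₀ (mul_le_one₀ (mul_le_one₀ h1 (norm_nonneg _) h2) (norm_nonneg _) h3) (norm_nonneg _) h4
end


lemma exists_count_ne {α : Type*} [DecidableEq α] (i l j k : α)
    (h2 : ¬(i = j ∧ l = k)) (h3 : ¬(i = k ∧ l = j)) :
    ∃ m, ((if i = m then 1 else 0) + (if l = m then 1 else 0) : ℕ)
        ≠ (if j = m then 1 else 0) + (if k = m then 1 else 0) := by
  by_cases h1 : i = j
  · have h4 : l ≠ k := fun h => h2 ⟨h1, h⟩
    by_cases h5 : l = j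
    · -- l = j = i, l ≠ k, so i ≠ k
      have hli : l = i := h5.trans h1.symm
      have hik : i ≠ k := fun h => h4 ((hli.trans h).symm ▸ rfl)
      refine ⟨k, ?_⟩
      rw [if_neg hik, if_neg h4, if_neg (h1 ▸ hik : j ≠ k), if_pos rfl]
      omega
    · refine ⟨l, ?_⟩
      rw [if_pos rfl, if_neg (fun h : j = l => h5 h.symm), if_neg (fun h : k = l => h4 h.symm)]
      split_ifs <;> omega
  · by_cases h5 : l = j
    · have hik : i ≠ k := fun h => h3 ⟨h, h5⟩
      by_cases h6 : k = j
      · refine ⟨j, ?_⟩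
        rw [if_neg h1, if_pos h5, if_pos rfl, if_pos h6]
        omega
      · refine ⟨i, ?_⟩
        rw [if_pos rfl, if_neg (fun h : j = i => h1 h.symm), if_neg (fun h : k = i => hik h.symm)]
        split_ifs <;> omega
    · refine ⟨j, ?_⟩
      rw [if_neg h1, if_neg h5, if_pos rfl]
      split_ifs <;> omega


section
variable {d : ℕ}

noncomputable def diagU (c : Fin d → ℂ) (hc : ∀ t, c t * star (c t) = 1) :
    Matrix.unitaryGroup (Fin d) ℂ :=
  ⟨Matrix.diagonal c, by
    rw [Matrix.mem_unitaryGroup_iff]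
    have : star (Matrix.diagonal c) = Matrix.diagonal (fun t => star (c t)) := Matrix.diagonal_conjTranspose c
    rw [this, Matrix.diagonal_mul_diagonal]
    convert Matrix.diagonal_one with t
    exact hc t⟩

lemma T_diag_scale (μ : Measure (Matrix.unitaryGroup (Fin d) ℂ)) [μ.IsMulLeftInvariant]
    (e : Fin d → ℂ) (c : Fin d → ℂ) (hc : ∀ t, c t * star (c t) = 1) (i l j k : Fin d) :
    Tm μ e i l j k = (c i * c l * star (c j) * star (c k)) * Tm μ e i l j k := by
  have hm : ∀ (U : Matrix.unitaryGroup (Fin d) ℂ) t,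
      ((diagU c hc : Matrix (Fin d) (Fin d) ℂ).mulVec ((U : Matrix (Fin d) (Fin d) ℂ).mulVec e)) t
      = c t * ((U : Matrix (Fin d) (Fin d) ℂ).mulVec e) t := fun U t => Matrix.mulVec_diagonal c _ t
  calc Tm μ e i l j k
      = ∫ U, (fun v : Fin d → ℂ => v i * v l * star (v j) * star (v k))
          ((diagU c hc : Matrix (Fin d) (Fin d) ℂ).mulVec ((U : Matrix (Fin d) (Fin d) ℂ).mulVec e)) ∂μ :=
        (key_inv μ e (diagU c hc) (fun v => v i * v l * star (v j) * star (v k))).symm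
    _ = ∫ U, (c i * c l * star (c j) * star (c k)) *
          (((U : Matrix (Fin d) (Fin d) ℂ).mulVec e i) * ((U : Matrix (Fin d) (Fin d) ℂ).mulVec e l)
            * star ((U : Matrix (Fin d) (Fin d) ℂ).mulVec e j) * star ((U : Matrix (Fin d) (Fin d) ℂ).mulVec e k)) ∂μ := by
        congr 1; ext U; simp only [hm U, star_mul']; ring
    _ = (c i * c l * star (c j) * star (c k)) * Tm μ e i l j k := MeasureTheory.integral_const_mul _ _

lemma T_vanish (μ : Measure (Matrix.unitaryGroup (Fin d) ℂ)) [μ.IsMulLeftInvariant]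
    (e : Fin d → ℂ) (i l j k m : Fin d)
    (hm : ((if i = m then 1 else 0) + (if l = m then 1 else 0) : ℕ)
        ≠ (if j = m then 1 else 0) + (if k = m then 1 else 0)) :
    Tm μ e i l j k = 0 := by
  set c : Fin d → ℂ := fun t => if t = m then Complex.I else 1 with hcdef
  have hc : ∀ t, c t * star (c t) = 1 := by
    intro t; simp only [hcdef]; split_ifs <;> simp [Complex.star_def, Complex.conj_I, Complex.I_mul_I]
  have h := T_diag_scale μ e c hc i l j k
  have hw : c i * c l * star (c j) * star (c k) ≠ 1 := by
    simp only [hcdef]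
    split_ifs at hm ⊢ <;> simp_all [Complex.star_def, Complex.conj_I, Complex.ext_iff] <;> norm_num
  have h0 : (1 - c i * c l * star (c j) * star (c k)) * Tm μ e i l j k = 0 := by
    linear_combination h
  rcases mul_eq_zero.mp h0 with h1 | h1
  · exact absurd (by linear_combination -h1) hw
  · exact h1
end


section
variable {d : ℕ}

noncomputable def permU (σ : Equiv.Perm (Fin d)) : Matrix.unitaryGroup (Fin d) ℂ :=
  ⟨Matrix.of fun p q => if σ p = q then (1 : ℂ) else 0, by
    rw [Matrix.mem_unitaryGroup_iff]
    ext p q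
    rw [Matrix.mul_apply, Matrix.one_apply]
    have h1 : ∀ r : Fin d, (Matrix.of fun p q => if σ p = q then (1 : ℂ) else 0) p r
        * star ((Matrix.of fun p q => if σ p = q then (1 : ℂ) else 0) q r)
        = if σ p = r then (if σ q = r then (1:ℂ) else 0) else 0 := by
      intro r
      show (if σ p = r then (1:ℂ) else 0) * star (if σ q = r then (1:ℂ) else 0) = _
      split_ifs <;> simp
    simp only [Matrix.star_apply]
    rw [Finset.sum_congr rfl (fun r _ => h1 r), Finset.sum_ite_eq]
    simp only [Finset.mem_univ, if_true]
    by_cases hpq : p = q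
    · rw [if_pos (by rw [hpq]), if_pos hpq]
    · rw [if_neg (fun h => hpq (σ.injective h.symm)), if_neg hpq]⟩

lemma permU_mulVec (σ : Equiv.Perm (Fin d)) (v : Fin d → ℂ) (p : Fin d) :
    ((permU σ : Matrix (Fin d) (Fin d) ℂ).mulVec v) p = v (σ p) := by
  show (∑ q, (if σ p = q then (1:ℂ) else 0) * v q) = v (σ p)
  rw [Finset.sum_congr rfl (fun q _ => ite_mul (σ p = q) _ _ (v q))]
  simp [Finset.sum_ite_eq]

lemma T_perm (μ : Measure (Matrix.unitaryGroup (Fin d) ℂ)) [μ.IsMulLeftInvariant]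
    (e : Fin d → ℂ) (σ : Equiv.Perm (Fin d)) (i l j k : Fin d) :
    Tm μ e (σ i) (σ l) (σ j) (σ k) = Tm μ e i l j k := by
  have h := key_inv μ e (permU σ) (fun v => v i * v l * star (v j) * star (v k))
  rw [Tm, Tm, ← h]
  congr 1
  ext U
  simp only [permU_mulVec]
end


noncomputable def hsc : ℂ := ((Real.sqrt 2 : ℝ) : ℂ)⁻¹

lemma hsc_star : star hsc = hsc := by
  simp [hsc, ← Complex.ofReal_inv, Complex.conj_ofReal]

lemma hsc_sq : hsc ^ 2 = 2⁻¹ := by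
  rw [hsc, ← Complex.ofReal_inv, ← Complex.ofReal_pow]
  norm_num [Real.sq_sqrt]

section
variable {d : ℕ}

noncomputable def hadM (i l : Fin d) : Matrix (Fin d) (Fin d) ℂ :=
  Matrix.of fun p q =>
    if p = i then (if q = i then hsc else if q = l then hsc else 0)
    else if p = l then (if q = i then hsc else if q = l then -hsc else 0)
    else if p = q then 1 else 0

variable (i l : Fin d) (hil : i ≠ l)
include hil

lemma sum_split (g : Fin d → ℂ) :
    ∑ r, g r = (∑ r ∈ (Finset.univ.erase i).erase l, g r) + g l + g i := by
  rw [← Finset.sum_erase_add Finset.univ g (Finset.mem_univ i),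
      ← Finset.sum_erase_add (Finset.univ.erase i) g
        (Finset.mem_erase.mpr ⟨Ne.symm hil, Finset.mem_univ l⟩)]

lemma hadM_unitary : hadM i l ∈ Matrix.unitaryGroup (Fin d) ℂ := by
  rw [Matrix.mem_unitaryGroup_iff]
  ext p q
  rw [Matrix.mul_apply, Matrix.one_apply]
  simp only [Matrix.star_apply]
  rw [sum_split i l hil]
  by_cases hpi : p = i
  · subst hpi
    have htail : ∑ r ∈ (Finset.univ.erase p).erase l, hadM p l p r * star (hadM p l q r) = 0 := by
      apply Finset.sum_eq_zero
      intro r hr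
      have h1 := (Finset.mem_erase.mp hr).1
      have h2 := (Finset.mem_erase.mp (Finset.mem_erase.mp hr).2).1
      have : hadM p l p r = 0 := by
        show (if p = p then (if r = p then hsc else if r = l then hsc else 0) else _) = 0
        rw [if_pos rfl, if_neg h2, if_neg h1]
      rw [this, zero_mul]
    rw [htail]
    have hpp : hadM p l p p = hsc := by
      show (if p = p then (if p = p then hsc else _) else _) = hsc
      rw [if_pos rfl, if_pos rfl]
    have hpl : hadM p l p l = hsc := by
      show (if p = p then (if l = p then hsc else if l = l then hsc else 0) else _) = hsc
      rw [if_pos rfl, if_neg (Ne.symm hil), if_pos rfl]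
    rw [hpp, hpl]
    by_cases hqi : q = p
    · subst hqi
      rw [hpp, hpl, if_pos rfl, hsc_star]
      linear_combination (2:ℂ) * hsc_sq
    · by_cases hql : q = l
      · subst hql
        have h1 : hadM p q q p = hsc := by
          show (if q = p then _ else if q = q then (if p = p then hsc else if p = q then -hsc else 0) else _) = hsc
          rw [if_neg hqi, if_pos rfl, if_pos rfl]
        have h2 : hadM p q q q = -hsc := by
          show (if q = p then _ else if q = q then (if q = p then hsc else if q = q then -hsc else 0) else _) = -hsc
          rw [if_neg hqi, if_pos rfl, if_neg hqi, if_pos rfl]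
        rw [h1, h2, if_neg (Ne.symm hqi), star_neg, hsc_star]
        ring
      · have h1 : hadM p l q p = 0 := by
          show (if q = p then _ else if q = l then _ else if q = p then 1 else 0) = 0
          rw [if_neg hqi, if_neg hql, if_neg hqi]
        have h2 : hadM p l q l = 0 := by
          show (if q = p then _ else if q = l then _ else if q = l then 1 else 0) = 0
          rw [if_neg hqi, if_neg hql, if_neg hql]
        rw [h1, h2, if_neg (Ne.symm hqi)]
        simp
  · by_cases hpl : p = l
    · subst hpl
      have htail : ∑ r ∈ (Finset.univ.erase i).erase p, hadM i p p r * star (hadM i p q r) = 0 := by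
        apply Finset.sum_eq_zero
        intro r hr
        have h1 := (Finset.mem_erase.mp hr).1
        have h2 := (Finset.mem_erase.mp (Finset.mem_erase.mp hr).2).1
        have : hadM i p p r = 0 := by
          show (if p = i then _ else if p = p then (if r = i then hsc else if r = p then -hsc else 0) else _) = 0
          rw [if_neg hpi, if_pos rfl, if_neg h2, if_neg h1]
        rw [this, zero_mul]
      rw [htail]
      have hpp : hadM i p p p = -hsc := by
        show (if p = i then _ else if p = p then (if p = i then hsc else if p = p then -hsc else 0) else _) = -hsc
        rw [if_neg hpi, if_pos rfl, if_neg hpi, if_pos rfl]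
      have hpi' : hadM i p p i = hsc := by
        show (if p = i then _ else if p = p then (if i = i then hsc else _) else _) = hsc
        rw [if_neg hpi, if_pos rfl, if_pos rfl]
      rw [hpp, hpi']
      by_cases hqi : q = i
      · subst hqi
        have h1 : hadM q p q q = hsc := by
          show (if q = q then (if q = q then hsc else _) else _) = hsc
          rw [if_pos rfl, if_pos rfl]
        have h2 : hadM q p q p = hsc := by
          show (if q = q then (if p = q then hsc else if p = p then hsc else 0) else _) = hsc
          rw [if_pos rfl, if_neg hpi, if_pos rfl]
        rw [h1, h2, if_neg hpi, hsc_star]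
        ring
      · by_cases hql : q = p
        · subst hql
          rw [hpp, hpi', if_pos rfl, star_neg, hsc_star]
          linear_combination (2:ℂ) * hsc_sq
        · have h1 : hadM i p q i = 0 := by
            show (if q = i then _ else if q = p then _ else if q = i then 1 else 0) = 0
            rw [if_neg hqi, if_neg hql, if_neg hqi]
          have h2 : hadM i p q p = 0 := by
            show (if q = i then _ else if q = p then _ else if q = p then 1 else 0) = 0
            rw [if_neg hqi, if_neg hql, if_neg hql]
          rw [h1, h2, if_neg (Ne.symm hql)]
          simp
    · -- p ∉ {i, l}
      have hgi : hadM i l p i = 0 := by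
        show (if p = i then _ else if p = l then _ else if p = i then 1 else 0) = 0
        rw [if_neg hpi, if_neg hpl, if_neg hpi]
      have hgl : hadM i l p l = 0 := by
        show (if p = i then _ else if p = l then _ else if p = l then 1 else 0) = 0
        rw [if_neg hpi, if_neg hpl, if_neg hpl]
      rw [hgi, hgl, zero_mul, zero_mul, add_zero, add_zero]
      have htail : ∑ r ∈ (Finset.univ.erase i).erase l, hadM i l p r * star (hadM i l q r)
          = star (hadM i l q p) := by
        have hmem : p ∈ (Finset.univ.erase i).erase l :=
          Finset.mem_erase.mpr ⟨hpl, Finset.mem_erase.mpr ⟨hpi, Finset.mem_univ p⟩⟩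
        have hsummand : ∀ r ∈ (Finset.univ.erase i).erase l,
            hadM i l p r * star (hadM i l q r) = if p = r then star (hadM i l q r) else 0 := by
          intro r _
          have : hadM i l p r = if p = r then 1 else 0 := by
            show (if p = i then _ else if p = l then _ else if p = r then 1 else 0) = _
            rw [if_neg hpi, if_neg hpl]
          rw [this, ite_mul, one_mul, zero_mul]
        rw [Finset.sum_congr rfl hsummand, Finset.sum_ite_eq, if_pos hmem]
      rw [htail]
      by_cases hqi : q = i
      · subst hqi
        have : hadM q l q p = 0 := by
          show (if q = q then (if p = q then hsc else if p = l then hsc else 0) else _) = 0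
          rw [if_pos rfl, if_neg hpi, if_neg hpl]
        rw [this, if_neg (fun h => hpi h)]
        simp
      · by_cases hql : q = l
        · subst hql
          have : hadM i q q p = 0 := by
            show (if q = i then _ else if q = q then (if p = i then hsc else if p = q then -hsc else 0) else _) = 0
            rw [if_neg hqi, if_pos rfl, if_neg hpi, if_neg hpl]
          rw [this, if_neg (fun h => hpl h)]
          simp
        · have : hadM i l q p = if q = p then 1 else 0 := by
            show (if q = i then _ else if q = l then _ else if q = p then 1 else 0) = _
            rw [if_neg hqi, if_neg hql]
          rw [this]
          by_cases hqp : q = p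
          · rw [if_pos hqp, if_pos hqp.symm]; simp
          · rw [if_neg hqp, if_neg (fun h => hqp h.symm)]; simp

omit hil in
noncomputable def hadU : Matrix.unitaryGroup (Fin d) ℂ := ⟨hadM i l, hadM_unitary i l hil⟩

lemma hadU_mulVec_i (v : Fin d → ℂ) :
    ((hadU i l hil : Matrix (Fin d) (Fin d) ℂ).mulVec v) i = hsc * (v i + v l) := by
  show ∑ r, hadM i l i r * v r = _
  rw [sum_split i l hil]
  have htail : ∑ r ∈ (Finset.univ.erase i).erase l, hadM i l i r * v r = 0 := by
    apply Finset.sum_eq_zero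
    intro r hr
    have h1 := (Finset.mem_erase.mp hr).1
    have h2 := (Finset.mem_erase.mp (Finset.mem_erase.mp hr).2).1
    have : hadM i l i r = 0 := by
      show (if i = i then (if r = i then hsc else if r = l then hsc else 0) else _) = 0
      rw [if_pos rfl, if_neg h2, if_neg h1]
    rw [this, zero_mul]
  have h1 : hadM i l i i = hsc := by
    show (if i = i then (if i = i then hsc else _) else _) = hsc
    rw [if_pos rfl, if_pos rfl]
  have h2 : hadM i l i l = hsc := by
    show (if i = i then (if l = i then hsc else if l = l then hsc else 0) else _) = hsc
    rw [if_pos rfl, if_neg (Ne.symm hil), if_pos rfl]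
  rw [htail, h1, h2]
  ring

lemma hadU_mulVec_l (v : Fin d → ℂ) :
    ((hadU i l hil : Matrix (Fin d) (Fin d) ℂ).mulVec v) l = hsc * (v i - v l) := by
  show ∑ r, hadM i l l r * v r = _
  rw [sum_split i l hil]
  have htail : ∑ r ∈ (Finset.univ.erase i).erase l, hadM i l l r * v r = 0 := by
    apply Finset.sum_eq_zero
    intro r hr
    have h1 := (Finset.mem_erase.mp hr).1
    have h2 := (Finset.mem_erase.mp (Finset.mem_erase.mp hr).2).1
    have : hadM i l l r = 0 := by
      show (if l = i then _ else if l = l then (if r = i then hsc else if r = l then -hsc else 0) else _) = 0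
      rw [if_neg (Ne.symm hil), if_pos rfl, if_neg h2, if_neg h1]
    rw [this, zero_mul]
  have h1 : hadM i l l i = hsc := by
    show (if l = i then _ else if l = l then (if i = i then hsc else _) else _) = hsc
    rw [if_neg (Ne.symm hil), if_pos rfl, if_pos rfl]
  have h2 : hadM i l l l = -hsc := by
    show (if l = i then _ else if l = l then (if l = i then hsc else if l = l then -hsc else 0) else _) = -hsc
    rw [if_neg (Ne.symm hil), if_pos rfl, if_neg (Ne.symm hil), if_pos rfl]
  rw [htail, h1, h2]
  ring
end


section
variable {d : ℕ}
variable (μ : Measure (Matrix.unitaryGroup (Fin d) ℂ)) [IsProbabilityMeasure μ]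
  [μ.IsMulLeftInvariant] (e : Fin d → ℂ) (he : star e ⬝ᵥ e = 1)

lemma int9 {α : Type*} [MeasurableSpace α] (ν : Measure α) (f1 f2 f3 f4 f5 f6 f7 f8 f9 : α → ℂ)
    (h1 : Integrable f1 ν) (h2 : Integrable f2 ν) (h3 : Integrable f3 ν) (h4 : Integrable f4 ν)
    (h5 : Integrable f5 ν) (h6 : Integrable f6 ν) (h7 : Integrable f7 ν) (h8 : Integrable f8 ν)
    (h9 : Integrable f9 ν) :
    ∫ x, f1 x + (f2 x + (f3 x + (f4 x + (f5 x + (f6 x + (f7 x + (f8 x + f9 x))))))) ∂ν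
      = (∫ x, f1 x ∂ν) + ((∫ x, f2 x ∂ν) + ((∫ x, f3 x ∂ν) + ((∫ x, f4 x ∂ν) +
        ((∫ x, f5 x ∂ν) + ((∫ x, f6 x ∂ν) + ((∫ x, f7 x ∂ν) + ((∫ x, f8 x ∂ν) + ∫ x, f9 x ∂ν))))))) := by
  have A8 : ∫ x, f8 x + f9 x ∂ν = (∫ x, f8 x ∂ν) + ∫ x, f9 x ∂ν := integral_add h8 h9
  have A7 : ∫ x, f7 x + (f8 x + f9 x) ∂ν = (∫ x, f7 x ∂ν) + ∫ x, f8 x + f9 x ∂ν :=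
    integral_add h7 (h8.add h9)
  have A6 : ∫ x, f6 x + (f7 x + (f8 x + f9 x)) ∂ν
      = (∫ x, f6 x ∂ν) + ∫ x, f7 x + (f8 x + f9 x) ∂ν := integral_add h6 (h7.add (h8.add h9))
  have A5 : ∫ x, f5 x + (f6 x + (f7 x + (f8 x + f9 x))) ∂ν
      = (∫ x, f5 x ∂ν) + ∫ x, f6 x + (f7 x + (f8 x + f9 x)) ∂ν :=
    integral_add h5 (h6.add (h7.add (h8.add h9)))
  have A4 : ∫ x, f4 x + (f5 x + (f6 x + (f7 x + (f8 x + f9 x)))) ∂ν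
      = (∫ x, f4 x ∂ν) + ∫ x, f5 x + (f6 x + (f7 x + (f8 x + f9 x))) ∂ν :=
    integral_add h4 (h5.add (h6.add (h7.add (h8.add h9))))
  have A3 : ∫ x, f3 x + (f4 x + (f5 x + (f6 x + (f7 x + (f8 x + f9 x))))) ∂ν
      = (∫ x, f3 x ∂ν) + ∫ x, f4 x + (f5 x + (f6 x + (f7 x + (f8 x + f9 x)))) ∂ν :=
    integral_add h3 (h4.add (h5.add (h6.add (h7.add (h8.add h9)))))
  have A2 : ∫ x, f2 x + (f3 x + (f4 x + (f5 x + (f6 x + (f7 x + (f8 x + f9 x)))))) ∂ν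
      = (∫ x, f2 x ∂ν) + ∫ x, f3 x + (f4 x + (f5 x + (f6 x + (f7 x + (f8 x + f9 x))))) ∂ν :=
    integral_add h2 (h3.add (h4.add (h5.add (h6.add (h7.add (h8.add h9))))))
  have A1 : ∫ x, f1 x + (f2 x + (f3 x + (f4 x + (f5 x + (f6 x + (f7 x + (f8 x + f9 x))))))) ∂ν
      = (∫ x, f1 x ∂ν) + ∫ x, f2 x + (f3 x + (f4 x + (f5 x + (f6 x + (f7 x + (f8 x + f9 x)))))) ∂ν :=
    integral_add h1 (h2.add (h3.add (h4.add (h5.add (h6.add (h7.add (h8.add h9)))))))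
  rw [A1, A2, A3, A4, A5, A6, A7, A8]

include he in

lemma T_had (i l : Fin d) (hil : i ≠ l) :
    Tm μ e i i i i = 2 * Tm μ e i l i l := by
  classical
  set ψ : Matrix.unitaryGroup (Fin d) ℂ → Fin d → ℂ :=
    fun U => (U : Matrix (Fin d) (Fin d) ℂ).mulVec e with hψ
  have key := key_inv μ e (hadU i l hil) (fun v => v i * v i * star (v i) * star (v i))
  -- abbreviation for monomials
  set m4 : Fin d → Fin d → Fin d → Fin d → (Matrix.unitaryGroup (Fin d) ℂ → ℂ) :=
    fun a b c c' U => ψ U a * ψ U b * star (ψ U c) * star (ψ U c') with hm4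
  have him : ∀ a b c c', Integrable (m4 a b c c') μ := fun a b c c' =>
    integrable_mono4 μ e he a b c c'
  have hTm : ∀ a b c c', Tm μ e a b c c' = ∫ U, m4 a b c c' U ∂μ := fun _ _ _ _ => rfl
  have h4 : hsc ^ 4 = 4⁻¹ := by
    rw [show hsc ^ 4 = (hsc ^ 2) ^ 2 by ring, hsc_sq]; norm_num
  -- pointwise identity
  have hpt : ∀ U : Matrix.unitaryGroup (Fin d) ℂ,
      (fun v : Fin d → ℂ => v i * v i * star (v i) * star (v i))
        ((hadU i l hil : Matrix (Fin d) (Fin d) ℂ).mulVec (ψ U))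
      = (4:ℂ)⁻¹ * (m4 i i i i U + (m4 l l l l U + ((4:ℂ) * m4 i l i l U +
          ((2:ℂ) * m4 i i i l U + (m4 i i l l U + ((2:ℂ) * m4 i l i i U +
          ((2:ℂ) * m4 i l l l U + (m4 l l i i U + (2:ℂ) * m4 l l i l U)))))))) := by
    intro U
    simp only [hadU_mulVec_i i l hil (ψ U)]
    simp only [hm4, star_mul', star_add, hsc_star]
    linear_combination ((ψ U i + ψ U l) * (ψ U i + ψ U l) *
      (star (ψ U i) + star (ψ U l)) * (star (ψ U i) + star (ψ U l))) * h4
  rw [show (fun U : Matrix.unitaryGroup (Fin d) ℂ =>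
      (fun v : Fin d → ℂ => v i * v i * star (v i) * star (v i))
        ((hadU i l hil : Matrix (Fin d) (Fin d) ℂ).mulVec (ψ U))) =
      (fun U => (4:ℂ)⁻¹ * (m4 i i i i U + (m4 l l l l U + ((4:ℂ) * m4 i l i l U +
          ((2:ℂ) * m4 i i i l U + (m4 i i l l U + ((2:ℂ) * m4 i l i i U +
          ((2:ℂ) * m4 i l l l U + (m4 l l i i U + (2:ℂ) * m4 l l i l U))))))))) from funext hpt]
    at key
  rw [MeasureTheory.integral_const_mul] at key
  have expand : ∫ U, (m4 i i i i U + (m4 l l l l U + ((4:ℂ) * m4 i l i l U +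
          ((2:ℂ) * m4 i i i l U + (m4 i i l l U + ((2:ℂ) * m4 i l i i U +
          ((2:ℂ) * m4 i l l l U + (m4 l l i i U + (2:ℂ) * m4 l l i l U)))))))) ∂μ
      = Tm μ e i i i i + (Tm μ e l l l l + ((4:ℂ) * Tm μ e i l i l +
          ((2:ℂ) * Tm μ e i i i l + (Tm μ e i i l l + ((2:ℂ) * Tm μ e i l i i +
          ((2:ℂ) * Tm μ e i l l l + (Tm μ e l l i i + (2:ℂ) * Tm μ e l l i l))))))) := by
    rw [int9 μ (m4 i i i i) (m4 l l l l) (fun U => (4:ℂ) * m4 i l i l U)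
        (fun U => (2:ℂ) * m4 i i i l U) (m4 i i l l) (fun U => (2:ℂ) * m4 i l i i U)
        (fun U => (2:ℂ) * m4 i l l l U) (m4 l l i i) (fun U => (2:ℂ) * m4 l l i l U)
        (him i i i i) (him l l l l) ((him i l i l).const_mul 4) ((him i i i l).const_mul 2)
        (him i i l l) ((him i l i i).const_mul 2) ((him i l l l).const_mul 2)
        (him l l i i) ((him l l i l).const_mul 2)]
    rw [MeasureTheory.integral_const_mul, MeasureTheory.integral_const_mul,
      MeasureTheory.integral_const_mul, MeasureTheory.integral_const_mul,
      MeasureTheory.integral_const_mul]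
    rfl
  rw [expand] at key
  -- vanishing terms
  have z1 : Tm μ e i i i l = 0 := T_vanish μ e i i i l l (by simp [hil])
  have z2 : Tm μ e i i l l = 0 := T_vanish μ e i i l l l (by simp [hil])
  have z3 : Tm μ e i l i i = 0 := T_vanish μ e i l i i l (by simp [hil])
  have z4 : Tm μ e i l l l = 0 := T_vanish μ e i l l l l (by simp [hil])
  have z5 : Tm μ e l l i i = 0 := T_vanish μ e l l i i l (by simp [hil])
  have z6 : Tm μ e l l i l = 0 := T_vanish μ e l l i l l (by simp [hil])
  have hswap : Tm μ e l l l l = Tm μ e i i i i := by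
    have := T_perm μ e (Equiv.swap i l) i i i i
    rwa [Equiv.swap_apply_left] at this
  rw [z1, z2, z3, z4, z5, z6, hswap] at key
  replace key : (4:ℂ)⁻¹ * (Tm μ e i i i i + (Tm μ e i i i i + ((4:ℂ) * Tm μ e i l i l +
      ((2:ℂ) * 0 + (0 + ((2:ℂ) * 0 + ((2:ℂ) * 0 + (0 + (2:ℂ) * 0)))))))) = Tm μ e i i i i := key
  linear_combination (-2:ℂ) * key

lemma T_pair (i l i' l' : Fin d) (hil : i ≠ l) (hil' : i' ≠ l') :
    Tm μ e i l i l = Tm μ e i' l' i' l' := by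
  classical
  set τ1 := Equiv.swap i' i with hτ1
  have h1 : τ1 i' = i := Equiv.swap_apply_left i' i
  have hl'' : τ1 l' ≠ i := by
    intro h
    exact hil' (τ1.injective (h1.trans h.symm))
  set τ2 := Equiv.swap (τ1 l') l with hτ2
  have hσi : τ2 (τ1 i') = i := by
    rw [h1]
    exact Equiv.swap_apply_of_ne_of_ne (Ne.symm hl'') hil
  have hσl : τ2 (τ1 l') = l := Equiv.swap_apply_left _ _
  have hp := T_perm μ e (τ1.trans τ2) i' l' i' l'
  simp only [Equiv.trans_apply] at hp
  rw [hσi, hσl] at hp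
  exact hp

include he in
lemma T_norm : ∑ a : Fin d, ∑ b : Fin d, Tm μ e a b a b = 1 := by
  classical
  have hTm : ∀ a b : Fin d, Tm μ e a b a b = ∫ U,
      ((U : Matrix (Fin d) (Fin d) ℂ).mulVec e a) * ((U : Matrix (Fin d) (Fin d) ℂ).mulVec e b)
      * star ((U : Matrix (Fin d) (Fin d) ℂ).mulVec e a) * star ((U : Matrix (Fin d) (Fin d) ℂ).mulVec e b) ∂μ :=
    fun a b => rfl
  calc ∑ a : Fin d, ∑ b : Fin d, Tm μ e a b a b
      = ∑ a : Fin d, ∫ U, ∑ b : Fin d,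
          ((U : Matrix (Fin d) (Fin d) ℂ).mulVec e a) * ((U : Matrix (Fin d) (Fin d) ℂ).mulVec e b)
          * star ((U : Matrix (Fin d) (Fin d) ℂ).mulVec e a) * star ((U : Matrix (Fin d) (Fin d) ℂ).mulVec e b) ∂μ := by
        refine Finset.sum_congr rfl fun a _ => ?_
        refine (Finset.sum_congr rfl fun b _ => hTm a b).trans ?_
        exact (integral_finset_sum _ (fun b _ => integrable_mono4 μ e he a b a b)).symm
    _ = ∫ U, ∑ a : Fin d, ∑ b : Fin d,
          ((U : Matrix (Fin d) (Fin d) ℂ).mulVec e a) * ((U : Matrix (Fin d) (Fin d) ℂ).mulVec e b)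
          * star ((U : Matrix (Fin d) (Fin d) ℂ).mulVec e a) * star ((U : Matrix (Fin d) (Fin d) ℂ).mulVec e b) ∂μ := by
        rw [← integral_finset_sum _ (fun a _ =>
          integrable_finset_sum _ (fun b _ => integrable_mono4 μ e he a b a b))]
    _ = ∫ (_ : Matrix.unitaryGroup (Fin d) ℂ), (1:ℂ) ∂μ := by
        refine integral_congr_ae (ae_of_all μ fun U => ?_)
        have hu : ∑ a : Fin d, star ((U : Matrix (Fin d) (Fin d) ℂ).mulVec e a)
            * ((U : Matrix (Fin d) (Fin d) ℂ).mulVec e a) = 1 := psi_unit e he U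
        calc ∑ a : Fin d, ∑ b : Fin d,
            ((U : Matrix (Fin d) (Fin d) ℂ).mulVec e a) * ((U : Matrix (Fin d) (Fin d) ℂ).mulVec e b)
            * star ((U : Matrix (Fin d) (Fin d) ℂ).mulVec e a) * star ((U : Matrix (Fin d) (Fin d) ℂ).mulVec e b)
            = (∑ a : Fin d, star ((U : Matrix (Fin d) (Fin d) ℂ).mulVec e a)
                * ((U : Matrix (Fin d) (Fin d) ℂ).mulVec e a))
              * (∑ b : Fin d, star ((U : Matrix (Fin d) (Fin d) ℂ).mulVec e b)
                * ((U : Matrix (Fin d) (Fin d) ℂ).mulVec e b)) := by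
              rw [Finset.sum_mul_sum]
              refine Finset.sum_congr rfl fun a _ => Finset.sum_congr rfl fun b _ => by ring
          _ = 1 := by rw [hu, one_mul]
    _ = 1 := by simp

include he in
lemma T_offdiag (i l : Fin d) (hil : i ≠ l) :
    Tm μ e i l i l = ((d:ℂ) * ((d:ℂ) + 1))⁻¹ := by
  classical
  have hd1 : 1 ≤ d := Nat.one_le_iff_ne_zero.mpr (by rintro rfl; exact i.elim0)
  have hC : ∀ a b : Fin d, a ≠ b → Tm μ e a b a b = Tm μ e i l i l :=
    fun a b hab => T_pair μ e a b i l hab hil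
  have hD : ∀ a : Fin d, Tm μ e a a a a = 2 * Tm μ e i l i l := by
    intro a
    by_cases hai : a = i
    · have hal : a ≠ l := hai ▸ hil
      rw [T_had μ e he a l hal, hC a l hal]
    · rw [T_had μ e he a i hai, hC a i hai]
  have hnorm := T_norm μ e he
  have hsum : ∀ a : Fin d, ∑ b : Fin d, Tm μ e a b a b
      = 2 * Tm μ e i l i l + ((d:ℂ) - 1) * Tm μ e i l i l := by
    intro a
    rw [← Finset.sum_erase_add Finset.univ _ (Finset.mem_univ a), hD a]
    rw [Finset.sum_congr rfl (fun b hb => hC a b (Ne.symm (Finset.mem_erase.mp hb).1))]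
    rw [Finset.sum_const, Finset.card_erase_of_mem (Finset.mem_univ a), Finset.card_univ,
      Fintype.card_fin, nsmul_eq_mul]
    push_cast [Nat.cast_sub hd1]
    ring
  rw [Finset.sum_congr rfl (fun a _ => hsum a), Finset.sum_const, Finset.card_univ,
    Fintype.card_fin, nsmul_eq_mul] at hnorm
  have hd0 : (d:ℂ) ≠ 0 := Nat.cast_ne_zero.mpr (by omega)
  have hd10 : (d:ℂ) + 1 ≠ 0 := by
    intro h
    have h' : (d:ℝ) + 1 = 0 := by exact_mod_cast congrArg Complex.re h
    have : (0:ℝ) ≤ (d:ℝ) := Nat.cast_nonneg d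
    linarith
  refine eq_inv_of_mul_eq_one_left ?_
  linear_combination hnorm

include he in
lemma T_formula (i l j k : Fin d) :
    Tm μ e i l j k = ((if i = j then (1:ℂ) else 0) * (if l = k then 1 else 0)
      + (if i = k then (1:ℂ) else 0) * (if l = j then 1 else 0)) * ((d:ℂ) * ((d:ℂ) + 1))⁻¹ := by
  classical
  by_cases h1 : i = j ∧ l = k
  · obtain ⟨hij, hlk⟩ := h1
    by_cases h2 : i = k ∧ l = j
    · obtain ⟨hik, hlj⟩ := h2
      have hli : l = i := hlk.trans hik.symm
      subst hij; subst hik; subst hli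
      rw [if_pos rfl]
      by_cases hb : ∀ b : Fin d, b = l
      · -- d = 1
        have hd1 : d = 1 := by
          have : Fintype.card (Fin d) = 1 := Fintype.card_eq_one_iff.mpr ⟨l, hb⟩
          simpa using this
        subst hd1
        have huniv : (Finset.univ : Finset (Fin 1)) = {l} :=
          Finset.eq_singleton_iff_unique_mem.mpr ⟨Finset.mem_univ l, fun b _ => hb b⟩
        have hT1 : Tm μ e l l l l = 1 := by
          have hpt : ∀ U : Matrix.unitaryGroup (Fin 1) ℂ,
              ((U : Matrix (Fin 1) (Fin 1) ℂ).mulVec e l) * ((U : Matrix (Fin 1) (Fin 1) ℂ).mulVec e l)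
              * star ((U : Matrix (Fin 1) (Fin 1) ℂ).mulVec e l)
              * star ((U : Matrix (Fin 1) (Fin 1) ℂ).mulVec e l) = 1 := by
            intro U
            have hu : ∑ a : Fin 1, star ((U : Matrix (Fin 1) (Fin 1) ℂ).mulVec e a)
                * ((U : Matrix (Fin 1) (Fin 1) ℂ).mulVec e a) = 1 := psi_unit e he U
            rw [huniv, Finset.sum_singleton] at hu
            linear_combination (((U : Matrix (Fin 1) (Fin 1) ℂ).mulVec e l)
              * star ((U : Matrix (Fin 1) (Fin 1) ℂ).mulVec e l) + 1) * hu
          have h1 : Tm μ e l l l l = ∫ (_ : Matrix.unitaryGroup (Fin 1) ℂ), (1:ℂ) ∂μ :=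
            integral_congr_ae (ae_of_all μ hpt)
          rw [h1]
          simp
        rw [hT1, Nat.cast_one]
        norm_num
      · push_neg at hb
        obtain ⟨b, hbl⟩ := hb
        rw [T_had μ e he l b (Ne.symm hbl), T_offdiag μ e he l b (Ne.symm hbl)]
        ring
    · have hil : i ≠ l := fun h => h2 ⟨h.trans hlk, h.symm.trans hij⟩
      subst hij; subst hlk
      rw [T_offdiag μ e he i l hil, if_pos rfl, if_pos rfl, if_neg hil, if_neg (Ne.symm hil)]
      ring
  · by_cases h2 : i = k ∧ l = j
    · obtain ⟨hik, hlj⟩ := h2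
      have hil : i ≠ l := fun h => h1 ⟨h.trans hlj, h.symm.trans hik⟩
      subst hik; subst hlj
      have hsw : Tm μ e i l l i = Tm μ e i l i l := by
        unfold Tm
        congr 1
        ext U
        ring
      rw [hsw, T_offdiag μ e he i l hil, if_neg hil, if_neg (Ne.symm hil), if_pos rfl, if_pos rfl]
      ring
    · obtain ⟨m, hm⟩ := exists_count_ne i l j k h1 h2
      rw [T_vanish μ e i l j k m hm]
      have p1 : (if i = j then (1:ℂ) else 0) * (if l = k then 1 else 0) = 0 := by
        rcases not_and_or.mp h1 with h | h
        · rw [if_neg h, zero_mul]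
        · rw [if_neg h, mul_zero]
      have p2 : (if i = k then (1:ℂ) else 0) * (if l = j then 1 else 0) = 0 := by
        rcases not_and_or.mp h2 with h | h
        · rw [if_neg h, zero_mul]
        · rw [if_neg h, mul_zero]
      rw [p1, p2]
      ring

end

/-- For a quantum state `ρ` on `ℂ^d`, the first moment of the
uniform-POVM outcome satisfies `d · ∫ ⟪U·e, ρ(U·e)⟫ · |U·e⟩⟨U·e| dU = (ρ + 1)/(d+1)`,
the integral being over the Haar probability measure on the unitary group. -/
theorem uniform_povm_first_moment
    (d : ℕ) (hd : 1 ≤ d)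
    (μ : Measure (Matrix.unitaryGroup (Fin d) ℂ)) [IsProbabilityMeasure μ]
    [μ.IsMulLeftInvariant]
    (e : Fin d → ℂ) (he : star e ⬝ᵥ e = 1)
    (ρ : Matrix (Fin d) (Fin d) ℂ) (hρ : ρ.PosSemidef) (htr : ρ.trace = 1) :
    (Matrix.of fun i j : Fin d =>
        (d : ℂ) *
          ∫ U, (star ((U : Matrix (Fin d) (Fin d) ℂ).mulVec e) ⬝ᵥ
                  ρ.mulVec ((U : Matrix (Fin d) (Fin d) ℂ).mulVec e)) *
              ((U : Matrix (Fin d) (Fin d) ℂ).mulVec e i *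
                star ((U : Matrix (Fin d) (Fin d) ℂ).mulVec e j)) ∂μ)
      = ((d : ℂ) + 1)⁻¹ • (ρ + 1) := by
  classical
  set A : ℂ := ((d:ℂ) * ((d:ℂ) + 1))⁻¹ with hA
  have hd0 : (d:ℂ) ≠ 0 := Nat.cast_ne_zero.mpr (by omega)
  have hd10 : (d:ℂ) + 1 ≠ 0 := by
    intro h
    have h' : (d:ℝ) + 1 = 0 := by exact_mod_cast congrArg Complex.re h
    have : (0:ℝ) ≤ (d:ℝ) := Nat.cast_nonneg d
    linarith
  have htr' : ∑ k : Fin d, ρ k k = 1 := htr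
  ext i j
  rw [Matrix.of_apply, Matrix.smul_apply, Matrix.add_apply, Matrix.one_apply]
  -- rewrite the integrand as a double sum of monomials
  have hint : (fun U : Matrix.unitaryGroup (Fin d) ℂ =>
      (star ((U : Matrix (Fin d) (Fin d) ℂ).mulVec e) ⬝ᵥ
        ρ.mulVec ((U : Matrix (Fin d) (Fin d) ℂ).mulVec e)) *
        ((U : Matrix (Fin d) (Fin d) ℂ).mulVec e i * star ((U : Matrix (Fin d) (Fin d) ℂ).mulVec e j)))
      = fun U : Matrix.unitaryGroup (Fin d) ℂ => ∑ k : Fin d, ∑ l : Fin d,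
          ρ k l * (((U : Matrix (Fin d) (Fin d) ℂ).mulVec e i) * ((U : Matrix (Fin d) (Fin d) ℂ).mulVec e l)
            * star ((U : Matrix (Fin d) (Fin d) ℂ).mulVec e j) * star ((U : Matrix (Fin d) (Fin d) ℂ).mulVec e k)) := by
    funext U
    show (∑ k : Fin d, star ((U : Matrix (Fin d) (Fin d) ℂ).mulVec e k)
        * (∑ l : Fin d, ρ k l * ((U : Matrix (Fin d) (Fin d) ℂ).mulVec e l)))
        * (((U : Matrix (Fin d) (Fin d) ℂ).mulVec e i) * star ((U : Matrix (Fin d) (Fin d) ℂ).mulVec e j)) = _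
    rw [Finset.sum_mul]
    refine Finset.sum_congr rfl fun k _ => ?_
    rw [Finset.mul_sum, Finset.sum_mul]
    refine Finset.sum_congr rfl fun l _ => by ring
  rw [hint]
  rw [integral_finset_sum _ (fun k _ => integrable_finset_sum _
    (fun l _ => (integrable_mono4 μ e he i l j k).const_mul (ρ k l)))]
  rw [Finset.sum_congr rfl (fun k _ => integral_finset_sum _
    (fun l _ => (integrable_mono4 μ e he i l j k).const_mul (ρ k l)))]
  have hval : ∀ k l : Fin d, ∫ U, ρ k l * (((U : Matrix (Fin d) (Fin d) ℂ).mulVec e i)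
      * ((U : Matrix (Fin d) (Fin d) ℂ).mulVec e l)
      * star ((U : Matrix (Fin d) (Fin d) ℂ).mulVec e j) * star ((U : Matrix (Fin d) (Fin d) ℂ).mulVec e k)) ∂μ
      = ρ k l * (((if i = j then (1:ℂ) else 0) * (if l = k then 1 else 0)
        + (if i = k then (1:ℂ) else 0) * (if l = j then 1 else 0)) * A) := by
    intro k l
    rw [MeasureTheory.integral_const_mul]
    congr 1
    exact T_formula μ e he i l j k
  rw [Finset.sum_congr rfl (fun k _ => Finset.sum_congr rfl (fun l _ => hval k l))]
  -- evaluate the double sum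
  have hsum1 : ∀ k : Fin d, ∑ l : Fin d, ρ k l * (((if i = j then (1:ℂ) else 0) * (if l = k then 1 else 0)
        + (if i = k then (1:ℂ) else 0) * (if l = j then 1 else 0)) * A)
      = ρ k k * (if i = j then (1:ℂ) else 0) * A + ρ k j * (if i = k then (1:ℂ) else 0) * A := by
    intro k
    have hterm : ∀ l : Fin d, ρ k l * (((if i = j then (1:ℂ) else 0) * (if l = k then 1 else 0)
        + (if i = k then (1:ℂ) else 0) * (if l = j then 1 else 0)) * A)
        = (if l = k then ρ k l * (if i = j then (1:ℂ) else 0) * A else 0)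
          + (if l = j then ρ k l * (if i = k then (1:ℂ) else 0) * A else 0) := by
      intro l
      split_ifs <;> ring
    rw [Finset.sum_congr rfl (fun l _ => hterm l), Finset.sum_add_distrib,
      Finset.sum_ite_eq' Finset.univ k (fun l => ρ k l * (if i = j then (1:ℂ) else 0) * A),
      Finset.sum_ite_eq' Finset.univ j (fun l => ρ k l * (if i = k then (1:ℂ) else 0) * A)]
    simp
  rw [Finset.sum_congr rfl (fun k _ => hsum1 k), Finset.sum_add_distrib]
  have hsum2 : ∑ k : Fin d, ρ k k * (if i = j then (1:ℂ) else 0) * A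
      = (if i = j then (1:ℂ) else 0) * A := by
    rw [← Finset.sum_mul, ← Finset.sum_mul, htr', one_mul]
  have hsum3 : ∑ k : Fin d, ρ k j * (if i = k then (1:ℂ) else 0) * A = ρ i j * A := by
    have hterm : ∀ k : Fin d, ρ k j * (if i = k then (1:ℂ) else 0) * A
        = if i = k then ρ k j * A else 0 := by
      intro k; split_ifs <;> ring
    rw [Finset.sum_congr rfl (fun k _ => hterm k),
      Finset.sum_ite_eq Finset.univ i (fun k => ρ k j * A)]
    simp
  rw [hsum2, hsum3]
  -- final arithmetic
  have hA1 : (d:ℂ) * A = ((d:ℂ) + 1)⁻¹ := by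
    rw [hA]
    field_simp
  by_cases hij : i = j
  · rw [if_pos hij, smul_eq_mul]
    linear_combination (1 + ρ i j) * hA1
  · rw [if_neg hij, smul_eq_mul]
    linear_combination ρ i j * hA1
end

section
/- Let d ≥ 1, n ≥ 2, and let Δ̂₁, …, Δ̂ₙ be i.i.d. random matrices in Matrix (Fin d) (Fin d) ℂ on a probability space, almost surely Hermitian, with all entries of Δ̂ and of the Kronecker product Δ̂ ⊗ Δ̂ integrable. Let m = E[Δ̂] (entrywise expectation), S = E[Δ̂ ⊗ Δ̂], and define the U-statistic X̄ = (1/Nat.choose n 2) · Σ_{i < j} Re(tr(Δ̂ᵢ · Δ̂ⱼ)). Then E[X̄] = Re(tr(m²)), and Var[X̄] = (6 · Nat.choose n 3 / (Nat.choose n 2)²) · ( Re(tr(S · (m ⊗ m))) − (Re tr(m²))² ) + (1/Nat.choose n 2) · ( Re(tr(S²)) − (Re tr(m²))² ). -/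
open MeasureTheory Matrix ProbabilityTheory
open scoped Kronecker

/-- The entrywise expectation of a matrix-valued random variable. -/
noncomputable def matMean (d : ℕ) {Ω : Type*} [MeasurableSpace Ω] (P : Measure Ω)
    (f : Ω → Matrix (Fin d) (Fin d) ℂ) : Matrix (Fin d) (Fin d) ℂ :=
  Matrix.of fun a b => ∫ ω, f ω a b ∂P

/-- The entrywise expectation of the Kronecker square of a matrix-valued random variable. -/
noncomputable def matMeanKron (d : ℕ) {Ω : Type*} [MeasurableSpace Ω] (P : Measure Ω)
    (f : Ω → Matrix (Fin d) (Fin d) ℂ) : Matrix (Fin d × Fin d) (Fin d × Fin d) ℂ :=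
  Matrix.of fun p q => ∫ ω, (f ω ⊗ₖ f ω) p q ∂P

/-- The U-statistic `X̄ = (1/C(n,2)) Σ_{i<j} Re tr(Δ̂ᵢ Δ̂ⱼ)`. -/

lemma indep_integral_mul_complex {X Y : Ω → ℂ} (h : IndepFun X Y P)
    (hX : Integrable X P) (hY : Integrable Y P) :
    ∫ ω, X ω * Y ω ∂P = (∫ ω, X ω ∂P) * ∫ ω, Y ω ∂P := by
  have hXr : Integrable (fun ω => (X ω).re) P := hX.re
  have hXi : Integrable (fun ω => (X ω).im) P := hX.im
  have hYr : Integrable (fun ω => (Y ω).re) P := hY.re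
  have hYi : Integrable (fun ω => (Y ω).im) P := hY.im
  have irr : IndepFun (fun ω => (X ω).re) (fun ω => (Y ω).re) P :=
    h.comp Complex.measurable_re Complex.measurable_re
  have iri : IndepFun (fun ω => (X ω).re) (fun ω => (Y ω).im) P :=
    h.comp Complex.measurable_re Complex.measurable_im
  have iir : IndepFun (fun ω => (X ω).im) (fun ω => (Y ω).re) P :=
    h.comp Complex.measurable_im Complex.measurable_re
  have iii : IndepFun (fun ω => (X ω).im) (fun ω => (Y ω).im) P :=
    h.comp Complex.measurable_im Complex.measurable_im
  have Prr : Integrable (fun ω => (X ω).re * (Y ω).re) P := irr.integrable_mul hXr hYr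
  have Pri : Integrable (fun ω => (X ω).re * (Y ω).im) P := iri.integrable_mul hXr hYi
  have Pir : Integrable (fun ω => (X ω).im * (Y ω).re) P := iir.integrable_mul hXi hYr
  have Pii : Integrable (fun ω => (X ω).im * (Y ω).im) P := iii.integrable_mul hXi hYi
  have Irr : ∫ ω, (X ω).re * (Y ω).re ∂P = (∫ ω, (X ω).re ∂P) * ∫ ω, (Y ω).re ∂P :=
    irr.integral_mul_eq_mul_integral hXr.1 hYr.1
  have Iri : ∫ ω, (X ω).re * (Y ω).im ∂P = (∫ ω, (X ω).re ∂P) * ∫ ω, (Y ω).im ∂P :=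
    iri.integral_mul_eq_mul_integral hXr.1 hYi.1
  have Iir : ∫ ω, (X ω).im * (Y ω).re ∂P = (∫ ω, (X ω).im ∂P) * ∫ ω, (Y ω).re ∂P :=
    iir.integral_mul_eq_mul_integral hXi.1 hYr.1
  have Iii : ∫ ω, (X ω).im * (Y ω).im ∂P = (∫ ω, (X ω).im ∂P) * ∫ ω, (Y ω).im ∂P :=
    iii.integral_mul_eq_mul_integral hXi.1 hYi.1
  have hXY : Integrable (fun ω => X ω * Y ω) P := h.integrable_mul hX hY
  have eXr : (∫ ω, X ω ∂P).re = ∫ ω, (X ω).re ∂P := by simpa using (integral_re hX).symm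
  have eXi : (∫ ω, X ω ∂P).im = ∫ ω, (X ω).im ∂P := by simpa using (integral_im hX).symm
  have eYr : (∫ ω, Y ω ∂P).re = ∫ ω, (Y ω).re ∂P := by simpa using (integral_re hY).symm
  have eYi : (∫ ω, Y ω ∂P).im = ∫ ω, (Y ω).im ∂P := by simpa using (integral_im hY).symm
  apply Complex.ext
  · have h1 : (∫ ω, X ω * Y ω ∂P).re = ∫ ω, (X ω * Y ω).re ∂P := by
      simpa using (integral_re hXY).symm
    rw [h1]
    simp only [Complex.mul_re]
    rw [integral_sub Prr Pii, Irr, Iii, eXr, eXi, eYr, eYi]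
  · have h1 : (∫ ω, X ω * Y ω ∂P).im = ∫ ω, (X ω * Y ω).im ∂P := by
      simpa using (integral_im hXY).symm
    rw [h1]
    simp only [Complex.mul_im]
    rw [integral_add Pri Pir, Iri, Iir, eXr, eXi, eYr, eYi]

section ProbHelpers

variable {d n : ℕ} {Ω : Type*} [MeasurableSpace Ω] {P : Measure Ω}
  {Δ : Fin n → Ω → Matrix (Fin d) (Fin d) ℂ}

lemma entry_meas (a b : Fin d) : Measurable (fun A : Matrix (Fin d) (Fin d) ℂ => A a b) :=
  (measurable_pi_apply b).comp (measurable_pi_apply a)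

lemma kentry_meas (p q : Fin d × Fin d) :
    Measurable (fun A : Matrix (Fin d) (Fin d) ℂ => (A ⊗ₖ A) p q) := by
  have : (fun A : Matrix (Fin d) (Fin d) ℂ => (A ⊗ₖ A) p q)
      = fun A => A p.1 q.1 * A p.2 q.2 := by
    funext A; simp [Matrix.kroneckerMap_apply]
  rw [this]; exact (entry_meas _ _).mul (entry_meas _ _)

lemma pair_mul (hmeas : ∀ i, Measurable (Δ i))
    (hindep : iIndepFun Δ P)
    {i j : Fin n} (hij : i ≠ j) {φ ψ : Matrix (Fin d) (Fin d) ℂ → ℂ}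
    (hφ : Measurable φ) (hψ : Measurable ψ)
    (h1 : Integrable (fun ω => φ (Δ i ω)) P) (h2 : Integrable (fun ω => ψ (Δ j ω)) P) :
    Integrable (fun ω => φ (Δ i ω) * ψ (Δ j ω)) P ∧
      ∫ ω, φ (Δ i ω) * ψ (Δ j ω) ∂P = (∫ ω, φ (Δ i ω) ∂P) * ∫ ω, ψ (Δ j ω) ∂P := by
  have hind : IndepFun (fun ω => φ (Δ i ω)) (fun ω => ψ (Δ j ω)) P :=
    (hindep.indepFun hij).comp hφ hψ
  exact ⟨hind.integrable_mul h1 h2, indep_integral_mul_complex hind h1 h2⟩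

lemma triple_mul (hmeas : ∀ i, Measurable (Δ i))
    (hindep : iIndepFun Δ P)
    {i j k : Fin n} (hij : i ≠ j) (hik : i ≠ k) (hjk : j ≠ k)
    {φ ψ χ : Matrix (Fin d) (Fin d) ℂ → ℂ}
    (hφ : Measurable φ) (hψ : Measurable ψ) (hχ : Measurable χ)
    (h1 : Integrable (fun ω => φ (Δ i ω)) P) (h2 : Integrable (fun ω => ψ (Δ j ω)) P)
    (h3 : Integrable (fun ω => χ (Δ k ω)) P) :
    Integrable (fun ω => φ (Δ i ω) * (ψ (Δ j ω) * χ (Δ k ω))) P ∧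
      ∫ ω, φ (Δ i ω) * (ψ (Δ j ω) * χ (Δ k ω)) ∂P
        = (∫ ω, φ (Δ i ω) ∂P) * ((∫ ω, ψ (Δ j ω) ∂P) * ∫ ω, χ (Δ k ω) ∂P) := by
  have hjk' : IndepFun (fun ω => ψ (Δ j ω)) (fun ω => χ (Δ k ω)) P :=
    (hindep.indepFun hjk).comp hψ hχ
  have hYZ_int : Integrable (fun ω => ψ (Δ j ω) * χ (Δ k ω)) P := hjk'.integrable_mul h2 h3
  have hYZ_eq := indep_integral_mul_complex hjk' h2 h3
  have pairind : IndepFun (fun ω => (Δ j ω, Δ k ω)) (Δ i) P :=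
    hindep.indepFun_prodMk hmeas j k i hij.symm hik.symm
  have hmix : IndepFun (fun ω => ψ (Δ j ω) * χ (Δ k ω)) (fun ω => φ (Δ i ω)) P :=
    pairind.comp ((hψ.comp measurable_fst).mul (hχ.comp measurable_snd)) hφ
  refine ⟨hmix.symm.integrable_mul h1 hYZ_int, ?_⟩
  rw [indep_integral_mul_complex hmix.symm h1 hYZ_int, hYZ_eq]

lemma trace_expand {m : Type*} [Fintype m] (A B : Matrix m m ℂ) :
    (A * B).trace = ∑ x : m × m, A x.1 x.2 * B x.2 x.1 := by
  rw [Fintype.sum_prod_type]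
  simp [Matrix.trace, Matrix.diag, Matrix.mul_apply]

lemma traceInt_pair (hmeas : ∀ i, Measurable (Δ i))
    (hindep : iIndepFun Δ P)
    (hint1 : ∀ (i : Fin n) (a b : Fin d), Integrable (fun ω => Δ i ω a b) P)
    {i j : Fin n} (hij : i ≠ j) :
    Integrable (fun ω => (Δ i ω * Δ j ω).trace) P ∧
      ∫ ω, (Δ i ω * Δ j ω).trace ∂P = (matMean d P (Δ i) * matMean d P (Δ j)).trace := by
  have key : ∀ x : Fin d × Fin d,
      Integrable (fun ω => Δ i ω x.1 x.2 * Δ j ω x.2 x.1) P ∧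
      ∫ ω, Δ i ω x.1 x.2 * Δ j ω x.2 x.1 ∂P
        = (∫ ω, Δ i ω x.1 x.2 ∂P) * ∫ ω, Δ j ω x.2 x.1 ∂P := fun x =>
    pair_mul hmeas hindep hij (entry_meas x.1 x.2) (entry_meas x.2 x.1)
      (hint1 i x.1 x.2) (hint1 j x.2 x.1)
  have hfe : (fun ω => (Δ i ω * Δ j ω).trace)
      = fun ω => ∑ x : Fin d × Fin d, Δ i ω x.1 x.2 * Δ j ω x.2 x.1 := by
    funext ω; exact trace_expand _ _
  constructor
  · rw [hfe]; exact integrable_finset_sum _ fun x _ => (key x).1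
  · rw [hfe, integral_finset_sum _ fun x _ => (key x).1, trace_expand]
    exact Finset.sum_congr rfl fun x _ => (key x).2

lemma traceInt_two_kron (hmeas : ∀ i, Measurable (Δ i))
    (hindep : iIndepFun Δ P)
    (hint2 : ∀ (i : Fin n) (p q : Fin d × Fin d), Integrable (fun ω => (Δ i ω ⊗ₖ Δ i ω) p q) P)
    {i j : Fin n} (hij : i ≠ j) :
    Integrable (fun ω => ((Δ i ω ⊗ₖ Δ i ω) * (Δ j ω ⊗ₖ Δ j ω)).trace) P ∧
      ∫ ω, ((Δ i ω ⊗ₖ Δ i ω) * (Δ j ω ⊗ₖ Δ j ω)).trace ∂P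
        = (matMeanKron d P (Δ i) * matMeanKron d P (Δ j)).trace := by
  have key : ∀ x : (Fin d × Fin d) × (Fin d × Fin d),
      Integrable (fun ω => (Δ i ω ⊗ₖ Δ i ω) x.1 x.2 * (Δ j ω ⊗ₖ Δ j ω) x.2 x.1) P ∧
      ∫ ω, (Δ i ω ⊗ₖ Δ i ω) x.1 x.2 * (Δ j ω ⊗ₖ Δ j ω) x.2 x.1 ∂P
        = (∫ ω, (Δ i ω ⊗ₖ Δ i ω) x.1 x.2 ∂P) * ∫ ω, (Δ j ω ⊗ₖ Δ j ω) x.2 x.1 ∂P := fun x =>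
    pair_mul hmeas hindep hij (kentry_meas x.1 x.2) (kentry_meas x.2 x.1)
      (hint2 i x.1 x.2) (hint2 j x.2 x.1)
  have hfe : (fun ω => ((Δ i ω ⊗ₖ Δ i ω) * (Δ j ω ⊗ₖ Δ j ω)).trace)
      = fun ω => ∑ x : (Fin d × Fin d) × (Fin d × Fin d),
          (Δ i ω ⊗ₖ Δ i ω) x.1 x.2 * (Δ j ω ⊗ₖ Δ j ω) x.2 x.1 := by
    funext ω; exact trace_expand _ _
  constructor
  · rw [hfe]; exact integrable_finset_sum _ fun x _ => (key x).1
  · rw [hfe, integral_finset_sum _ fun x _ => (key x).1, trace_expand]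
    exact Finset.sum_congr rfl fun x _ => (key x).2

lemma traceInt_triple (hmeas : ∀ i, Measurable (Δ i))
    (hindep : iIndepFun Δ P)
    (hint1 : ∀ (i : Fin n) (a b : Fin d), Integrable (fun ω => Δ i ω a b) P)
    (hint2 : ∀ (i : Fin n) (p q : Fin d × Fin d), Integrable (fun ω => (Δ i ω ⊗ₖ Δ i ω) p q) P)
    {i j k : Fin n} (hij : i ≠ j) (hik : i ≠ k) (hjk : j ≠ k) :
    Integrable (fun ω => ((Δ i ω ⊗ₖ Δ i ω) * (Δ j ω ⊗ₖ Δ k ω)).trace) P ∧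
      ∫ ω, ((Δ i ω ⊗ₖ Δ i ω) * (Δ j ω ⊗ₖ Δ k ω)).trace ∂P
        = (matMeanKron d P (Δ i) * (matMean d P (Δ j) ⊗ₖ matMean d P (Δ k))).trace := by
  have key : ∀ x : (Fin d × Fin d) × (Fin d × Fin d),
      Integrable (fun ω => (Δ i ω ⊗ₖ Δ i ω) x.1 x.2
          * (Δ j ω x.2.1 x.1.1 * Δ k ω x.2.2 x.1.2)) P ∧
      ∫ ω, (Δ i ω ⊗ₖ Δ i ω) x.1 x.2 * (Δ j ω x.2.1 x.1.1 * Δ k ω x.2.2 x.1.2) ∂P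
        = (∫ ω, (Δ i ω ⊗ₖ Δ i ω) x.1 x.2 ∂P)
          * ((∫ ω, Δ j ω x.2.1 x.1.1 ∂P) * ∫ ω, Δ k ω x.2.2 x.1.2 ∂P) := fun x =>
    triple_mul (φ := fun A => (A ⊗ₖ A) x.1 x.2) (ψ := fun A => A x.2.1 x.1.1)
      (χ := fun A => A x.2.2 x.1.2) hmeas hindep hij hik hjk (kentry_meas x.1 x.2)
      (entry_meas x.2.1 x.1.1) (entry_meas x.2.2 x.1.2)
      (hint2 i x.1 x.2) (hint1 j x.2.1 x.1.1) (hint1 k x.2.2 x.1.2)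
  have hfe : (fun ω => ((Δ i ω ⊗ₖ Δ i ω) * (Δ j ω ⊗ₖ Δ k ω)).trace)
      = fun ω => ∑ x : (Fin d × Fin d) × (Fin d × Fin d),
          (Δ i ω ⊗ₖ Δ i ω) x.1 x.2 * (Δ j ω x.2.1 x.1.1 * Δ k ω x.2.2 x.1.2) := by
    funext ω; rw [trace_expand]
    exact Finset.sum_congr rfl fun x _ => by simp [Matrix.kroneckerMap_apply]
  constructor
  · rw [hfe]; exact integrable_finset_sum _ fun x _ => (key x).1
  · rw [hfe, integral_finset_sum _ fun x _ => (key x).1, trace_expand]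
    refine Finset.sum_congr rfl fun x _ => ?_
    rw [(key x).2]
    simp [Matrix.kroneckerMap_apply, matMean, matMeanKron]

lemma trace_mul_im_zero {A B : Matrix (Fin d) (Fin d) ℂ}
    (hA : A.IsHermitian) (hB : B.IsHermitian) : ((A * B).trace).im = 0 := by
  have h : (starRingEnd ℂ) ((A * B).trace) = (A * B).trace := by
    have := Matrix.trace_conjTranspose (A * B)
    rw [Matrix.conjTranspose_mul, hA.eq, hB.eq, Matrix.trace_mul_comm] at this
    exact this.symm
  exact Complex.conj_eq_iff_im.mp h

lemma prod_re_trace {A B C D : Matrix (Fin d) (Fin d) ℂ}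
    (h1 : ((A * B).trace).im = 0) (h2 : ((C * D).trace).im = 0) :
    ((A * B).trace).re * ((C * D).trace).re = (((A ⊗ₖ C) * (B ⊗ₖ D)).trace).re := by
  have h : ((A ⊗ₖ C) * (B ⊗ₖ D)).trace = (A * B).trace * (C * D).trace := by
    rw [← Matrix.mul_kronecker_mul, Matrix.trace_kronecker]
  rw [h, Complex.mul_re, h1, h2]; ring

lemma hInt (hmeas : ∀ i, Measurable (Δ i))
    (hindep : iIndepFun Δ P)
    (hint1 : ∀ (i : Fin n) (a b : Fin d), Integrable (fun ω => Δ i ω a b) P)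
    {i j : Fin n} (hij : i ≠ j) :
    Integrable (fun ω => ((Δ i ω * Δ j ω).trace).re) P ∧
      ∫ ω, ((Δ i ω * Δ j ω).trace).re ∂P
        = ((matMean d P (Δ i) * matMean d P (Δ j)).trace).re := by
  obtain ⟨h1, h2⟩ := traceInt_pair hmeas hindep hint1 hij
  refine ⟨by simpa using h1.re, ?_⟩
  have h3 := integral_re h1
  simpa [h2] using h3

lemma caseOne (hmeas : ∀ i, Measurable (Δ i))
    (hindep : iIndepFun Δ P)
    (hherm : ∀ i, ∀ᵐ ω ∂P, (Δ i ω).IsHermitian)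
    (hint1 : ∀ (i : Fin n) (a b : Fin d), Integrable (fun ω => Δ i ω a b) P)
    (hint2 : ∀ (i : Fin n) (p q : Fin d × Fin d), Integrable (fun ω => (Δ i ω ⊗ₖ Δ i ω) p q) P)
    {s a b : Fin n} (hsa : s ≠ a) (hsb : s ≠ b) (hab : a ≠ b) :
    Integrable (fun ω => ((Δ s ω * Δ a ω).trace).re * ((Δ s ω * Δ b ω).trace).re) P ∧
      ∫ ω, ((Δ s ω * Δ a ω).trace).re * ((Δ s ω * Δ b ω).trace).re ∂P
        = ((matMeanKron d P (Δ s) * (matMean d P (Δ a) ⊗ₖ matMean d P (Δ b))).trace).re := by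
  obtain ⟨h1, h2⟩ := traceInt_triple hmeas hindep hint1 hint2 hsa hsb hab
  have hae : (fun ω => (((Δ s ω ⊗ₖ Δ s ω) * (Δ a ω ⊗ₖ Δ b ω)).trace).re)
      =ᵐ[P] fun ω => ((Δ s ω * Δ a ω).trace).re * ((Δ s ω * Δ b ω).trace).re := by
    filter_upwards [hherm s, hherm a, hherm b] with ω hh1 hh2 hh3
    exact (prod_re_trace (trace_mul_im_zero hh1 hh2) (trace_mul_im_zero hh1 hh3)).symm
  refine ⟨Integrable.congr (by simpa using h1.re) hae, ?_⟩
  rw [← integral_congr_ae hae]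
  have h3 := integral_re h1
  simpa [h2] using h3

lemma caseTwo (hmeas : ∀ i, Measurable (Δ i))
    (hindep : iIndepFun Δ P)
    (hherm : ∀ i, ∀ᵐ ω ∂P, (Δ i ω).IsHermitian)
    (hint2 : ∀ (i : Fin n) (p q : Fin d × Fin d), Integrable (fun ω => (Δ i ω ⊗ₖ Δ i ω) p q) P)
    {i j : Fin n} (hij : i ≠ j) :
    Integrable (fun ω => ((Δ i ω * Δ j ω).trace).re * ((Δ i ω * Δ j ω).trace).re) P ∧
      ∫ ω, ((Δ i ω * Δ j ω).trace).re * ((Δ i ω * Δ j ω).trace).re ∂P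
        = ((matMeanKron d P (Δ i) * matMeanKron d P (Δ j)).trace).re := by
  obtain ⟨h1, h2⟩ := traceInt_two_kron hmeas hindep hint2 hij
  have hae : (fun ω => (((Δ i ω ⊗ₖ Δ i ω) * (Δ j ω ⊗ₖ Δ j ω)).trace).re)
      =ᵐ[P] fun ω => ((Δ i ω * Δ j ω).trace).re * ((Δ i ω * Δ j ω).trace).re := by
    filter_upwards [hherm i, hherm j] with ω hh1 hh2
    exact (prod_re_trace (trace_mul_im_zero hh1 hh2) (trace_mul_im_zero hh1 hh2)).symm
  refine ⟨Integrable.congr (by simpa using h1.re) hae, ?_⟩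
  rw [← integral_congr_ae hae]
  have h3 := integral_re h1
  simpa [h2] using h3

lemma trace_re_meas' : Measurable (fun x : Matrix (Fin d) (Fin d) ℂ × Matrix (Fin d) (Fin d) ℂ
    => ((x.1 * x.2).trace).re) := by
  apply Complex.measurable_re.comp
  have : (fun x : Matrix (Fin d) (Fin d) ℂ × Matrix (Fin d) (Fin d) ℂ => (x.1 * x.2).trace)
      = fun x => ∑ p : Fin d × Fin d, x.1 p.1 p.2 * x.2 p.2 p.1 :=
    funext fun x => trace_expand _ _
  rw [this]
  exact Finset.measurable_sum _ fun p _ =>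
    ((entry_meas p.1 p.2).comp measurable_fst).mul ((entry_meas p.2 p.1).comp measurable_snd)

lemma caseFour (hmeas : ∀ i, Measurable (Δ i))
    (hindep : iIndepFun Δ P)
    (hint1 : ∀ (i : Fin n) (a b : Fin d), Integrable (fun ω => Δ i ω a b) P)
    {i j k l : Fin n} (hik : i ≠ k) (hil : i ≠ l) (hjk : j ≠ k) (hjl : j ≠ l)
    (hij : i ≠ j) (hkl : k ≠ l) :
    Integrable (fun ω => ((Δ i ω * Δ j ω).trace).re * ((Δ k ω * Δ l ω).trace).re) P ∧
      ∫ ω, ((Δ i ω * Δ j ω).trace).re * ((Δ k ω * Δ l ω).trace).re ∂P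
        = ((matMean d P (Δ i) * matMean d P (Δ j)).trace).re
          * ((matMean d P (Δ k) * matMean d P (Δ l)).trace).re := by
  have hind : IndepFun (fun ω => ((Δ i ω * Δ j ω).trace).re)
      (fun ω => ((Δ k ω * Δ l ω).trace).re) P :=
    (hindep.indepFun_prodMk_prodMk hmeas i j k l hik hil hjk hjl).comp
      trace_re_meas' trace_re_meas'
  obtain ⟨g1, g2⟩ := hInt hmeas hindep hint1 hij
  obtain ⟨g3, g4⟩ := hInt hmeas hindep hint1 hkl
  refine ⟨hind.integrable_mul g1 g3, ?_⟩
  have := hind.integral_mul_eq_mul_integral g1.1 g3.1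
  simp only [Pi.mul_apply] at this
  rw [show (fun ω => ((Δ i ω * Δ j ω).trace).re * ((Δ k ω * Δ l ω).trace).re)
      = (fun ω => ((Δ i ω * Δ j ω).trace).re) * (fun ω => ((Δ k ω * Δ l ω).trace).re) from rfl]
  rw [← g2, ← g4]; exact this
end ProbHelpers

noncomputable def uStat (d n : ℕ) {Ω : Type*}
    (Δ : Fin n → Ω → Matrix (Fin d) (Fin d) ℂ) (ω : Ω) : ℝ :=
  ((n.choose 2 : ℝ))⁻¹ *
    ∑ p ∈ Finset.univ.filter (fun p : Fin n × Fin n => p.1 < p.2),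
      ((Δ p.1 ω * Δ p.2 ω).trace).re

section Counting
open Finset

lemma two_mul_choose_two (n : ℕ) : 2 * n.choose 2 = n * (n - 1) := by
  induction n with
  | zero => rfl
  | succ m ih =>
    rw [Nat.choose_succ_succ, Nat.mul_add, ih]
    cases m with
    | zero => rfl
    | succ k => simp [Nat.succ_sub_one]; ring

lemma six_mul_choose_three (n : ℕ) : 6 * n.choose 3 = n * (n - 1) * (n - 2) := by
  induction n with
  | zero => rfl
  | succ m ih =>
    rw [Nat.choose_succ_succ, Nat.mul_add, ih]
    have h2 := two_mul_choose_two m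
    cases m with
    | zero => rfl
    | succ k =>
      cases k with
      | zero => rfl
      | succ l =>
        simp [Nat.succ_sub_one] at *
        nlinarith [h2]

lemma card_UT (n : ℕ) :
    (Finset.univ.filter (fun p : Fin n × Fin n => p.1 < p.2)).card = n.choose 2 := by
  classical
  have hswap : (Finset.univ.filter (fun p : Fin n × Fin n => p.1 < p.2)).card
      = (Finset.univ.filter (fun p : Fin n × Fin n => p.2 < p.1)).card := by
    apply Finset.card_bij (fun p _ => p.swap)
    · intro a ha; simp only [mem_filter, mem_univ, true_and] at *; exact ha
    · intro a ha b hb hab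
      exact Prod.ext (congrArg Prod.snd hab) (congrArg Prod.fst hab)
    · intro b hb
      exact ⟨b.swap, by simp only [mem_filter, mem_univ, true_and] at *; exact hb, by simp⟩
  have hunion : (Finset.univ.filter (fun p : Fin n × Fin n => p.1 < p.2)) ∪
      (Finset.univ.filter (fun p : Fin n × Fin n => p.2 < p.1)) = (Finset.univ : Finset (Fin n)).offDiag := by
    ext p
    simp only [Finset.mem_union, Finset.mem_filter, Finset.mem_univ, true_and,
      Finset.mem_offDiag, ne_iff_lt_or_gt, gt_iff_lt]
  have hdisj : Disjoint (Finset.univ.filter (fun p : Fin n × Fin n => p.1 < p.2))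
      (Finset.univ.filter (fun p : Fin n × Fin n => p.2 < p.1)) := by
    rw [Finset.disjoint_filter]
    intro p _ h1
    exact not_lt.mpr h1.le
  have hcard := Finset.card_union_of_disjoint hdisj
  rw [hunion] at hcard
  rw [Finset.offDiag_card, Finset.card_univ, Fintype.card_fin] at hcard
  have h2 := two_mul_choose_two n
  have h3 : n * (n - 1) = n * n - n := by
    rcases n with _ | m
    · rfl
    · have : (m+1) * (m+1) = (m+1)*m + (m+1) := by ring
      simp [Nat.succ_sub_one, this]
  rw [h3] at h2
  omega

lemma card_T (n : ℕ) :
    (Finset.univ.filter (fun t : Fin n × Fin n × Fin n =>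
      t.1 ≠ t.2.1 ∧ t.1 ≠ t.2.2 ∧ t.2.1 ≠ t.2.2)).card = n * (n - 1) * (n - 2) := by
  classical
  rw [Finset.card_filter]
  rw [Fintype.sum_prod_type]
  have inner2 : ∀ s a : Fin n, s ≠ a →
      (∑ b : Fin n, if (s ≠ a ∧ s ≠ b ∧ a ≠ b) then 1 else 0) = n - 2 := by
    intro s a hsa
    have : ∀ b : Fin n, (if (s ≠ a ∧ s ≠ b ∧ a ≠ b) then (1:ℕ) else 0)
        = if b ∈ (Finset.univ.erase s).erase a then 1 else 0 := by
      intro b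
      simp only [Finset.mem_erase, Finset.mem_univ, and_true]
      by_cases h1 : s = b <;> by_cases h2 : a = b <;> simp [h1, h2, hsa, Ne, eq_comm] <;> tauto
    simp_rw [this]
    rw [Finset.sum_ite_mem, Finset.univ_inter, Finset.sum_const, smul_eq_mul, mul_one]
    have ha : a ∈ Finset.univ.erase s := by
      simp only [Finset.mem_erase, Finset.mem_univ, and_true]
      exact fun h => hsa h.symm
    rw [Finset.card_erase_of_mem ha, Finset.card_erase_of_mem (Finset.mem_univ s),
      Finset.card_univ, Fintype.card_fin]
    omega
  have inner1 : ∀ s : Fin n,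
      (∑ y : Fin n × Fin n, if (s ≠ y.1 ∧ s ≠ y.2 ∧ y.1 ≠ y.2) then (1:ℕ) else 0)
        = (n - 1) * (n - 2) := by
    intro s
    rw [Fintype.sum_prod_type]
    have : ∀ a : Fin n, (∑ b : Fin n, if (s ≠ a ∧ s ≠ b ∧ a ≠ b) then (1:ℕ) else 0)
        = if a ∈ Finset.univ.erase s then n - 2 else 0 := by
      intro a
      by_cases h : s = a
      · simp [h]
      · simp only [Finset.mem_erase, Finset.mem_univ, and_true]
        rw [if_pos (fun hh => h hh.symm)]
        exact inner2 s a h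
    simp_rw [this]
    rw [Finset.sum_ite_mem, Finset.univ_inter, Finset.sum_const, smul_eq_mul]
    rw [Finset.card_erase_of_mem (Finset.mem_univ s), Finset.card_univ, Fintype.card_fin]
  simp_rw [inner1]
  rw [Finset.sum_const, Finset.card_univ, Fintype.card_fin, smul_eq_mul, mul_assoc]

lemma card_share1 (n : ℕ) :
    (((Finset.univ.filter (fun p : Fin n × Fin n => p.1 < p.2)) ×ˢ
      (Finset.univ.filter (fun p : Fin n × Fin n => p.1 < p.2))).filter
      (fun x => x.1 ≠ x.2 ∧ (x.1.1 = x.2.1 ∨ x.1.1 = x.2.2 ∨ x.1.2 = x.2.1 ∨ x.1.2 = x.2.2))).card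
      = n * (n - 1) * (n - 2) := by
  classical
  rw [← card_T n]
  apply Finset.card_bij'
    (i := fun x _ => if x.1.1 = x.2.1 then (x.1.1, x.1.2, x.2.2)
      else if x.1.1 = x.2.2 then (x.1.1, x.1.2, x.2.1)
      else if x.1.2 = x.2.1 then (x.1.2, x.1.1, x.2.2)
      else (x.1.2, x.1.1, x.2.1))
    (j := fun t _ => ((if t.1 < t.2.1 then (t.1, t.2.1) else (t.2.1, t.1)),
      (if t.1 < t.2.2 then (t.1, t.2.2) else (t.2.2, t.1))))
  case hi =>
    rintro ⟨⟨i, j⟩, k, l⟩ hx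
    simp only [Finset.mem_filter, Finset.mem_product, Finset.mem_univ, true_and, ne_eq,
      Prod.mk.injEq, not_and] at hx ⊢
    obtain ⟨⟨hij, hkl⟩, hne, hsh⟩ := hx
    split_ifs with h1 h2 h3 <;> (try dsimp only at *) <;>
      (try simp only [ne_eq, Prod.mk.injEq, not_and, Fin.lt_def, Fin.ext_iff, true_and, and_true, true_or, or_true, true_implies, not_true, imp_false, not_false_eq_true] at *) <;> omega
  case hj =>
    rintro ⟨s, a, b⟩ ht
    simp only [Finset.mem_filter, Finset.mem_univ, true_and, ne_eq] at ht
    simp only [Finset.mem_filter, Finset.mem_product, Finset.mem_univ, true_and, ne_eq,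
      Prod.mk.injEq, not_and]
    obtain ⟨h1, h2, h3⟩ := ht
    split_ifs with g1 g2 <;> (try dsimp only at *) <;>
      (try simp only [ne_eq, Prod.mk.injEq, not_and, Fin.lt_def, Fin.ext_iff, true_and, and_true, true_or, or_true, true_implies, not_true, imp_false, not_false_eq_true] at *) <;> omega
  case left_inv =>
    rintro ⟨⟨i, j⟩, k, l⟩ hx
    simp only [Finset.mem_filter, Finset.mem_product, Finset.mem_univ, true_and, ne_eq,
      Prod.mk.injEq, not_and] at hx
    obtain ⟨⟨hij, hkl⟩, hne, hsh⟩ := hx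
    split_ifs with h1 h2 h3 <;> (try dsimp only at *) <;>
      (try simp only [ne_eq, Prod.mk.injEq, not_and, Fin.lt_def, Fin.ext_iff, true_and, and_true, true_or, or_true, true_implies, not_true, imp_false, not_false_eq_true] at *) <;> omega
  case right_inv =>
    rintro ⟨s, a, b⟩ ht
    simp only [Finset.mem_filter, Finset.mem_univ, true_and, ne_eq] at ht
    obtain ⟨h1, h2, h3⟩ := ht
    split_ifs <;> (try dsimp only at *) <;>
      (try simp only [ne_eq, Prod.mk.injEq, not_and, Fin.lt_def, Fin.ext_iff, true_and, and_true, true_or, or_true, true_implies, not_true, imp_false, not_false_eq_true] at *) <;> omega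

end Counting

theorem main_aux
    (d n : ℕ) (hd : 1 ≤ d) (hn : 2 ≤ n)
    (Ω : Type*) [MeasurableSpace Ω] (P : Measure Ω) [IsProbabilityMeasure P]
    (Δ : Fin n → Ω → Matrix (Fin d) (Fin d) ℂ)
    (hmeas : ∀ i, Measurable (Δ i))
    (hindep : iIndepFun Δ P)
    (hid : ∀ i j, IdentDistrib (Δ i) (Δ j) P P)
    (hherm : ∀ i, ∀ᵐ ω ∂P, (Δ i ω).IsHermitian)
    (hint1 : ∀ (i : Fin n) (a b : Fin d), Integrable (fun ω => Δ i ω a b) P)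
    (hint2 : ∀ (i : Fin n) (p q : Fin d × Fin d),
      Integrable (fun ω => (Δ i ω ⊗ₖ Δ i ω) p q) P) (i0 : Fin n) :
    (∫ ω, uStat d n Δ ω ∂P)
      = ((matMean d P (Δ i0) * matMean d P (Δ i0)).trace).re ∧
    variance (uStat d n Δ) P
      = (6 * (n.choose 3 : ℝ) / ((n.choose 2 : ℝ)) ^ 2) *
          (((matMeanKron d P (Δ i0) *
              (matMean d P (Δ i0) ⊗ₖ matMean d P (Δ i0))).trace).re -
            (((matMean d P (Δ i0) * matMean d P (Δ i0)).trace).re) ^ 2) +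
        ((n.choose 2 : ℝ))⁻¹ *
          (((matMeanKron d P (Δ i0) *
              matMeanKron d P (Δ i0)).trace).re -
            (((matMean d P (Δ i0) * matMean d P (Δ i0)).trace).re) ^ 2) := by
  classical
  set m := matMean d P (Δ i0) with hm_def
  set S := matMeanKron d P (Δ i0) with hS_def
  set t : ℝ := ((m * m).trace).re with ht_def
  set v1 : ℝ := ((S * (m ⊗ₖ m)).trace).re with hv1_def
  set v2 : ℝ := ((S * S).trace).re with hv2_def
  have hmEq : ∀ i : Fin n, matMean d P (Δ i) = m := by
    intro i; rw [hm_def]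
    ext a b
    exact ((hid i i0).comp (entry_meas a b)).integral_eq
  have hSEq : ∀ i : Fin n, matMeanKron d P (Δ i) = S := by
    intro i; rw [hS_def]
    ext p q
    exact ((hid i i0).comp (kentry_meas p q)).integral_eq
  set UT : Finset (Fin n × Fin n) :=
    Finset.univ.filter (fun p : Fin n × Fin n => p.1 < p.2) with hUT_def
  have hCnat : UT.card = n.choose 2 := card_UT n
  have hCpos : 0 < n.choose 2 := Nat.choose_pos hn
  have hC0 : ((n.choose 2 : ℕ) : ℝ) ≠ 0 := Nat.cast_ne_zero.mpr (by omega)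
  have hmemUT : ∀ p ∈ UT, p.1 < p.2 := by
    intro p hp
    rw [hUT_def] at hp
    exact (Finset.mem_filter.mp hp).2
  have hfInt : ∀ p : Fin n × Fin n, p.1 < p.2 →
      Integrable (fun ω => ((Δ p.1 ω * Δ p.2 ω).trace).re) P ∧
      ∫ ω, ((Δ p.1 ω * Δ p.2 ω).trace).re ∂P = t := by
    intro p hp
    obtain ⟨g1, g2⟩ := hInt hmeas hindep hint1 (ne_of_lt hp)
    exact ⟨g1, by rw [g2, hmEq, hmEq, ht_def]⟩
  -- master case analysis
  have master : ∀ p ∈ UT, ∀ q ∈ UT,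
      Integrable (fun ω => ((Δ p.1 ω * Δ p.2 ω).trace).re * ((Δ q.1 ω * Δ q.2 ω).trace).re) P ∧
      ∫ ω, ((Δ p.1 ω * Δ p.2 ω).trace).re * ((Δ q.1 ω * Δ q.2 ω).trace).re ∂P
        = t ^ 2 + (if p = q then v2 - t ^ 2 else 0)
          + (if p ≠ q ∧ (p.1 = q.1 ∨ p.1 = q.2 ∨ p.2 = q.1 ∨ p.2 = q.2)
              then v1 - t ^ 2 else 0) := by
    intro p hp q hq
    have hp2 := hmemUT p hp
    have hq2 := hmemUT q hq
    by_cases hpq : p = q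
    · subst hpq
      obtain ⟨g1, g2⟩ := caseTwo hmeas hindep hherm hint2 (ne_of_lt hp2)
      refine ⟨g1, ?_⟩
      rw [g2, hSEq, hSEq, if_pos rfl, if_neg (by simp), hv2_def]
      ring
    · by_cases hsh : p.1 = q.1 ∨ p.1 = q.2 ∨ p.2 = q.1 ∨ p.2 = q.2
      · have main1 : Integrable (fun ω => ((Δ p.1 ω * Δ p.2 ω).trace).re
            * ((Δ q.1 ω * Δ q.2 ω).trace).re) P ∧
            ∫ ω, ((Δ p.1 ω * Δ p.2 ω).trace).re * ((Δ q.1 ω * Δ q.2 ω).trace).re ∂P = v1 := by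
          rcases hsh with h | h | h | h
          · -- p.1 = q.1
            have hab : p.2 ≠ q.2 := fun he => hpq (Prod.ext_iff.mpr ⟨h, he⟩)
            have hsb : p.1 ≠ q.2 := by rw [h]; exact ne_of_lt hq2
            obtain ⟨g1, g2⟩ := caseOne hmeas hindep hherm hint1 hint2 (ne_of_lt hp2) hsb hab
            rw [show q.1 = p.1 from h.symm]
            exact ⟨g1, by rw [g2, hSEq, hmEq, hmEq, hv1_def]⟩
          · -- p.1 = q.2
            have hq1p1 : q.1 < p.1 := by rw [h]; exact hq2
            have hsb : p.1 ≠ q.1 := (ne_of_lt hq1p1).symm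
            have hab : p.2 ≠ q.1 := by
              intro he
              have h1 : p.1 < q.1 := he ▸ hp2
              exact absurd (lt_trans h1 hq1p1) (lt_irrefl _)
            obtain ⟨g1, g2⟩ := caseOne hmeas hindep hherm hint1 hint2 (ne_of_lt hp2) hsb hab
            simp only [show ∀ ω : Ω, (Δ q.1 ω * Δ q.2 ω).trace = (Δ q.2 ω * Δ q.1 ω).trace from
              fun ω => Matrix.trace_mul_comm _ _]
            rw [show q.2 = p.1 from h.symm]
            exact ⟨g1, by rw [g2, hSEq, hmEq, hmEq, hv1_def]⟩
          · -- p.2 = q.1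
            have hq2' : p.2 < q.2 := by rw [h]; exact hq2
            have hsa : p.2 ≠ p.1 := (ne_of_lt hp2).symm
            have hsb : p.2 ≠ q.2 := ne_of_lt hq2'
            have hab : p.1 ≠ q.2 := ne_of_lt (lt_trans hp2 hq2')
            obtain ⟨g1, g2⟩ := caseOne hmeas hindep hherm hint1 hint2 hsa hsb hab
            simp only [show ∀ ω : Ω, (Δ p.1 ω * Δ p.2 ω).trace = (Δ p.2 ω * Δ p.1 ω).trace from
              fun ω => Matrix.trace_mul_comm _ _]
            rw [show q.1 = p.2 from h.symm]
            exact ⟨g1, by rw [g2, hSEq, hmEq, hmEq, hv1_def]⟩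
          · -- p.2 = q.2
            have hq1p2 : q.1 < p.2 := by rw [h]; exact hq2
            have hsa : p.2 ≠ p.1 := (ne_of_lt hp2).symm
            have hsb : p.2 ≠ q.1 := (ne_of_lt hq1p2).symm
            have hab : p.1 ≠ q.1 := fun he => hpq (Prod.ext_iff.mpr ⟨he, h⟩)
            obtain ⟨g1, g2⟩ := caseOne hmeas hindep hherm hint1 hint2 hsa hsb hab
            simp only [show ∀ ω : Ω, (Δ p.1 ω * Δ p.2 ω).trace = (Δ p.2 ω * Δ p.1 ω).trace from
              fun ω => Matrix.trace_mul_comm _ _,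
              show ∀ ω : Ω, (Δ q.1 ω * Δ q.2 ω).trace = (Δ q.2 ω * Δ q.1 ω).trace from
              fun ω => Matrix.trace_mul_comm _ _]
            rw [show q.2 = p.2 from h.symm]
            exact ⟨g1, by rw [g2, hSEq, hmEq, hmEq, hv1_def]⟩
        refine ⟨main1.1, ?_⟩
        rw [main1.2, if_neg hpq, if_pos ⟨hpq, hsh⟩]
        ring
      · push_neg at hsh
        obtain ⟨n1, n2, n3, n4⟩ := hsh
        obtain ⟨g1, g2⟩ := caseFour hmeas hindep hint1 n1 n2 n3 n4
          (ne_of_lt hp2) (ne_of_lt hq2)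
        refine ⟨g1, ?_⟩
        rw [g2, if_neg hpq, if_neg (by rintro ⟨-, hh⟩; tauto)]
        simp only [hmEq, ← ht_def]
        ring
  have huStat : uStat d n Δ = fun ω => ((n.choose 2 : ℝ))⁻¹ *
      ∑ p ∈ UT, ((Δ p.1 ω * Δ p.2 ω).trace).re := rfl
  have hfirst : ∫ ω, uStat d n Δ ω ∂P = t := by
    simp only [huStat]
    rw [integral_const_mul, integral_finset_sum _ (fun p hp => (hfInt p (hmemUT p hp)).1)]
    rw [Finset.sum_congr rfl (fun p hp => (hfInt p (hmemUT p hp)).2)]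
    rw [Finset.sum_const, hCnat, nsmul_eq_mul, ← mul_assoc, inv_mul_cancel₀ hC0, one_mul]
  have hmem : MemLp (uStat d n Δ) 2 P := by
    rw [huStat]
    apply MemLp.const_mul
    apply memLp_finsetSum
    intro p hp
    have hlt := hmemUT p hp
    have hsm : AEStronglyMeasurable (fun ω => ((Δ p.1 ω * Δ p.2 ω).trace).re) P :=
      (trace_re_meas'.comp ((hmeas p.1).prodMk (hmeas p.2))).aestronglyMeasurable
    rw [memLp_two_iff_integrable_sq hsm]
    have := (caseTwo hmeas hindep hherm hint2 (ne_of_lt hlt)).1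
    simpa [pow_two] using this
  have hvar := variance_eq_sub hmem
  have hXsq : (uStat d n Δ) ^ 2 = fun ω => ((n.choose 2 : ℝ))⁻¹ ^ 2 *
      ∑ p ∈ UT, ∑ q ∈ UT,
        ((Δ p.1 ω * Δ p.2 ω).trace).re * ((Δ q.1 ω * Δ q.2 ω).trace).re := by
    funext ω
    rw [Pi.pow_apply, huStat]
    have e1 : (((n.choose 2 : ℝ))⁻¹ * ∑ p ∈ UT, ((Δ p.1 ω * Δ p.2 ω).trace).re) ^ 2
        = ((n.choose 2 : ℝ))⁻¹ ^ 2 * ((∑ p ∈ UT, ((Δ p.1 ω * Δ p.2 ω).trace).re)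
          * (∑ q ∈ UT, ((Δ q.1 ω * Δ q.2 ω).trace).re)) := by ring
    rw [e1, Finset.sum_mul_sum]
  have hIntSq : ∫ ω, ((uStat d n Δ) ^ 2) ω ∂P = ((n.choose 2 : ℝ))⁻¹ ^ 2 *
      ∑ p ∈ UT, ∑ q ∈ UT, (t ^ 2 + (if p = q then v2 - t ^ 2 else 0)
        + (if p ≠ q ∧ (p.1 = q.1 ∨ p.1 = q.2 ∨ p.2 = q.1 ∨ p.2 = q.2)
            then v1 - t ^ 2 else 0)) := by
    simp only [hXsq]
    rw [integral_const_mul,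
      integral_finset_sum _ (fun p hp => integrable_finset_sum _ (fun q hq => (master p hp q hq).1))]
    congr 1
    refine Finset.sum_congr rfl fun p hp => ?_
    rw [integral_finset_sum _ (fun q hq => (master p hp q hq).1)]
    exact Finset.sum_congr rfl fun q hq => (master p hp q hq).2
  set K : ℝ := ((n * (n - 1) * (n - 2) : ℕ) : ℝ) with hK_def
  have h6 : 6 * (n.choose 3 : ℝ) = K := by
    rw [hK_def]; exact_mod_cast congrArg (fun x : ℕ => (x : ℝ)) (six_mul_choose_three n)
  have hsum : ∑ p ∈ UT, ∑ q ∈ UT, (t ^ 2 + (if p = q then v2 - t ^ 2 else 0)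
      + (if p ≠ q ∧ (p.1 = q.1 ∨ p.1 = q.2 ∨ p.2 = q.1 ∨ p.2 = q.2)
          then v1 - t ^ 2 else 0))
      = (n.choose 2 : ℝ) * (n.choose 2 : ℝ) * t ^ 2 + (n.choose 2 : ℝ) * (v2 - t ^ 2)
        + K * (v1 - t ^ 2) := by
    simp only [Finset.sum_add_distrib]
    have e1 : ∑ p ∈ UT, ∑ q ∈ UT, t ^ 2 = (n.choose 2 : ℝ) * (n.choose 2 : ℝ) * t ^ 2 := by
      simp [Finset.sum_const, hCnat, mul_assoc]
    have e2 : ∑ p ∈ UT, ∑ q ∈ UT, (if p = q then v2 - t ^ 2 else 0)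
        = (n.choose 2 : ℝ) * (v2 - t ^ 2) := by
      have : ∀ p ∈ UT, ∑ q ∈ UT, (if p = q then v2 - t ^ 2 else 0) = v2 - t ^ 2 := by
        intro p hp
        rw [Finset.sum_ite_eq UT p (fun _ => v2 - t ^ 2)]
        exact if_pos hp
      rw [Finset.sum_congr rfl this, Finset.sum_const, hCnat, nsmul_eq_mul]
    have e3 : ∑ p ∈ UT, ∑ q ∈ UT, (if p ≠ q ∧ (p.1 = q.1 ∨ p.1 = q.2 ∨ p.2 = q.1 ∨ p.2 = q.2)
          then v1 - t ^ 2 else 0) = K * (v1 - t ^ 2) := by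
      rw [← Finset.sum_product']
      rw [Finset.sum_ite, Finset.sum_const, Finset.sum_const_zero, add_zero, nsmul_eq_mul]
      rw [hK_def]
      norm_cast
      rw [hUT_def]
      rw [card_share1 n]
    rw [e1, e2, e3]
  refine ⟨hfirst, ?_⟩
  rw [hvar, hfirst, hIntSq, hsum, ← h6]
  field_simp
  ring

/-- Mean and variance of the pairwise-inner-product U-statistic
built from i.i.d., almost surely Hermitian, integrable matrix-valued random
variables. With `m = E[Δ̂]` and `S = E[Δ̂ ⊗ Δ̂]`:
`E[X̄] = Re tr(m²)` and
`Var[X̄] = (6·C(n,3)/C(n,2)²)(Re tr(S·(m⊗m)) − (Re tr m²)²) + (1/C(n,2))(Re tr(S²) − (Re tr m²)²)`. -/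
theorem uStat_mean_and_variance
    (d n : ℕ) (hd : 1 ≤ d) (hn : 2 ≤ n)
    (Ω : Type*) [MeasurableSpace Ω] (P : Measure Ω) [IsProbabilityMeasure P]
    (Δ : Fin n → Ω → Matrix (Fin d) (Fin d) ℂ)
    (hmeas : ∀ i, Measurable (Δ i))
    (hindep : iIndepFun Δ P)
    (hid : ∀ i j, IdentDistrib (Δ i) (Δ j) P P)
    (hherm : ∀ i, ∀ᵐ ω ∂P, (Δ i ω).IsHermitian)
    (hint1 : ∀ (i : Fin n) (a b : Fin d), Integrable (fun ω => Δ i ω a b) P)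
    (hint2 : ∀ (i : Fin n) (p q : Fin d × Fin d),
      Integrable (fun ω => (Δ i ω ⊗ₖ Δ i ω) p q) P) :
    (∫ ω, uStat d n Δ ω ∂P)
      = ((matMean d P (Δ ⟨0, by omega⟩) * matMean d P (Δ ⟨0, by omega⟩)).trace).re ∧
    variance (uStat d n Δ) P
      = (6 * (n.choose 3 : ℝ) / ((n.choose 2 : ℝ)) ^ 2) *
          (((matMeanKron d P (Δ ⟨0, by omega⟩) *
              (matMean d P (Δ ⟨0, by omega⟩) ⊗ₖ matMean d P (Δ ⟨0, by omega⟩))).trace).re -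
            (((matMean d P (Δ ⟨0, by omega⟩) * matMean d P (Δ ⟨0, by omega⟩)).trace).re) ^ 2) +
        ((n.choose 2 : ℝ))⁻¹ *
          (((matMeanKron d P (Δ ⟨0, by omega⟩) *
              matMeanKron d P (Δ ⟨0, by omega⟩)).trace).re -
            (((matMean d P (Δ ⟨0, by omega⟩) * matMean d P (Δ ⟨0, by omega⟩)).trace).re) ^ 2) := by
  exact main_aux d n hd hn Ω P Δ hmeas hindep hid hherm hint1 hint2 ⟨0, by omega⟩
end

section
/- Let d ≥ 1 and let Φ : Matrix (Fin d) (Fin d) ℂ →ₗ[ℂ] Matrix (Fin d) (Fin d) ℂ be a linear map that is positive (Φ maps positive semidefinite matrices to positive semidefinite matrices), unital (Φ(1) = 1), and trace-preserving (tr(Φ(X)) = tr(X) for all X). Then for every Hermitian M ≠ 0 and every real λ with Φ(M) = λ • M, one has λ ≤ 1. -/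
open Matrix
open scoped ComplexOrder

/-- If all eigenvalues of a Hermitian matrix are at most `c`, then `c • 1 - M` is PSD. -/
lemma aux_psd {d : ℕ} {M : Matrix (Fin d) (Fin d) ℂ} (hM : M.IsHermitian) {c : ℝ}
    (h : ∀ i, hM.eigenvalues i ≤ c) : ((c : ℂ) • 1 - M).PosSemidef := by
  have hVU : (hM.eigenvectorUnitary : Matrix (Fin d) (Fin d) ℂ) *
      (star hM.eigenvectorUnitary : Matrix (Fin d) (Fin d) ℂ) = 1 :=
    (Matrix.mem_unitaryGroup_iff).mp hM.eigenvectorUnitary.2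
  have key : (c : ℂ) • 1 - M =
      (hM.eigenvectorUnitary : Matrix (Fin d) (Fin d) ℂ) *
        diagonal (fun i => (c : ℂ) - (hM.eigenvalues i : ℂ)) *
        star (hM.eigenvectorUnitary : Matrix (Fin d) (Fin d) ℂ) := by
    conv_lhs => rw [hM.spectral_theorem]
    rw [← diagonal_sub, ← smul_one_eq_diagonal, mul_sub, sub_mul, Matrix.mul_smul, mul_one,
      Matrix.smul_mul, hVU]
    rfl
  rw [key]
  refine (Matrix.PosSemidef.diagonal ?_).mul_mul_conjTranspose_same _
  intro i
  show (0 : ℂ) ≤ (c : ℂ) - (hM.eigenvalues i : ℂ)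
  rw [← Complex.ofReal_sub]
  exact Complex.zero_le_real.mpr (by linarith [h i])

lemma key_lemma {d : ℕ}
    (Φ : Matrix (Fin d) (Fin d) ℂ →ₗ[ℂ] Matrix (Fin d) (Fin d) ℂ)
    (hpos : ∀ A : Matrix (Fin d) (Fin d) ℂ, A.PosSemidef → (Φ A).PosSemidef)
    (hunital : Φ 1 = 1)
    {M : Matrix (Fin d) (Fin d) ℂ} (hM : M.IsHermitian) (i : Fin d)
    (hmax : ∀ j, hM.eigenvalues j ≤ hM.eigenvalues i) (hi : 0 < hM.eigenvalues i)
    (lam : ℝ) (heig : Φ M = (lam : ℂ) • M) : lam ≤ 1 := by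
  set μ : ℝ := hM.eigenvalues i with hμ
  have h1 : (((μ : ℂ)) • 1 - M).PosSemidef := aux_psd hM hmax
  have h2 := hpos _ h1
  rw [map_sub, LinearMap.map_smul, hunital, heig] at h2
  set v : Fin d → ℂ := ⇑(hM.eigenvectorBasis i) with hv
  have hvM : M *ᵥ v = (μ : ℂ) • v := by
    have h0 := hM.mulVec_eigenvectorBasis i
    ext k
    have hk := congrFun h0 k
    simpa [Complex.real_smul] using hk
  have hnorm : star v ⬝ᵥ v = 1 := by
    have h := hM.eigenvectorBasis.orthonormal.1 i
    have : (inner ℂ (hM.eigenvectorBasis i) (hM.eigenvectorBasis i) : ℂ) = 1 := by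
      simp [inner_self_eq_norm_sq_to_K, h]
    rw [← this, EuclideanSpace.inner_eq_star_dotProduct, dotProduct_comm]
  have h3 := h2.dotProduct_mulVec_nonneg v
  have hform : star v ⬝ᵥ (((μ : ℂ) • 1 - (lam : ℂ) • M) *ᵥ v) = (μ : ℂ) * (1 - lam) := by
    simp only [sub_mulVec, smul_mulVec, one_mulVec, hvM, dotProduct_sub,
      dotProduct_smul, smul_smul, hnorm, smul_eq_mul]
    ring
  rw [hform] at h3
  have h4 : (0 : ℝ) ≤ μ * (1 - lam) := by
    rw [← Complex.zero_le_real]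
    push_cast
    exact h3
  nlinarith

/-- If `Φ` is a linear map on `d × d` complex matrices that is
positive (maps positive semidefinite matrices to positive semidefinite matrices),
unital (`Φ 1 = 1`) and trace preserving, then every real eigenvalue `lam` of `Φ`
corresponding to a nonzero Hermitian eigenvector `M` satisfies `lam ≤ 1`. -/
theorem eigenvalue_le_one_of_positive_unital_trace_preserving
    (d : ℕ) (hd : 1 ≤ d)
    (Φ : Matrix (Fin d) (Fin d) ℂ →ₗ[ℂ] Matrix (Fin d) (Fin d) ℂ)
    (hpos : ∀ A : Matrix (Fin d) (Fin d) ℂ, A.PosSemidef → (Φ A).PosSemidef)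
    (hunital : Φ 1 = 1)
    (htp : ∀ X : Matrix (Fin d) (Fin d) ℂ, (Φ X).trace = X.trace)
    (M : Matrix (Fin d) (Fin d) ℂ) (hM : M.IsHermitian) (hM0 : M ≠ 0)
    (lam : ℝ) (heig : Φ M = (lam : ℂ) • M) :
    lam ≤ 1 := by
  have : Nonempty (Fin d) := ⟨⟨0, hd⟩⟩
  have hMneg : (-M).IsHermitian := hM.neg
  obtain ⟨i, hi⟩ := Finite.exists_max hM.eigenvalues
  obtain ⟨j, hj⟩ := Finite.exists_max hMneg.eigenvalues
  by_cases hip : 0 < hM.eigenvalues i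
  · exact key_lemma Φ hpos hunital hM i hi hip lam heig
  by_cases hjp : 0 < hMneg.eigenvalues j
  · refine key_lemma Φ hpos hunital hMneg j hj hjp lam ?_
    rw [map_neg, heig, smul_neg]
  -- both maxes ≤ 0 : M and -M are PSD, hence M = 0, contradiction
  exfalso
  apply hM0
  push_neg at hip hjp
  have hMpsd : M.PosSemidef := by
    have h0 := aux_psd hMneg (fun k => le_trans (hj k) hjp)
    rw [Complex.ofReal_zero, zero_smul, zero_sub, neg_neg] at h0
    exact h0
  have heigz : (RCLike.ofReal ∘ hM.eigenvalues : Fin d → ℂ) = 0 := by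
    funext k
    have h1 : hM.eigenvalues k ≤ 0 := le_trans (hi k) hip
    have h2 : 0 ≤ hM.eigenvalues k := hMpsd.eigenvalues_nonneg k
    simp [le_antisymm h1 h2]
  have hst := hM.spectral_theorem
  have hd0 : diagonal (0 : Fin d → ℂ) = 0 := diagonal_zero
  rw [heigz, hd0, map_zero] at hst
  exact hst
end

section
/- Let d, t ≥ 1, let X be a finite type, and let (ψ_x)_{x ∈ X} be nonzero vectors indexed-vector space ((Fin t → Fin d) → ℂ) with Σ_x |ψ_x⟩⟨ψ_x| = 1, with Lüders channel 𝓗(A) = Σ_x ⟪ψ_x, A ψ_x⟫ · |ψ_x⟩⟨ψ_x| / ⟪ψ_x, ψ_x⟫ on matrices indexed by (Fin t → Fin d). For j, k ∈ Fin t define the induced single-register channel H̃_{j,k} : Matrix (Fin d) (Fin d) ℂ →ₗ[ℂ] Matrix (Fin d) (Fin d) ℂ by H̃_{j,k}(M) = PT_j( 𝓗( Emb_k(M) ) ), where Emb_k(M) is the matrix on (Fin t → Fin d) with entries (v,w) ↦ M (v k) (w k) · ∏_{a ≠ k} (1/d)·[v a = w a] (i.e., M placed in register k tensored with the maximally mixed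 state on the other registers), and PT_j is the partial trace keeping register j: PT_j(N)(b,b') = Σ over pairs v,w agreeing outside register j with v j = b, w j = b', of N(v,w). Then each H̃_{j,k} is unital and satisfies LinearMap.trace ℂ _ H̃_{j,k} ≤ d; consequently the average H̃ = (1/t²) Σ_{j,k} H̃_{j,k} satisfies LinearMap.trace ℂ _ H̃ ≤ d. -/
open Matrix
open scoped ComplexOrder

/-- The outer product `|ψ⟩⟨ψ|` over an arbitrary index type. -/
noncomputable def outer {I : Type*} (ψ : I → ℂ) : Matrix I I ℂ :=
  Matrix.of fun i j => ψ i * star (ψ j)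

/-- The Lüders channel of the rank-one POVM `{|ψ_x⟩⟨ψ_x|}_x`:
`𝓗(A) = Σ_x ⟪ψ_x, A ψ_x⟫ · |ψ_x⟩⟨ψ_x| / ⟪ψ_x, ψ_x⟫`, as a linear map. -/
noncomputable def ludersChannel {I : Type*} [Fintype I] {X : Type*} [Fintype X]
    (ψ : X → I → ℂ) : Matrix I I ℂ →ₗ[ℂ] Matrix I I ℂ where
  toFun A := ∑ x, ((star (ψ x) ⬝ᵥ A.mulVec (ψ x)) / (star (ψ x) ⬝ᵥ ψ x)) • outer (ψ x)
  map_add' A B := by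
    simp [Matrix.add_mulVec, dotProduct_add, add_div, add_smul,
      Finset.sum_add_distrib]
  map_smul' c A := by
    simp only [Matrix.smul_mulVec, dotProduct_smul, smul_eq_mul,
      RingHom.id_apply, Finset.smul_sum, mul_div_assoc, mul_smul]

/-- `Emb_k(M)`: the matrix `M` placed in register `k`, tensored with the maximally
mixed state `(1/d)·1` on all remaining registers. -/
noncomputable def embedAt (d t : ℕ) (k : Fin t) (M : Matrix (Fin d) (Fin d) ℂ) :
    Matrix (Fin t → Fin d) (Fin t → Fin d) ℂ :=
  Matrix.of fun v w =>
    M (v k) (w k) * ∏ a ∈ Finset.univ.erase k, ((d : ℂ))⁻¹ * (if v a = w a then 1 else 0)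

/-- `PT_j(N)`: the partial trace of `N` keeping register `j`. -/
noncomputable def ptraceAt (d t : ℕ) (j : Fin t)
    (N : Matrix (Fin t → Fin d) (Fin t → Fin d) ℂ) : Matrix (Fin d) (Fin d) ℂ :=
  Matrix.of fun b b' => ∑ v : Fin t → Fin d, ∑ w : Fin t → Fin d,
    if v j = b ∧ w j = b' ∧ ∀ a, a ≠ j → v a = w a then N v w else 0

noncomputable def mrg (d t : ℕ) (j : Fin t) (b : Fin d) (u : {a : Fin t // a ≠ j} → Fin d) :
    Fin t → Fin d := (Equiv.funSplitAt j (Fin d)).symm (b, u)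

lemma mrg_same (d t : ℕ) (j : Fin t) (b : Fin d) (u) : mrg d t j b u j = b := by
  simp [mrg, Equiv.funSplitAt, Equiv.piSplitAt]

lemma mrg_ne (d t : ℕ) (j : Fin t) (b : Fin d) (u) (a : Fin t) (h : a ≠ j) :
    mrg d t j b u a = u ⟨a, h⟩ := by
  simp [mrg, Equiv.funSplitAt, Equiv.piSplitAt, h]

lemma sum_split_s15 {M : Type*} [AddCommMonoid M] (d t : ℕ) (j : Fin t) (f : (Fin t → Fin d) → M) :
    ∑ v, f v = ∑ b : Fin d, ∑ u : {a : Fin t // a ≠ j} → Fin d, f (mrg d t j b u) := by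
  rw [← Equiv.sum_comp (Equiv.funSplitAt j (Fin d)).symm f, Fintype.sum_prod_type]
  rfl

lemma mrg_eq_iff (d t : ℕ) (j : Fin t) (c c' : Fin d) (u u') :
    (∀ a, a ≠ j → mrg d t j c u a = mrg d t j c' u' a) ↔ u = u' := by
  constructor
  · intro h; funext a; have := h a.1 a.2
    rwa [mrg_ne _ _ _ _ _ _ a.2, mrg_ne _ _ _ _ _ _ a.2] at this
  · rintro rfl a ha; rw [mrg_ne _ _ _ _ _ _ ha, mrg_ne _ _ _ _ _ _ ha]

lemma ptrace_entry (d t : ℕ) (j : Fin t) (N : Matrix (Fin t → Fin d) (Fin t → Fin d) ℂ)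
    (b b' : Fin d) :
    ptraceAt d t j N b b'
      = ∑ u : {a : Fin t // a ≠ j} → Fin d, N (mrg d t j b u) (mrg d t j b' u) := by
  show (∑ v : Fin t → Fin d, ∑ w : Fin t → Fin d, _) = _
  rw [sum_split_s15 d t j]
  have h2 : ∀ (c : Fin d) (u : {a : Fin t // a ≠ j} → Fin d),
      (∑ w : Fin t → Fin d,
        if mrg d t j c u j = b ∧ w j = b' ∧ ∀ a, a ≠ j → mrg d t j c u a = w a
        then N (mrg d t j c u) w else 0)
      = ∑ c' : Fin d, ∑ u' : {a : Fin t // a ≠ j} → Fin d,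
        if c = b ∧ c' = b' ∧ u = u' then N (mrg d t j c u) (mrg d t j c' u') else 0 := by
    intro c u
    rw [sum_split_s15 d t j]
    refine Finset.sum_congr rfl fun c' _ => Finset.sum_congr rfl fun u' _ => ?_
    congr 1
    simp only [mrg_same, eq_iff_iff]
    constructor
    · rintro ⟨rfl, rfl, h⟩
      exact ⟨rfl, rfl, (mrg_eq_iff d t j c c' u u').1 h⟩
    · rintro ⟨rfl, rfl, rfl⟩
      exact ⟨rfl, rfl, (mrg_eq_iff d t j c c' u u).2 rfl⟩
  simp_rw [h2]
  simp [ite_and]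

lemma emb_inner (d t : ℕ) (ψv : (Fin t → Fin d) → ℂ) (k : Fin t) (b b' : Fin d) :
    star ψv ⬝ᵥ (embedAt d t k (Matrix.single b b' 1)).mulVec ψv
      = ((d:ℂ)⁻¹)^(t-1) *
        ∑ u : {a : Fin t // a ≠ k} → Fin d,
          star (ψv (mrg d t k b u)) * ψv (mrg d t k b' u) := by
  have key : ∀ v w : Fin t → Fin d,
      star (ψv v) * (embedAt d t k (Matrix.single b b' 1) v w * ψv w)
      = ((d:ℂ)⁻¹)^(t-1) *
        (if v k = b ∧ w k = b' ∧ ∀ a, a ≠ k → v a = w a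
         then star (ψv v) * ψv w else 0) := by
    intro v w
    have hcard : (Finset.univ.erase k).card = t - 1 := by
      rw [Finset.card_erase_of_mem (Finset.mem_univ _), Finset.card_univ, Fintype.card_fin]
    rw [embedAt]
    simp only [of_apply, Matrix.single, Finset.prod_mul_distrib, Finset.prod_const,
      Finset.prod_boole, hcard]
    split_ifs with h1 h2 h2 <;>
      simp_all [eq_comm, Finset.mem_erase] <;> ring
  calc star ψv ⬝ᵥ (embedAt d t k (Matrix.single b b' 1)).mulVec ψv
      = ∑ v, ∑ w, star (ψv v) * (embedAt d t k (Matrix.single b b' 1) v w * ψv w) := by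
        simp [dotProduct, mulVec, Finset.mul_sum]
    _ = ∑ v : Fin t → Fin d, ∑ w : Fin t → Fin d, ((d:ℂ)⁻¹)^(t-1) *
        (if v k = b ∧ w k = b' ∧ ∀ a, a ≠ k → v a = w a
         then star (ψv v) * ψv w else 0) := by
        exact Finset.sum_congr rfl fun v _ => Finset.sum_congr rfl fun w _ => key v w
    _ = ((d:ℂ)⁻¹)^(t-1) *
        ptraceAt d t k (Matrix.of fun v w => star (ψv v) * ψv w) b b' := by
        rw [ptraceAt]; simp only [of_apply, Finset.mul_sum]
    _ = _ := by rw [ptrace_entry]; simp only [of_apply]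

lemma card_ne (t : ℕ) (j : Fin t) : Fintype.card {a : Fin t // a ≠ j} = t - 1 := by
  simp [Fintype.card_subtype_compl]

lemma card_U (d t : ℕ) (j : Fin t) :
    Fintype.card ({a : Fin t // a ≠ j} → Fin d) = d ^ (t - 1) := by
  simp [Fintype.card_fun, card_ne]

lemma embed_one (d t : ℕ) (k : Fin t) :
    embedAt d t k 1 = ((d:ℂ)⁻¹)^(t-1) • (1 : Matrix (Fin t → Fin d) (Fin t → Fin d) ℂ) := by
  ext v w
  have hcard : (Finset.univ.erase k).card = t - 1 := by
    rw [Finset.card_erase_of_mem (Finset.mem_univ _), Finset.card_univ, Fintype.card_fin]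
  rw [embedAt]
  simp only [of_apply, Matrix.one_apply, Finset.prod_mul_distrib, Finset.prod_const,
    Finset.prod_boole, hcard, Matrix.smul_apply, Matrix.one_apply, smul_eq_mul]
  have : (v = w) ↔ (v k = w k ∧ ∀ a ∈ Finset.univ.erase k, v a = w a) := by
    constructor
    · rintro rfl; simp
    · rintro ⟨h1, h2⟩; funext a
      by_cases h : a = k
      · subst h; exact h1
      · exact h2 a (by simp [h])
  split_ifs with h1 h2 h2 h3 <;> simp_all <;> tauto
  
lemma luders_one {I : Type*} [Fintype I] [DecidableEq I] {X : Type*} [Fintype X]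
    (ψ : X → I → ℂ) (hne : ∀ x, ψ x ≠ 0)
    (hPOVM : ∑ x, outer (ψ x) = (1 : Matrix I I ℂ)) :
    ludersChannel ψ 1 = 1 := by
  have h : (ludersChannel ψ (1 : Matrix I I ℂ)) = ∑ x, outer (ψ x) := by
    show (∑ x, _) = _
    refine Finset.sum_congr rfl fun x _ => ?_
    rw [Matrix.one_mulVec, div_self, one_smul]
    rw [Ne, dotProduct_star_self_eq_zero]
    exact hne x
  rw [h, hPOVM]

lemma mrg_inj (d t : ℕ) (j : Fin t) (b b' : Fin d) (u) :
    mrg d t j b u = mrg d t j b' u ↔ b = b' := by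
  constructor
  · intro h
    have := congrFun h j
    rwa [mrg_same, mrg_same] at this
  · rintro rfl; rfl

lemma ptrace_smul_one (d t : ℕ) (j : Fin t) (c : ℂ) :
    ptraceAt d t j (c • (1 : Matrix (Fin t → Fin d) (Fin t → Fin d) ℂ))
      = (c * (d:ℂ)^(t-1)) • 1 := by
  ext b b'
  rw [ptrace_entry]
  simp only [Matrix.smul_apply, Matrix.one_apply, smul_eq_mul, mul_ite, mul_one, mul_zero,
    mrg_inj]
  by_cases h : b = b'
  · simp [h, Finset.sum_const, card_U, mul_comm]
  · simp [h]

lemma trace_eq (m : Type*) [Fintype m] [DecidableEq m] (f : Matrix m m ℂ →ₗ[ℂ] Matrix m m ℂ) :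
    LinearMap.trace ℂ _ f = ∑ p : m × m, (f (Matrix.single p.1 p.2 1)) p.1 p.2 := by
  rw [LinearMap.trace_eq_matrix_trace ℂ (Matrix.stdBasis ℂ m m), Matrix.trace]
  simp only [Matrix.diag, LinearMap.toMatrix_apply, Matrix.stdBasis_eq_single]
  congr 1; ext p
  simp [Matrix.stdBasis, Pi.basis_repr, Matrix.single_eq_of_single_single]

lemma luders_apply {I : Type*} [Fintype I] {X : Type*} [Fintype X]
    (ψ : X → I → ℂ) (A : Matrix I I ℂ) (v w : I) :
    ludersChannel ψ A v w
      = ∑ x, ((star (ψ x) ⬝ᵥ A.mulVec (ψ x)) / (star (ψ x) ⬝ᵥ ψ x))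
          * (ψ x v * star (ψ x w)) := by
  show (∑ x, _ • outer (ψ x)) v w = _
  rw [Matrix.sum_apply]
  exact Finset.sum_congr rfl fun x _ => by simp [outer, mul_assoc]

theorem exchange {B U V : Type*} [Fintype B] [Fintype U] [Fintype V]
    (f g : B → U → ℂ) (h e : B → V → ℂ) :
    ∑ b, ∑ b', (∑ u, f b u * g b' u) * (∑ v, h b v * e b' v)
      = ∑ u, ∑ v, (∑ b, f b u * h b v) * (∑ b', g b' u * e b' v) := by
  calc ∑ b, ∑ b', (∑ u, f b u * g b' u) * (∑ v, h b v * e b' v)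
      = ∑ b, ∑ b', ∑ u, ∑ v, (f b u * g b' u) * (h b v * e b' v) := by
        refine Finset.sum_congr rfl fun b _ => Finset.sum_congr rfl fun b' _ => ?_
        rw [Finset.sum_mul_sum]
    _ = ∑ q : B × B × U × V,
          (f q.1 q.2.2.1 * g q.2.1 q.2.2.1) * (h q.1 q.2.2.2 * e q.2.1 q.2.2.2) := by
        rw [Fintype.sum_prod_type]
        congr 1; funext b
        rw [Fintype.sum_prod_type]
        congr 1; funext b'
        rw [Fintype.sum_prod_type]
    _ = ∑ r : U × V × B × B,
          (f r.2.2.1 r.1 * h r.2.2.1 r.2.1) * (g r.2.2.2 r.1 * e r.2.2.2 r.2.1) := by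
        refine Fintype.sum_equiv
          ⟨fun q => (q.2.2.1, q.2.2.2, q.1, q.2.1), fun r => (r.2.2.1, r.2.2.2, r.1, r.2.1),
            fun q => rfl, fun r => rfl⟩ _ _ ?_
        rintro ⟨b, b', u, v⟩
        simp only [Equiv.coe_fn_mk]
        ring
    _ = ∑ u, ∑ v, ∑ b, ∑ b', (f b u * h b v) * (g b' u * e b' v) := by
        rw [Fintype.sum_prod_type]
        congr 1; funext u
        rw [Fintype.sum_prod_type]
        congr 1; funext v
        rw [Fintype.sum_prod_type]
    _ = ∑ u, ∑ v, (∑ b, f b u * h b v) * (∑ b', g b' u * e b' v) := by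
        refine Finset.sum_congr rfl fun u _ => Finset.sum_congr rfl fun v _ => ?_
        rw [Finset.sum_mul_sum]
theorem pull {B W X : Type*} [Fintype B] [Fintype W] [Fintype X]
    (cf : X → ℂ) (G : X → B → B → ℂ) (P : X → B → B → W → ℂ) :
    ∑ b, ∑ b', ∑ w, ∑ x, cf x * (G x b b' * P x b b' w)
      = ∑ x, cf x * (∑ b, ∑ b', G x b b' * ∑ w, P x b b' w) := by
  calc ∑ b, ∑ b', ∑ w, ∑ x, cf x * (G x b b' * P x b b' w)
      = ∑ b, ∑ b', ∑ x, ∑ w, cf x * (G x b b' * P x b b' w) := by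
        exact Finset.sum_congr rfl fun b _ => Finset.sum_congr rfl fun b' _ =>
          Finset.sum_comm
    _ = ∑ b, ∑ x, ∑ b', ∑ w, cf x * (G x b b' * P x b b' w) := by
        exact Finset.sum_congr rfl fun b _ => Finset.sum_comm
    _ = ∑ x, ∑ b, ∑ b', ∑ w, cf x * (G x b b' * P x b b' w) := Finset.sum_comm
    _ = ∑ x, cf x * (∑ b, ∑ b', G x b b' * ∑ w, P x b b' w) := by
        refine Finset.sum_congr rfl fun x _ => ?_
        rw [Finset.mul_sum]
        refine Finset.sum_congr rfl fun b _ => ?_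
        rw [Finset.mul_sum]
        refine Finset.sum_congr rfl fun b' _ => ?_
        rw [Finset.mul_sum, Finset.mul_sum]

lemma dot_eq_normSq (d t : ℕ) (f : (Fin t → Fin d) → ℂ) :
    star f ⬝ᵥ f = ((∑ v, Complex.normSq (f v) : ℝ) : ℂ) := by
  rw [dotProduct]
  push_cast
  refine Finset.sum_congr rfl fun v _ => ?_
  simp [Complex.normSq_eq_conj_mul_self]

lemma normSq_pos (d t : ℕ) (f : (Fin t → Fin d) → ℂ) (hf : f ≠ 0) :
    0 < ∑ v, Complex.normSq (f v) := by
  refine Finset.sum_pos' (fun v _ => Complex.normSq_nonneg _) ?_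
  by_contra hc
  push_neg at hc
  apply hf
  funext v
  have h0 : Complex.normSq (f v) ≤ 0 := by
    have := hc v (Finset.mem_univ v)
    by_contra h1
    push_neg at h1
    exact absurd this (not_le.mpr h1)
  exact Complex.normSq_eq_zero.mp (le_antisymm h0 (Complex.normSq_nonneg _))

lemma sum_normSq_eq (d t : ℕ) {X : Type*} [Fintype X]
    (ψ : X → (Fin t → Fin d) → ℂ)
    (hPOVM : ∑ x, outer (ψ x) = (1 : Matrix (Fin t → Fin d) (Fin t → Fin d) ℂ)) :
    ∑ x, ∑ v, Complex.normSq (ψ x v) = (d : ℝ) ^ t := by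
  have h := congrArg (fun A : Matrix (Fin t → Fin d) (Fin t → Fin d) ℂ => ∑ v, A v v) hPOVM
  simp only [Matrix.sum_apply, Matrix.one_apply_eq] at h
  have hL : ∑ v : Fin t → Fin d, ∑ x, (outer (ψ x)) v v
      = ((∑ x, ∑ v, Complex.normSq (ψ x v) : ℝ) : ℂ) := by
    rw [Finset.sum_comm]
    push_cast
    refine Finset.sum_congr rfl fun x _ => Finset.sum_congr rfl fun v _ => ?_
    simp [outer, Complex.star_def, Complex.mul_conj]
  rw [hL] at h
  have hR : (∑ _v : Fin t → Fin d, (1:ℂ)) = ((d : ℂ)) ^ t := by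
    simp [Finset.card_univ]
  rw [hR] at h
  exact_mod_cast h

lemma trace_bound (d t : ℕ) (hd : 1 ≤ d) (ht : 1 ≤ t) {X : Type*} [Fintype X]
    (ψ : X → (Fin t → Fin d) → ℂ) (hne : ∀ x, ψ x ≠ 0)
    (hPOVM : ∑ x, outer (ψ x) = (1 : Matrix (Fin t → Fin d) (Fin t → Fin d) ℂ))
    (j k : Fin t) :
    ∃ r : ℝ, (∑ p : Fin d × Fin d,
        (ptraceAt d t j (ludersChannel ψ (embedAt d t k
          (Matrix.single p.1 p.2 1)))) p.1 p.2) = (r : ℂ) ∧ r ≤ d := by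
  classical
  set N : X → ℝ := fun x => ∑ v, Complex.normSq (ψ x v) with hN
  set M : X → ({a : Fin t // a ≠ k} → Fin d) → ({a : Fin t // a ≠ j} → Fin d) → ℂ :=
    fun x u u' => ∑ b, star (ψ x (mrg d t k b u)) * ψ x (mrg d t j b u') with hM
  have hNpos : ∀ x, 0 < N x := fun x => normSq_pos d t (ψ x) (hne x)
  have step : (∑ p : Fin d × Fin d,
        (ptraceAt d t j (ludersChannel ψ (embedAt d t k
          (Matrix.single p.1 p.2 1)))) p.1 p.2)
      = ∑ x, (((d:ℂ)⁻¹)^(t-1) / ((N x : ℝ) : ℂ)) *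
          (∑ u, ∑ u', M x u u' * star (M x u u')) := by
    calc (∑ p : Fin d × Fin d,
        (ptraceAt d t j (ludersChannel ψ (embedAt d t k
          (Matrix.single p.1 p.2 1)))) p.1 p.2)
        = ∑ b : Fin d, ∑ b' : Fin d, ∑ u' : {a : Fin t // a ≠ j} → Fin d,
            (ludersChannel ψ (embedAt d t k (Matrix.single b b' 1)))
              (mrg d t j b u') (mrg d t j b' u') := by
          rw [Fintype.sum_prod_type]
          exact Finset.sum_congr rfl fun b _ => Finset.sum_congr rfl fun b' _ =>
            ptrace_entry d t j _ b b'
      _ = ∑ b : Fin d, ∑ b' : Fin d, ∑ u' : {a : Fin t // a ≠ j} → Fin d, ∑ x,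
            (((d:ℂ)⁻¹)^(t-1) / ((N x : ℝ) : ℂ)) *
            ((∑ u, star (ψ x (mrg d t k b u)) * ψ x (mrg d t k b' u)) *
             (ψ x (mrg d t j b u') * star (ψ x (mrg d t j b' u')))) := by
          refine Finset.sum_congr rfl fun b _ => Finset.sum_congr rfl fun b' _ =>
            Finset.sum_congr rfl fun u' _ => ?_
          rw [luders_apply]
          refine Finset.sum_congr rfl fun x _ => ?_
          rw [emb_inner, dot_eq_normSq]
          ring
      _ = ∑ x, (((d:ℂ)⁻¹)^(t-1) / ((N x : ℝ) : ℂ)) *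
            (∑ b : Fin d, ∑ b' : Fin d,
              (∑ u, star (ψ x (mrg d t k b u)) * ψ x (mrg d t k b' u)) *
              (∑ u', ψ x (mrg d t j b u') * star (ψ x (mrg d t j b' u')))) := by
          exact pull (fun x => ((d:ℂ)⁻¹)^(t-1) / ((N x : ℝ) : ℂ))
            (fun x b b' => ∑ u, star (ψ x (mrg d t k b u)) * ψ x (mrg d t k b' u))
            (fun x b b' u' => ψ x (mrg d t j b u') * star (ψ x (mrg d t j b' u')))
      _ = ∑ x, (((d:ℂ)⁻¹)^(t-1) / ((N x : ℝ) : ℂ)) *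
            (∑ u, ∑ u', M x u u' * star (M x u u')) := by
          refine Finset.sum_congr rfl fun x _ => ?_
          congr 1
          rw [exchange (fun b u => star (ψ x (mrg d t k b u)))
            (fun b' u => ψ x (mrg d t k b' u))
            (fun b u' => ψ x (mrg d t j b u'))
            (fun b' u' => star (ψ x (mrg d t j b' u')))]
          have hstar : ∀ u u', star (M x u u')
              = ∑ b' : Fin d, ψ x (mrg d t k b' u) * star (ψ x (mrg d t j b' u')) := by
            intro u u'
            rw [hM]
            simp only [star_sum, star_mul', star_star]
            try exact Finset.sum_congr rfl fun b _ => mul_comm _ _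
          refine Finset.sum_congr rfl fun u _ => Finset.sum_congr rfl fun u' _ => ?_
          rw [hstar u u']
  -- now convert to a real number
  set SR : X → ℝ := fun x => ∑ u, ∑ u', Complex.normSq (M x u u') with hSR
  have hMstar : ∀ x, (∑ u, ∑ u', M x u u' * star (M x u u')) = ((SR x : ℝ) : ℂ) := by
    intro x
    rw [hSR]
    push_cast
    refine Finset.sum_congr rfl fun u _ => Finset.sum_congr rfl fun u' _ => ?_
    simp [Complex.star_def, Complex.mul_conj]
  refine ⟨∑ x, ((d:ℝ)⁻¹)^(t-1) * SR x / N x, ?_, ?_⟩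
  · rw [step]
    rw [Complex.ofReal_sum]
    refine Finset.sum_congr rfl fun x _ => ?_
    rw [hMstar x]
    push_cast
    ring
  · -- the bound
    have hSRle : ∀ x, SR x ≤ N x * N x := by
      intro x
      have hCS : ∀ u u', Complex.normSq (M x u u')
          ≤ (∑ b, Complex.normSq (ψ x (mrg d t k b u))) *
            (∑ b, Complex.normSq (ψ x (mrg d t j b u'))) := by
        intro u u'
        have h1 : ‖M x u u'‖ ≤
            ∑ b, ‖ψ x (mrg d t k b u)‖ * ‖ψ x (mrg d t j b u')‖ := by
          refine (norm_sum_le _ _).trans ?_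
          refine Finset.sum_le_sum fun b _ => ?_
          rw [norm_mul, norm_star]
        have h2 : (∑ b, ‖ψ x (mrg d t k b u)‖ * ‖ψ x (mrg d t j b u')‖) ^ 2
            ≤ (∑ b, ‖ψ x (mrg d t k b u)‖ ^ 2) *
              (∑ b, ‖ψ x (mrg d t j b u')‖ ^ 2) :=
          Finset.sum_mul_sq_le_sq_mul_sq _ _ _
        have h3 : ∀ z : ℂ, Complex.normSq z = ‖z‖ ^ 2 := fun z => by
          exact (Complex.sq_norm z).symm
        rw [h3]
        calc ‖M x u u'‖ ^ 2
            ≤ (∑ b, ‖ψ x (mrg d t k b u)‖ * ‖ψ x (mrg d t j b u')‖) ^ 2 :=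
              pow_le_pow_left₀ (norm_nonneg _) h1 2
          _ ≤ _ := by
              refine h2.trans_eq ?_
              congr 1 <;> exact Finset.sum_congr rfl fun b _ => (h3 _).symm
      calc SR x ≤ ∑ u, ∑ u', (∑ b, Complex.normSq (ψ x (mrg d t k b u))) *
            (∑ b, Complex.normSq (ψ x (mrg d t j b u'))) := by
            exact Finset.sum_le_sum fun u _ => Finset.sum_le_sum fun u' _ => hCS u u'
        _ = (∑ u, ∑ b, Complex.normSq (ψ x (mrg d t k b u))) *
            (∑ u', ∑ b, Complex.normSq (ψ x (mrg d t j b u'))) := by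
            rw [← Finset.sum_mul_sum]
        _ = N x * N x := by
            congr 1
            · rw [Finset.sum_comm]
              exact (sum_split_s15 d t k (fun v => Complex.normSq (ψ x v))).symm
            · rw [Finset.sum_comm]
              exact (sum_split_s15 d t j (fun v => Complex.normSq (ψ x v))).symm
    have hterm : ∀ x, ((d:ℝ)⁻¹)^(t-1) * SR x / N x ≤ ((d:ℝ)⁻¹)^(t-1) * N x := by
      intro x
      rw [mul_div_assoc]
      refine mul_le_mul_of_nonneg_left ?_ (by positivity)
      rw [div_le_iff₀ (hNpos x)]
      exact hSRle x
    calc ∑ x, ((d:ℝ)⁻¹)^(t-1) * SR x / N x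
        ≤ ∑ x, ((d:ℝ)⁻¹)^(t-1) * N x := Finset.sum_le_sum fun x _ => hterm x
      _ = ((d:ℝ)⁻¹)^(t-1) * ∑ x, N x := by rw [Finset.mul_sum]
      _ = ((d:ℝ)⁻¹)^(t-1) * (d:ℝ)^t := by rw [sum_normSq_eq d t ψ hPOVM]
      _ = (d:ℝ) := by
          have hd0 : (d:ℝ) ≠ 0 := by positivity
          rw [inv_pow, show t = (t-1)+1 by omega, pow_succ]
          field_simp
          simp


/-- For a rank-one POVM on `(ℂ^d)^{⊗t}` with Lüders channel `𝓗`,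
the induced single-register channels `H̃_{j,k}(M) = PT_j(𝓗(Emb_k(M)))` are unital
and have (real) trace at most `d`; consequently their average
`H̃ = (1/t²) Σ_{j,k} H̃_{j,k}` has trace at most `d`. -/
theorem induced_single_register_channel_unital_trace_le
    (d t : ℕ) (hd : 1 ≤ d) (ht : 1 ≤ t) (X : Type*) [Fintype X]
    (ψ : X → (Fin t → Fin d) → ℂ) (hne : ∀ x, ψ x ≠ 0)
    (hPOVM : ∑ x, outer (ψ x) = (1 : Matrix (Fin t → Fin d) (Fin t → Fin d) ℂ))
    (Htilde : Fin t → Fin t → (Matrix (Fin d) (Fin d) ℂ →ₗ[ℂ] Matrix (Fin d) (Fin d) ℂ))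
    (hHtilde : ∀ (j k : Fin t) (M : Matrix (Fin d) (Fin d) ℂ),
      Htilde j k M = ptraceAt d t j (ludersChannel ψ (embedAt d t k M)))
    (Havg : Matrix (Fin d) (Fin d) ℂ →ₗ[ℂ] Matrix (Fin d) (Fin d) ℂ)
    (hHavg : Havg = (((t : ℂ)) ^ 2)⁻¹ • ∑ j : Fin t, ∑ k : Fin t, Htilde j k) :
    (∀ j k : Fin t,
        Htilde j k 1 = 1 ∧
        (LinearMap.trace ℂ (Matrix (Fin d) (Fin d) ℂ) (Htilde j k)).re ≤ (d : ℝ) ∧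
        (LinearMap.trace ℂ (Matrix (Fin d) (Fin d) ℂ) (Htilde j k)).im = 0) ∧
      (LinearMap.trace ℂ (Matrix (Fin d) (Fin d) ℂ) Havg).re ≤ (d : ℝ) ∧
      (LinearMap.trace ℂ (Matrix (Fin d) (Fin d) ℂ) Havg).im = 0 := by
  have hd0 : (d : ℂ) ≠ 0 := by
    exact_mod_cast Nat.cast_ne_zero.mpr (by omega)
  choose r hr hrd using fun j k => trace_bound d t hd ht ψ hne hPOVM j k
  have htr : ∀ j k, LinearMap.trace ℂ (Matrix (Fin d) (Fin d) ℂ) (Htilde j k)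
      = ((r j k : ℝ) : ℂ) := by
    intro j k
    rw [trace_eq]
    simp only [hHtilde]
    exact hr j k
  constructor
  · intro j k
    refine ⟨?_, ?_, ?_⟩
    · rw [hHtilde, embed_one, _root_.map_smul, luders_one ψ hne hPOVM, ptrace_smul_one]
      have h1 : ((d:ℂ)⁻¹)^(t-1) * (d:ℂ)^(t-1) = 1 := by
        rw [inv_pow, inv_mul_cancel₀ (pow_ne_zero _ hd0)]
      rw [h1, one_smul]
    · rw [htr j k, Complex.ofReal_re]; exact hrd j k
    · rw [htr j k, Complex.ofReal_im]
  · have ht2 : (0:ℝ) < (t:ℝ)^2 := by positivity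
    have havg : LinearMap.trace ℂ (Matrix (Fin d) (Fin d) ℂ) Havg
        = ((((t:ℝ)^2)⁻¹ * ∑ j : Fin t, ∑ k : Fin t, r j k : ℝ) : ℂ) := by
      rw [hHavg, _root_.map_smul, map_sum]
      have : ∀ j : Fin t, LinearMap.trace ℂ (Matrix (Fin d) (Fin d) ℂ) (∑ k, Htilde j k)
          = ∑ k, ((r j k : ℝ) : ℂ) := by
        intro j
        rw [map_sum]
        exact Finset.sum_congr rfl fun k _ => htr j k
      simp_rw [this]
      push_cast
      rw [smul_eq_mul]
    have hble : ((t:ℝ)^2)⁻¹ * ∑ j : Fin t, ∑ k : Fin t, r j k ≤ d := by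
      have hsum : ∑ j : Fin t, ∑ k : Fin t, r j k ≤ (t:ℝ)^2 * d := by
        calc ∑ j : Fin t, ∑ k : Fin t, r j k
            ≤ ∑ _j : Fin t, ∑ _k : Fin t, (d:ℝ) := by
              exact Finset.sum_le_sum fun j _ => Finset.sum_le_sum fun k _ => hrd j k
          _ = (t:ℝ)^2 * d := by
              simp [Finset.sum_const, Finset.card_univ]
              ring
      calc ((t:ℝ)^2)⁻¹ * ∑ j : Fin t, ∑ k : Fin t, r j k
          ≤ ((t:ℝ)^2)⁻¹ * ((t:ℝ)^2 * d) := by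
            exact mul_le_mul_of_nonneg_left hsum (by positivity)
        _ = d := by field_simp
    constructor
    · rw [havg, Complex.ofReal_re]; exact hble
    · rw [havg, Complex.ofReal_im]
end

section
/- Let n ≥ 1, let Θ be a finite type with weights w : Θ → ℝ≥0 satisfying Σ_θ w θ = 1, and for each i ∈ Fin n let X i be a finite type, let p_θ^{(i)} : X i → ℝ≥0 be probability mass functions (Σ_x p_θ^{(i)} x = 1 for each θ, i), and let q^{(i)} : X i → ℝ be probability mass functions with q^{(i)} x > 0 for all x. Define δ_θ^{(i)}(x) = p_θ^{(i)}(x) / q^{(i)}(x) − 1 and φ_i(θ,θ') = Σ_{x ∈ X i} q^{(i)}(x) · δ_θ^{(i)}(x) · δ_{θ'}^{(i)}(x). Then the χ²-divergence of the mixture of products from the product satisfies: Σ_{x ∈ ∏_i X i} ( Σ_θ w θ · ∏_i p_θ^{(i)}(x i) )² / ( ∏_i q^{(i)}(x i) ) − 1 ≤ Σ_{θ, θ'} w θ · w θ' · exp( Σ_{i} φ_i(θ,θ') ) − 1. -/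
/-- **Ingster–Suslina method.** For a finite mixture (weights `w`)
of product distributions `⊗_i p_θ^{(i)}` and a product reference distribution
`⊗_i q^{(i)}` with everywhere-positive `q`, the χ²-divergence satisfies
`χ²(E_θ ⊗_i p_θ^{(i)} ‖ ⊗_i q^{(i)}) ≤ E_{θ,θ'} exp(Σ_i φ_i(θ,θ')) − 1`, where
`φ_i(θ,θ') = Σ_x q^{(i)}(x) δ_θ^{(i)}(x) δ_{θ'}^{(i)}(x)` and
`δ_θ^{(i)}(x) = p_θ^{(i)}(x)/q^{(i)}(x) − 1`. -/
theorem ingster_suslina_chi_sq_bound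
    (n : ℕ) (hn : 1 ≤ n)
    (Θ : Type*) [Fintype Θ]
    (w : Θ → ℝ) (hw0 : ∀ θ, 0 ≤ w θ) (hw1 : ∑ θ, w θ = 1)
    (X : Fin n → Type*) [∀ i, Fintype (X i)]
    (p : Θ → ∀ i : Fin n, X i → ℝ)
    (hp0 : ∀ θ i x, 0 ≤ p θ i x) (hp1 : ∀ θ i, ∑ x, p θ i x = 1)
    (q : ∀ i : Fin n, X i → ℝ)
    (hq0 : ∀ i x, 0 < q i x) (hq1 : ∀ i, ∑ x, q i x = 1) :
    (∑ x : (∀ i, X i), (∑ θ, w θ * ∏ i, p θ i (x i)) ^ 2 / ∏ i, q i (x i)) - 1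
      ≤ (∑ θ, ∑ θ', w θ * w θ' *
          Real.exp (∑ i, ∑ x : X i,
            q i x * (p θ i x / q i x - 1) * (p θ' i x / q i x - 1))) - 1 := by
  set S : Θ → Θ → Fin n → ℝ := fun θ θ' i => ∑ x, p θ i x * p θ' i x / q i x with hS
  have hS0 : ∀ θ θ' i, 0 ≤ S θ θ' i := fun θ θ' i =>
    Finset.sum_nonneg fun x _ =>
      div_nonneg (mul_nonneg (hp0 θ i x) (hp0 θ' i x)) (hq0 i x).le
  -- φ_i(θ,θ') = S θ θ' i - 1
  have hφ : ∀ θ θ' i, (∑ x : X i,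
      q i x * (p θ i x / q i x - 1) * (p θ' i x / q i x - 1)) = S θ θ' i - 1 := by
    intro θ θ' i
    have : ∀ x : X i, q i x * (p θ i x / q i x - 1) * (p θ' i x / q i x - 1)
        = p θ i x * p θ' i x / q i x - p θ i x - p θ' i x + q i x := by
      intro x
      have hq := (hq0 i x).ne'
      field_simp
      ring
    simp only [this]
    simp only [Finset.sum_add_distrib, Finset.sum_sub_distrib, hp1, hq1]
    ring
  -- LHS sum equals ∑_{θ,θ'} w θ w θ' ∏_i S θ θ' i
  have hLHS : (∑ x : (∀ i, X i), (∑ θ, w θ * ∏ i, p θ i (x i)) ^ 2 / ∏ i, q i (x i))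
      = ∑ θ, ∑ θ', w θ * w θ' * ∏ i, S θ θ' i := by
    have h1 : ∀ x : (∀ i, X i), (∑ θ, w θ * ∏ i, p θ i (x i)) ^ 2 / ∏ i, q i (x i)
        = ∑ θ, ∑ θ', w θ * w θ' * ∏ i, (p θ i (x i) * p θ' i (x i) / q i (x i)) := by
      intro x
      have hqx : ∀ i : Fin n, q i (x i) ≠ 0 := fun i => (hq0 i (x i)).ne'
      rw [sq, Finset.sum_mul_sum, Finset.sum_div]
      refine Finset.sum_congr rfl fun θ _ => ?_
      rw [Finset.sum_div]
      refine Finset.sum_congr rfl fun θ' _ => ?_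
      rw [Finset.prod_div_distrib, Finset.prod_mul_distrib]
      field_simp
    simp only [h1]
    rw [Finset.sum_comm]
    refine Finset.sum_congr rfl fun θ _ => ?_
    rw [Finset.sum_comm]
    refine Finset.sum_congr rfl fun θ' _ => ?_
    rw [← Finset.mul_sum]
    congr 1
    exact (Fintype.prod_sum fun i x => p θ i x * p θ' i x / q i x).symm
  rw [hLHS]
  gcongr with θ _ θ' _
  · exact mul_nonneg (hw0 θ) (hw0 θ')
  · -- ∏ S ≤ exp (∑ φ)
    calc ∏ i, S θ θ' i ≤ ∏ i, Real.exp (S θ θ' i - 1) := by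
          refine Finset.prod_le_prod (fun i _ => hS0 θ θ' i) fun i _ => ?_
          have := Real.add_one_le_exp (S θ θ' i - 1)
          linarith
      _ = Real.exp (∑ i, (S θ θ' i - 1)) := (Real.exp_sum _ _).symm
      _ = Real.exp (∑ i, ∑ x : X i,
            q i x * (p θ i x / q i x - 1) * (p θ' i x / q i x - 1)) := by
          congr 1
          exact Finset.sum_congr rfl fun i _ => (hφ θ θ' i).symm
end

section
/- Let d ≥ 2, t ≥ 1, n ≥ 1. Let Θ be a finite type with weights w : Θ → ℝ≥0, Σ_θ w θ = 1, and for each θ let ρ_θ = ρ_mm + Δ̄_θ be a quantum state on ℂ^d, where Δ̄_θ is Hermitian with trace 0 and ρ_θ is PSD. For each i ∈ Fin n let X i be a finite type and (ψ_x^{(i)})_{x ∈ X i} a family of nonzero vectors in ((Fin t → Fin d) → ℂ) with Σ_x |ψ_x^{(i)}⟩⟨ψ_x^{(i)}| = 1, inducing outcome distributions p_θ^{(i)}(x) = Re ⟪ψ_x^{(i)}, ρ_θ^{⊗t} ψ_x^{(i)}⟫ and q^{(i)}(x) = Re ⟪ψ_x^{(i)}, ρ_mm^{⊗t} ψ_x^{(i)}⟫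 (which is positive for all x), and Lüders channel 𝓗_i(A) = Σ_x ⟪ψ_x^{(i)}, A ψ_x^{(i)}⟫ · |ψ_x^{(i)}⟩⟨ψ_x^{(i)}| / ⟪ψ_x^{(i)}, ψ_x^{(i)}⟫. Let 𝓗 = (1/n) Σ_i 𝓗_i and Δ_θ^{(t)} = ρ_θ^{⊗t} − ρ_mm^{⊗t}. Then the χ²-divergence of the mixture of products from the product satisfies: Σ_{x ∈ ∏_i X i} ( Σ_θ w θ · ∏_i p_θ^{(i)}(x i) )² / ( ∏_i q^{(i)}(x i) ) − 1 ≤ Σ_{θ,θ'} w θ · w θ' · exp( n · d^t · Re tr( Δ_θ^{(t)} · 𝓗(Δ_{θ'}^{(t)}) ) ) − 1. -/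
open Matrix
open scoped ComplexOrder

/-- The `t`-fold matrix tensor power `M^{⊗t}`, indexed by `Fin t → Fin d`. -/
noncomputable def tensorPowMatrix (d t : ℕ) (M : Matrix (Fin d) (Fin d) ℂ) :
    Matrix (Fin t → Fin d) (Fin t → Fin d) ℂ :=
  Matrix.of fun v w => ∏ a, M (v a) (w a)

/-- The maximally mixed state `ρ_mm = (1/d)·1`. -/
noncomputable def rhoMM (d : ℕ) : Matrix (Fin d) (Fin d) ℂ :=
  ((d : ℂ))⁻¹ • (1 : Matrix (Fin d) (Fin d) ℂ)

/-- The Lüders channel of the rank-one POVM `{|ψ_x⟩⟨ψ_x|}_x` (as a plain function). -/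
noncomputable def ludersFun {I : Type*} [Fintype I] {X : Type*} [Fintype X]
    (ψ : X → I → ℂ) (A : Matrix I I ℂ) : Matrix I I ℂ :=
  ∑ x, ((star (ψ x) ⬝ᵥ A.mulVec (ψ x)) / (star (ψ x) ⬝ᵥ ψ x)) • outer (ψ x)

lemma trace_mul_outer {I : Type*} [Fintype I] (A : Matrix I I ℂ) (ψ : I → ℂ) :
    (A * outer ψ).trace = star ψ ⬝ᵥ A.mulVec ψ := by
  simp only [Matrix.trace, Matrix.diag, Matrix.mul_apply, outer, Matrix.of_apply,
    dotProduct, Matrix.mulVec, Pi.star_apply, Finset.mul_sum]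
  exact Finset.sum_congr rfl fun i _ => Finset.sum_congr rfl fun j _ => by ring

lemma quad_real {I : Type*} [Fintype I] (A : Matrix I I ℂ) (hA : A.IsHermitian) (v : I → ℂ) :
    star v ⬝ᵥ A.mulVec v = (((star v ⬝ᵥ A.mulVec v).re : ℝ) : ℂ) := by
  have h1 : star (star v ⬝ᵥ A.mulVec v) = star v ⬝ᵥ A.mulVec v := by
    calc star (star v ⬝ᵥ A.mulVec v) = star (A.mulVec v) ⬝ᵥ v := by
          simp [dotProduct, Matrix.mulVec, mul_comm]
      _ = (star v ᵥ* Aᴴ) ⬝ᵥ v := by rw [Matrix.star_mulVec]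
      _ = star v ⬝ᵥ Aᴴ.mulVec v := by rw [Matrix.dotProduct_mulVec]
      _ = star v ⬝ᵥ A.mulVec v := by rw [hA.eq]
  exact (Complex.conj_eq_iff_re.mp h1).symm

lemma tensorPow_conjTranspose (d t : ℕ) (M : Matrix (Fin d) (Fin d) ℂ) :
    (tensorPowMatrix d t M)ᴴ = tensorPowMatrix d t Mᴴ := by
  ext v w
  simp [tensorPowMatrix, Matrix.conjTranspose_apply, star_prod]

lemma tensorPow_mul (d t : ℕ) (A B : Matrix (Fin d) (Fin d) ℂ) :
    tensorPowMatrix d t (A * B) = tensorPowMatrix d t A * tensorPowMatrix d t B := by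
  ext v w
  simp only [tensorPowMatrix, Matrix.of_apply, Matrix.mul_apply]
  rw [Finset.prod_univ_sum]
  simp [Finset.prod_mul_distrib]

lemma tensorPow_posSemidef (d t : ℕ) (M : Matrix (Fin d) (Fin d) ℂ) (hM : M.PosSemidef) :
    (tensorPowMatrix d t M).PosSemidef := by
  open scoped MatrixOrder in
  have h : M = (CFC.sqrt M)ᴴ * CFC.sqrt M := by
    have h0 : 0 ≤ M := Matrix.nonneg_iff_posSemidef.mpr hM
    rw [show (CFC.sqrt M)ᴴ = CFC.sqrt M from (IsSelfAdjoint.of_nonneg (CFC.sqrt_nonneg M)).star_eq,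
      CFC.sqrt_mul_sqrt_self M h0]
  rw [h, tensorPow_mul, ← tensorPow_conjTranspose]
  exact Matrix.posSemidef_conjTranspose_mul_self _

lemma tensorPow_trace (d t : ℕ) (M : Matrix (Fin d) (Fin d) ℂ) :
    (tensorPowMatrix d t M).trace = M.trace ^ t := by
  simp only [Matrix.trace, Matrix.diag, tensorPowMatrix, Matrix.of_apply]
  have h := Finset.prod_univ_sum (fun _ : Fin t => (Finset.univ : Finset (Fin d)))
    (fun _ k => M k k)
  rw [Fintype.piFinset_univ] at h
  rw [← h]
  simp [Finset.prod_const]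

lemma tensorPow_rhoMM (d t : ℕ) :
    tensorPowMatrix d t (rhoMM d) = (((d : ℂ)) ^ t)⁻¹ • (1 : Matrix (Fin t → Fin d) (Fin t → Fin d) ℂ) := by
  ext v w
  simp only [tensorPowMatrix, rhoMM, Matrix.of_apply, Matrix.smul_apply, Matrix.one_apply,
    smul_eq_mul]
  rw [Finset.prod_mul_distrib, Finset.prod_const, Finset.prod_boole]
  simp only [Finset.mem_univ, forall_true_left, Finset.card_univ, Fintype.card_fin]
  rw [inv_pow]
  congr 1
  exact if_congr funext_iff.symm rfl rfl

lemma self_dot_real {I : Type*} [Fintype I] [DecidableEq I] (v : I → ℂ) :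
    star v ⬝ᵥ v = (((star v ⬝ᵥ v).re : ℝ) : ℂ) := by
  have := quad_real (1 : Matrix I I ℂ) Matrix.isHermitian_one v
  simpa [Matrix.one_mulVec] using this

lemma chi_one_step {X : Type*} [Fintype X] (N : ℝ) (hN : 0 < N)
    (nn dA dB : X → ℝ) (hpos : ∀ x, 0 < nn x)
    (h1 : ∑ x, nn x = N) (h2 : ∑ x, dA x = 0) (h3 : ∑ x, dB x = 0) :
    ∑ x, ((N⁻¹ * nn x + dA x) * (N⁻¹ * nn x + dB x) / (N⁻¹ * nn x))
      = 1 + N * ∑ x, dA x * dB x / nn x := by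
  have step : ∀ x : X, (N⁻¹ * nn x + dA x) * (N⁻¹ * nn x + dB x) / (N⁻¹ * nn x)
      = N⁻¹ * nn x + dA x + dB x + N * (dA x * dB x / nn x) := by
    intro x
    have hx := (hpos x).ne'
    field_simp
    ring
  rw [Finset.sum_congr rfl fun x _ => step x]
  rw [Finset.sum_add_distrib, Finset.sum_add_distrib, Finset.sum_add_distrib,
    ← Finset.mul_sum, ← Finset.mul_sum, h1, h2, h3]
  rw [inv_mul_cancel₀ hN.ne']
  ring

lemma povm_sum_eq {I X : Type*} [Fintype I] [DecidableEq I] [Fintype X]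
    (hI : 0 < Fintype.card I)
    (ψ : X → I → ℂ) (hPOVM : ∑ x, outer (ψ x) = 1)
    (Δ Δ' : Matrix I I ℂ) (hΔ : Δ.IsHermitian) (hΔ' : Δ'.IsHermitian)
    (hΔtr : Δ.trace = 0) (hΔ'tr : Δ'.trace = 0)
    (hpos : ∀ x, 0 < (star (ψ x) ⬝ᵥ ψ x).re) :
    ∑ x, (((Fintype.card I : ℝ)⁻¹ * (star (ψ x) ⬝ᵥ ψ x).re + (star (ψ x) ⬝ᵥ Δ.mulVec (ψ x)).re)
        * ((Fintype.card I : ℝ)⁻¹ * (star (ψ x) ⬝ᵥ ψ x).re + (star (ψ x) ⬝ᵥ Δ'.mulVec (ψ x)).re)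
        / ((Fintype.card I : ℝ)⁻¹ * (star (ψ x) ⬝ᵥ ψ x).re))
    = 1 + (Fintype.card I : ℝ) * ((Δ * ludersFun ψ Δ').trace).re := by
  have hN : (0:ℝ) < (Fintype.card I : ℝ) := by exact_mod_cast hI
  have key : ∀ A : Matrix I I ℂ, ∑ x, star (ψ x) ⬝ᵥ A.mulVec (ψ x) = A.trace := by
    intro A
    calc ∑ x, star (ψ x) ⬝ᵥ A.mulVec (ψ x) = ∑ x, (A * outer (ψ x)).trace := by
          simp [trace_mul_outer]
      _ = (A * ∑ x, outer (ψ x)).trace := by rw [Matrix.mul_sum, Matrix.trace_sum]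
      _ = A.trace := by rw [hPOVM, Matrix.mul_one]
  have hsum_n : ∑ x, (star (ψ x) ⬝ᵥ ψ x).re = (Fintype.card I : ℝ) := by
    have h := congrArg Complex.re (key 1)
    simpa [Matrix.one_mulVec, Matrix.trace_one, Complex.re_sum] using h
  have hsum_dA : ∑ x, (star (ψ x) ⬝ᵥ Δ.mulVec (ψ x)).re = 0 := by
    have h := congrArg Complex.re (key Δ)
    simpa [hΔtr, Complex.re_sum] using h
  have hsum_dB : ∑ x, (star (ψ x) ⬝ᵥ Δ'.mulVec (ψ x)).re = 0 := by
    have h := congrArg Complex.re (key Δ')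
    simpa [hΔ'tr, Complex.re_sum] using h
  have htr : ((Δ * ludersFun ψ Δ').trace).re
      = ∑ x, (star (ψ x) ⬝ᵥ Δ.mulVec (ψ x)).re * (star (ψ x) ⬝ᵥ Δ'.mulVec (ψ x)).re
          / (star (ψ x) ⬝ᵥ ψ x).re := by
    have h1 : (Δ * ludersFun ψ Δ').trace
        = ∑ x, (star (ψ x) ⬝ᵥ Δ'.mulVec (ψ x)) / (star (ψ x) ⬝ᵥ ψ x)
            * (star (ψ x) ⬝ᵥ Δ.mulVec (ψ x)) := by
      simp only [ludersFun, Matrix.mul_sum, Matrix.mul_smul, Matrix.trace_sum,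
        Matrix.trace_smul, smul_eq_mul, trace_mul_outer]
    rw [h1, Complex.re_sum]
    refine Finset.sum_congr rfl fun x _ => ?_
    rw [quad_real Δ hΔ (ψ x), quad_real Δ' hΔ' (ψ x), self_dot_real (ψ x)]
    rw [← Complex.ofReal_div, ← Complex.ofReal_mul, Complex.ofReal_re]
    simp only [Complex.ofReal_re]
    ring
  rw [htr]
  exact chi_one_step (Fintype.card I : ℝ) hN _ _ _ hpos hsum_n hsum_dA hsum_dB

lemma combine {n : ℕ} {Θ : Type*} [Fintype Θ] (X : Fin n → Type*) [∀ i, Fintype (X i)]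
    (w : Θ → ℝ) (hw0 : ∀ θ, 0 ≤ w θ)
    (P : Θ → ∀ i, X i → ℝ) (Q : ∀ i, X i → ℝ) (E : Θ → Θ → ℝ)
    (a : Θ → Θ → Fin n → ℝ)
    (hQ : ∀ i y, 0 < Q i y) (hP : ∀ θ i y, 0 ≤ P θ i y)
    (hS : ∀ θ θ' i, ∑ y, P θ i y * P θ' i y / Q i y = 1 + a θ θ' i)
    (hE : ∀ θ θ', E θ θ' = ∑ i, a θ θ' i) :
    ∑ x : (∀ i, X i), (∑ θ, w θ * ∏ i, P θ i (x i)) ^ 2 / ∏ i, Q i (x i)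
      ≤ ∑ θ, ∑ θ', w θ * w θ' * Real.exp (E θ θ') := by
  have piswap : ∀ g : (∀ i, X i → ℝ), ∑ x : (∀ i, X i), ∏ i, g i (x i) = ∏ i, ∑ y, g i y := by
    intro g
    rw [Finset.prod_univ_sum, Fintype.piFinset_univ]
  have lhs_eq : ∑ x : (∀ i, X i), (∑ θ, w θ * ∏ i, P θ i (x i)) ^ 2 / ∏ i, Q i (x i)
      = ∑ θ, ∑ θ', (w θ * w θ') * ∏ i, ∑ y, (P θ i y * P θ' i y / Q i y) := by
    have hx : ∀ x : (∀ i, X i), (∑ θ, w θ * ∏ i, P θ i (x i)) ^ 2 / ∏ i, Q i (x i)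
        = ∑ θ, ∑ θ', (w θ * w θ') * ∏ i, (P θ i (x i) * P θ' i (x i) / Q i (x i)) := by
      intro x
      rw [sq, Finset.sum_mul_sum, Finset.sum_div]
      refine Finset.sum_congr rfl fun θ _ => ?_
      rw [Finset.sum_div]
      refine Finset.sum_congr rfl fun θ' _ => ?_
      rw [Finset.prod_div_distrib, Finset.prod_mul_distrib]
      ring
    rw [Finset.sum_congr rfl fun x _ => hx x, Finset.sum_comm]
    refine Finset.sum_congr rfl fun θ _ => ?_
    rw [Finset.sum_comm]
    refine Finset.sum_congr rfl fun θ' _ => ?_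
    rw [← Finset.mul_sum]
    congr 1
    exact piswap (fun i y => P θ i y * P θ' i y / Q i y)
  rw [lhs_eq]
  refine Finset.sum_le_sum fun θ _ => Finset.sum_le_sum fun θ' _ => ?_
  refine mul_le_mul_of_nonneg_left ?_ (mul_nonneg (hw0 θ) (hw0 θ'))
  have hSnn : ∀ i : Fin n, 0 ≤ ∑ y, P θ i y * P θ' i y / Q i y :=
    fun i => Finset.sum_nonneg fun y _ =>
      div_nonneg (mul_nonneg (hP θ i y) (hP θ' i y)) (hQ i y).le
  calc ∏ i, ∑ y, P θ i y * P θ' i y / Q i y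
      ≤ ∏ i, Real.exp (a θ θ' i) := by
        refine Finset.prod_le_prod (fun i _ => hSnn i) fun i _ => ?_
        rw [hS θ θ' i]
        linarith [Real.add_one_le_exp (a θ θ' i)]
    _ = Real.exp (E θ θ') := by rw [hE θ θ', Real.exp_sum]

/-- For `t`-copy rank-one POVMs `{|ψ_x^{(i)}⟩⟨ψ_x^{(i)}|}` with
outcome distributions `p_θ^{(i)}(x) = Re⟪ψ_x^{(i)}, ρ_θ^{⊗t} ψ_x^{(i)}⟫` and
`q^{(i)}(x) = Re⟪ψ_x^{(i)}, ρ_mm^{⊗t} ψ_x^{(i)}⟫`, average Lüders channel `𝓗`,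
and perturbations `Δ_θ^{(t)} = ρ_θ^{⊗t} − ρ_mm^{⊗t}`, the χ²-divergence of the
mixture of products from the product is at most
`Σ_{θ,θ'} w_θ w_{θ'} exp(n d^t Re tr(Δ_θ^{(t)} 𝓗(Δ_{θ'}^{(t)}))) − 1`. -/
theorem chi_sq_bound_via_luders_channel
    (d t n : ℕ) (hd : 2 ≤ d) (ht : 1 ≤ t) (hn : 1 ≤ n)
    (Θ : Type*) [Fintype Θ]
    (w : Θ → ℝ) (hw0 : ∀ θ, 0 ≤ w θ) (hw1 : ∑ θ, w θ = 1)
    (Δbar : Θ → Matrix (Fin d) (Fin d) ℂ)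
    (hherm : ∀ θ, (Δbar θ).IsHermitian) (htr0 : ∀ θ, (Δbar θ).trace = 0)
    (hstate : ∀ θ, (rhoMM d + Δbar θ).PosSemidef)
    (X : Fin n → Type*) [∀ i, Fintype (X i)]
    (ψ : ∀ i : Fin n, X i → ((Fin t → Fin d) → ℂ))
    (hne : ∀ i x, ψ i x ≠ 0)
    (hPOVM : ∀ i : Fin n,
      ∑ x, outer (ψ i x) = (1 : Matrix (Fin t → Fin d) (Fin t → Fin d) ℂ))
    (hqpos : ∀ (i : Fin n) (x : X i),
      0 < (star (ψ i x) ⬝ᵥ (tensorPowMatrix d t (rhoMM d)).mulVec (ψ i x)).re) :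
    (∑ x : (∀ i, X i),
        (∑ θ, w θ * ∏ i,
            (star (ψ i (x i)) ⬝ᵥ
              (tensorPowMatrix d t (rhoMM d + Δbar θ)).mulVec (ψ i (x i))).re) ^ 2 /
          ∏ i, (star (ψ i (x i)) ⬝ᵥ
              (tensorPowMatrix d t (rhoMM d)).mulVec (ψ i (x i))).re) - 1
      ≤ (∑ θ, ∑ θ', w θ * w θ' *
          Real.exp ((n : ℝ) * (d : ℝ) ^ t *
            (((tensorPowMatrix d t (rhoMM d + Δbar θ) - tensorPowMatrix d t (rhoMM d)) *
                ((n : ℂ)⁻¹ • ∑ i : Fin n, ludersFun (ψ i)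
                  (tensorPowMatrix d t (rhoMM d + Δbar θ') -
                    tensorPowMatrix d t (rhoMM d)))).trace).re)) - 1 := by
  classical
  have hd0 : (d : ℂ) ≠ 0 := Nat.cast_ne_zero.mpr (by omega)
  have hn0 : (n : ℝ) ≠ 0 := Nat.cast_ne_zero.mpr (by omega)
  have hcard : Fintype.card (Fin t → Fin d) = d ^ t := by
    simp [Fintype.card_fun]
  have hcardpos : 0 < Fintype.card (Fin t → Fin d) := by
    rw [hcard]; exact pow_pos (by omega) t
  set T0 := tensorPowMatrix d t (rhoMM d) with hT0def
  have hrhoH : (rhoMM d).IsHermitian := by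
    unfold Matrix.IsHermitian rhoMM
    rw [Matrix.conjTranspose_smul, Matrix.conjTranspose_one]
    norm_num
  have hTherm : ∀ θ, (tensorPowMatrix d t (rhoMM d + Δbar θ)).IsHermitian := fun θ => by
    unfold Matrix.IsHermitian
    rw [tensorPow_conjTranspose, (hstate θ).1.eq]
  have hT0herm : T0.IsHermitian := by
    unfold Matrix.IsHermitian
    rw [hT0def, tensorPow_conjTranspose, hrhoH.eq]
  have hDherm : ∀ θ, (tensorPowMatrix d t (rhoMM d + Δbar θ) - T0).IsHermitian :=
    fun θ => (hTherm θ).sub hT0herm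
  have htrrho : (rhoMM d).trace = 1 := by
    rw [rhoMM, Matrix.trace_smul, Matrix.trace_one]
    simp [inv_mul_cancel₀ hd0]
  have htrT : ∀ θ, (tensorPowMatrix d t (rhoMM d + Δbar θ)).trace = 1 := fun θ => by
    rw [tensorPow_trace, Matrix.trace_add, htrrho, htr0 θ, add_zero, one_pow]
  have htrT0 : T0.trace = 1 := by rw [hT0def, tensorPow_trace, htrrho, one_pow]
  have hDtr : ∀ θ, (tensorPowMatrix d t (rhoMM d + Δbar θ) - T0).trace = 0 := fun θ => by
    rw [Matrix.trace_sub, htrT θ, htrT0, sub_self]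
  have hTpsd : ∀ θ, (tensorPowMatrix d t (rhoMM d + Δbar θ)).PosSemidef :=
    fun θ => tensorPow_posSemidef d t _ (hstate θ)
  have hP : ∀ θ (i : Fin n) (x : X i),
      0 ≤ (star (ψ i x) ⬝ᵥ (tensorPowMatrix d t (rhoMM d + Δbar θ)).mulVec (ψ i x)).re :=
    fun θ i x => (Complex.nonneg_iff.mp ((hTpsd θ).dotProduct_mulVec_nonneg (ψ i x))).1
  have hq_eq : ∀ (i : Fin n) (x : X i), (star (ψ i x) ⬝ᵥ T0.mulVec (ψ i x)).re
      = (((d:ℝ)^t)⁻¹) * (star (ψ i x) ⬝ᵥ ψ i x).re := by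
    intro i x
    rw [hT0def, tensorPow_rhoMM, Matrix.smul_mulVec, Matrix.one_mulVec,
      dotProduct_smul, smul_eq_mul]
    have hcast : ((d:ℂ)^t)⁻¹ = ((((d:ℝ)^t)⁻¹ : ℝ) : ℂ) := by push_cast; ring
    rw [hcast, Complex.re_ofReal_mul]
  have hnpos : ∀ (i : Fin n) (x : X i), 0 < (star (ψ i x) ⬝ᵥ ψ i x).re := by
    intro i x
    have h := hqpos i x
    rw [hq_eq i x] at h
    have hc : (0:ℝ) < ((d:ℝ)^t)⁻¹ := by positivity
    rcases mul_pos_iff.mp h with ⟨_, h2⟩ | ⟨h1, _⟩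
    · exact h2
    · exact absurd hc (not_lt.mpr h1.le)
  have hp_eq : ∀ θ (i : Fin n) (x : X i),
      (star (ψ i x) ⬝ᵥ (tensorPowMatrix d t (rhoMM d + Δbar θ)).mulVec (ψ i x)).re
      = ((d:ℝ)^t)⁻¹ * (star (ψ i x) ⬝ᵥ ψ i x).re
        + (star (ψ i x) ⬝ᵥ (tensorPowMatrix d t (rhoMM d + Δbar θ) - T0).mulVec (ψ i x)).re := by
    intro θ i x
    rw [← hq_eq i x, ← Complex.add_re]
    congr 1
    rw [← dotProduct_add, ← Matrix.add_mulVec,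
      show T0 + (tensorPowMatrix d t (rhoMM d + Δbar θ) - T0)
          = tensorPowMatrix d t (rhoMM d + Δbar θ) by abel]
  have hS : ∀ θ θ' (i : Fin n),
      ∑ y : X i, ((star (ψ i y) ⬝ᵥ (tensorPowMatrix d t (rhoMM d + Δbar θ)).mulVec (ψ i y)).re
        * (star (ψ i y) ⬝ᵥ (tensorPowMatrix d t (rhoMM d + Δbar θ')).mulVec (ψ i y)).re
        / (star (ψ i y) ⬝ᵥ T0.mulVec (ψ i y)).re)
      = 1 + (d:ℝ)^t * (((tensorPowMatrix d t (rhoMM d + Δbar θ) - T0)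
          * ludersFun (ψ i) (tensorPowMatrix d t (rhoMM d + Δbar θ') - T0)).trace).re := by
    intro θ θ' i
    have h := povm_sum_eq hcardpos (ψ i) (hPOVM i) _ _ (hDherm θ) (hDherm θ')
      (hDtr θ) (hDtr θ') (fun x => hnpos i x)
    rw [hcard] at h
    push_cast at h
    calc ∑ y : X i, ((star (ψ i y) ⬝ᵥ (tensorPowMatrix d t (rhoMM d + Δbar θ)).mulVec (ψ i y)).re
          * (star (ψ i y) ⬝ᵥ (tensorPowMatrix d t (rhoMM d + Δbar θ')).mulVec (ψ i y)).re
          / (star (ψ i y) ⬝ᵥ T0.mulVec (ψ i y)).re)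
        = ∑ y : X i, (((d:ℝ)^t)⁻¹ * (star (ψ i y) ⬝ᵥ ψ i y).re
            + (star (ψ i y) ⬝ᵥ (tensorPowMatrix d t (rhoMM d + Δbar θ) - T0).mulVec (ψ i y)).re)
          * (((d:ℝ)^t)⁻¹ * (star (ψ i y) ⬝ᵥ ψ i y).re
            + (star (ψ i y) ⬝ᵥ (tensorPowMatrix d t (rhoMM d + Δbar θ') - T0).mulVec (ψ i y)).re)
          / (((d:ℝ)^t)⁻¹ * (star (ψ i y) ⬝ᵥ ψ i y).re) := by
          refine Finset.sum_congr rfl fun y _ => ?_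
          rw [hp_eq θ i y, hp_eq θ' i y, hq_eq i y]
      _ = 1 + (d:ℝ)^t * (((tensorPowMatrix d t (rhoMM d + Δbar θ) - T0)
          * ludersFun (ψ i) (tensorPowMatrix d t (rhoMM d + Δbar θ') - T0)).trace).re := h
  have hE : ∀ θ θ', (n : ℝ) * (d : ℝ) ^ t *
      (((tensorPowMatrix d t (rhoMM d + Δbar θ) - T0) *
          ((n : ℂ)⁻¹ • ∑ i : Fin n, ludersFun (ψ i)
            (tensorPowMatrix d t (rhoMM d + Δbar θ') - T0))).trace).re
      = ∑ i : Fin n, (d:ℝ)^t * (((tensorPowMatrix d t (rhoMM d + Δbar θ) - T0)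
          * ludersFun (ψ i) (tensorPowMatrix d t (rhoMM d + Δbar θ') - T0)).trace).re := by
    intro θ θ'
    have h1 : ((tensorPowMatrix d t (rhoMM d + Δbar θ) - T0) *
        ((n : ℂ)⁻¹ • ∑ i : Fin n, ludersFun (ψ i)
          (tensorPowMatrix d t (rhoMM d + Δbar θ') - T0))).trace
        = (((n:ℝ)⁻¹ : ℝ) : ℂ) * ∑ i : Fin n, ((tensorPowMatrix d t (rhoMM d + Δbar θ) - T0)
            * ludersFun (ψ i) (tensorPowMatrix d t (rhoMM d + Δbar θ') - T0)).trace := by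
      rw [Matrix.mul_smul, Matrix.trace_smul, Matrix.mul_sum, Matrix.trace_sum, smul_eq_mul]
      push_cast
      ring
    rw [h1, Complex.re_ofReal_mul, Complex.re_sum, ← Finset.mul_sum]
    field_simp
  have main := combine X w hw0
    (fun θ i y => (star (ψ i y) ⬝ᵥ (tensorPowMatrix d t (rhoMM d + Δbar θ)).mulVec (ψ i y)).re)
    (fun i y => (star (ψ i y) ⬝ᵥ T0.mulVec (ψ i y)).re)
    (fun θ θ' => (n : ℝ) * (d : ℝ) ^ t *
      (((tensorPowMatrix d t (rhoMM d + Δbar θ) - T0) *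
          ((n : ℂ)⁻¹ • ∑ i : Fin n, ludersFun (ψ i)
            (tensorPowMatrix d t (rhoMM d + Δbar θ') - T0))).trace).re)
    (fun θ θ' i => (d:ℝ)^t * (((tensorPowMatrix d t (rhoMM d + Δbar θ) - T0)
        * ludersFun (ψ i) (tensorPowMatrix d t (rhoMM d + Δbar θ') - T0)).trace).re)
    (fun i y => hqpos i y) (fun θ i y => hP θ i y) hS hE
  exact sub_le_sub_right main 1
end
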